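/- arXiv:1911.00970 — 13 statements merged into one kernel-verified Lean document; each statement's English description precedes it below -/
import Mathlib

section
/- Let p be an odd prime, q = p^c a power of p, and let m, n be integers with 0 < m < p and m < n ≤ (q + m)/2. Then there exist a field F of characteristic p and an algebra L of type n over F, with a choice of generators, whose sequence (β_i)_{i>n} satisfies the identity (1 − X^q) · Σ_{i>n} β_i X^i = (1 − X^q) · X^{q+m+1−n} (X − 1)^{n−m−1} − X^{q+m+1−n} (X − 1)^{n−1} in the formal power series ring F[[X]]. -/
/-- A witness for an algebra of type `n` over a field of characteristic `p`,
together with a choice of generators, whose sequence `β` has generating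
function `Σ_{i>n} β_i X^i` satisfying the prescribed rational identity
`(1 − X^q)·Σ_{i>n} β_i X^i
   = (1 − X^q)·X^{q+m+1−n}(X−1)^{n−m−1} − X^{q+m+1−n}(X−1)^{n−1}`
in `F⟦X⟧`. -/
structure GenFunTypeNWitness (p n q m : ℕ) : Type 1 where
  F : Type
  [fieldF : Field F]
  [charF : CharP F p]
  L : Type
  [lieRingL : LieRing L]
  [lieAlgebraL : LieAlgebra F L]
  Lc : ℕ → Submodule F L
  internal : DirectSum.IsInternal Lc
  zero_bot : Lc 0 = ⊥
  grade : ∀ i j : ℕ, ∀ x ∈ Lc i, ∀ y ∈ Lc j, ⁅x, y⁆ ∈ Lc (i + j)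
  dim_one : Module.finrank F (Lc 1) = 1
  mid_bot : ∀ i : ℕ, 1 < i → i < n → Lc i = ⊥
  dim_n : ∀ i : ℕ, n ≤ i → Module.finrank F (Lc i) = 1
  gen : ∀ i : ℕ, n ≤ i →
    Lc (i + 1) = Submodule.span F {w : L | ∃ x ∈ Lc i, ∃ u ∈ Lc 1, w = ⁅x, u⁆}
  z : L
  z_mem : z ∈ Lc 1
  z_ne : z ≠ 0
  e : ℕ → L
  e_mem : e n ∈ Lc n
  e_ne : e n ≠ 0
  e_rec : ∀ i : ℕ, n ≤ i → e (i + 1) = ⁅e i, z⁆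
  β : ℕ → F
  bracket_eq : ∀ i : ℕ, n < i → ⁅e i, e n⁆ = β i • e (i + n)
  gen_fun :
    (1 - PowerSeries.X ^ q) * PowerSeries.mk (fun i => if n < i then β i else 0) =
      (1 - PowerSeries.X ^ q) * PowerSeries.X ^ (q + m + 1 - n) *
          (PowerSeries.X - 1) ^ (n - m - 1) -
        PowerSeries.X ^ (q + m + 1 - n) * (PowerSeries.X - 1) ^ (n - 1)

/-!
The algebra is spanned by `z` in degree `1` and `e_i`, `i ≥ n`, with `⁅e_i, z⁆ = e_{i+1}` and
`⁅e_i, e_j⁆ = C i j • e_{i+j}`. This is a Lie algebra as soon as `C` is alternating, `ad z` is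
a derivation (`C i j = C i (j+1) + C (i+1) j`) and the Jacobi identity holds among the `e_i`.

Over `𝔽_p` take `C i j = T i j - T j i` with `T i j = (-1)^(i+1) * choose ((j-m-1) mod q) (q-i)`
for `i ≤ q` and `T i j = 0` for `i > q`. Pascal's rule and `choose (q-1) d ≡ (-1)^d` make `ad z`
a derivation. Since `C i j = 0` whenever `i + j ≤ q + m`, every product `C i j * T (i+j) k`
vanishes, and the Jacobi identity reduces to the symmetry `T j k * T i (j+k) = T i k * T j (i+k)`,
which is trinomial revision. Finally `Σ T i n X^i = X^(q+m+1-n) (X-1)^(n-m-1)`, while `i ↦ T n i`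
is `q`-periodic with `(1 - X^q) Σ T n i X^i = X^(q+m+1-n) (X-1)^(n-1)` by
`choose (q-1-A) B ≡ (-1)^B choose (A+B) A`.
-/

open PowerSeries

theorem Finsupp.isInternal_supported_preimage {α ι R : Type*} [Ring R] [DecidableEq ι]
    (f : α → ι) : DirectSum.IsInternal fun i => Finsupp.supported R R (f ⁻¹' {i}) := by
  apply DirectSum.isInternal_submodule_of_iSupIndep_of_iSup_eq_top
  · intro i
    refine (Finsupp.disjoint_supported_supported (t := {a | f a ≠ i}) ?_).mono_right ?_
    · exact Set.disjoint_left.mpr fun a ha hne => hne ha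
    · exact iSup₂_le fun j hj => Finsupp.supported_mono fun a (ha : f a = j) => by
        simpa [ha] using hj
  · rw [← Finsupp.supported_iUnion, ← Set.preimage_iUnion, Set.iUnion_singleton_eq_range,
      Set.range_id', Set.preimage_univ, Finsupp.supported_univ]

theorem Finsupp.single_eq_single_add_single {α M : Type*} [AddZeroClass M] {a a₁ a₂ : α}
    {x y z : M} (h₁ : a₁ = a) (h₂ : a₂ = a) (h : x = y + z) :
    Finsupp.single a x = Finsupp.single a₁ y + Finsupp.single a₂ z := by
  rw [h₁, h₂, h, Finsupp.single_add]

theorem Nat.choose_mul_choose_sub_comm (r u v : ℕ) :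
    r.choose u * (r - u).choose v = r.choose v * (r - v).choose u := by
  have h₁ := Nat.choose_mul (n := r) (Nat.le_add_right u v)
  have h₂ := Nat.choose_mul (n := r) (Nat.le_add_left v u)
  rw [Nat.add_sub_cancel_left] at h₁
  rw [Nat.add_sub_cancel] at h₂
  rw [← h₁, ← h₂, Nat.choose_symm_add]

theorem Nat.choose_mul_choose_add_mod_comm {q r a b : ℕ} (hr : r < q) (ha : a ≤ q)
    (hb : b ≤ q) :
    r.choose (q - b) * ((r + b) % q).choose (q - a) =
      r.choose (q - a) * ((r + a) % q).choose (q - b) := by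
  have key : ∀ u v, v ≤ q →
      r.choose (q - v) * ((r + v) % q).choose u = r.choose (q - v) * (r - (q - v)).choose u := by
    intro u v hv
    rcases lt_or_ge r (q - v) with h | h
    · simp [Nat.choose_eq_zero_of_lt h]
    · rw [show r + v = r - (q - v) + q by omega, Nat.add_mod_right, Nat.mod_eq_of_lt (by omega)]
  rw [key _ _ hb, key _ _ ha, Nat.choose_mul_choose_sub_comm]

theorem ZMod.cast_choose_prime_pow_sub_one_sub {p c : ℕ} (hp : p.Prime) {A B : ℕ}
    (h : A + B < p ^ c) :
    (((p ^ c - 1 - A).choose B : ℕ) : ZMod p) = (-1) ^ B * ((A + B).choose A : ℕ) := by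
  induction B generalizing A with
  | zero => simp
  | succ B ihB =>
    have pascal : ∀ A, A < p ^ c → (((p ^ c - A).choose (B + 1) : ℕ) : ZMod p) =
        ((p ^ c - 1 - A).choose B : ℕ) + ((p ^ c - 1 - A).choose (B + 1) : ℕ) := by
      intro A hA
      rw [show p ^ c - A = p ^ c - 1 - A + 1 by omega, Nat.choose_succ_succ', Nat.cast_add]
    induction A with
    | zero =>
      have hdvd : (((p ^ c).choose (B + 1) : ℕ) : ZMod p) = 0 :=
        (ZMod.natCast_eq_zero_iff _ _).mpr (hp.dvd_choose_pow (by omega) (by omega))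
      have h₀ := pascal 0 (by omega)
      rw [Nat.sub_zero, hdvd, ihB (by omega)] at h₀
      simp only [zero_add, Nat.choose_zero_right, Nat.cast_one, mul_one, pow_succ] at h₀ ⊢
      linear_combination -h₀
    | succ A ihA =>
      have h₀ := pascal (A + 1) (by omega)
      rw [show p ^ c - (A + 1) = p ^ c - 1 - A by omega, ihA (by omega), ihB (by omega)] at h₀
      rw [show A + (B + 1) = A + B + 1 by omega, show A + 1 + B = A + B + 1 by omega] at h₀
      rw [show A + 1 + (B + 1) = A + B + 1 + 1 by omega, Nat.choose_succ_succ' (A + B + 1)]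
      push_cast at h₀ ⊢
      linear_combination -h₀

theorem ZMod.cast_choose_prime_pow_sub_one {p c : ℕ} (hp : p.Prime) {B : ℕ} (h : B < p ^ c) :
    (((p ^ c - 1).choose B : ℕ) : ZMod p) = (-1) ^ B := by
  simpa using ZMod.cast_choose_prime_pow_sub_one_sub hp (A := 0) (by omega : 0 + B < p ^ c)

theorem PowerSeries.coeff_X_sub_one_pow {R : Type*} [CommRing R] (d t : ℕ) :
    coeff t ((X - 1 : R⟦X⟧) ^ d) = (-1) ^ (d - t) * (d.choose t : R) := by
  have h : (X - 1 : R⟦X⟧) ^ d = ((Polynomial.X + Polynomial.C (-1)) ^ d : Polynomial R) := by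
    simp [sub_eq_add_neg]
  rw [h, Polynomial.coeff_coe, Polynomial.coeff_X_add_C_pow]

namespace TypeN

section StructureConstants

variable {F : Type*} [CommRing F] {n : ℕ} {C : ℕ → ℕ → F}

structure IsStructureConstants (n : ℕ) (C : ℕ → ℕ → F) : Prop where
  self_eq_zero : ∀ i, n ≤ i → C i i = 0
  antisymm : ∀ i j, n ≤ i → n ≤ j → C i j = -C j i
  derivation : ∀ i j, n ≤ i → n ≤ j → C i j = C i (j + 1) + C (i + 1) j
  jacobi : ∀ i j k, n ≤ i → n ≤ j → n ≤ k →
    C j k * C i (j + k) = C i j * C (i + j) k + C i k * C j (i + k)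

variable (n) in
/-- The basis vector `single 0 1` plays the role of `z`, and `single (k + 1) 1` that of
`e_{k+n}`. -/
def basisDegree : ℕ → ℕ
  | 0 => 1
  | k + 1 => k + n

variable (n) in
def bracketIndex : ℕ → ℕ → ℕ
  | 0, 0 => 0
  | 0, b + 1 | b + 1, 0 => b + 2
  | a + 1, b + 1 => a + b + n + 1

variable (n C) in
def bracketCoeff : ℕ → ℕ → F
  | 0, 0 => 0
  | 0, _ + 1 => -1
  | _ + 1, 0 => 1
  | a + 1, b + 1 => C (a + n) (b + n)

variable (n C) in
noncomputable def bracket : (ℕ →₀ F) →ₗ[F] (ℕ →₀ F) →ₗ[F] (ℕ →₀ F) :=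
  Finsupp.linearCombination F fun a => Finsupp.linearCombination F fun b =>
    Finsupp.single (bracketIndex n a b) (bracketCoeff n C a b)

@[simp]
lemma bracket_single (a b : ℕ) (x y : F) :
    bracket n C (.single a x) (.single b y) =
      .single (bracketIndex n a b) (x * y * bracketCoeff n C a b) := by
  simp only [bracket, Finsupp.linearCombination_single, LinearMap.smul_apply,
    Finsupp.smul_single, smul_eq_mul]
  ring_nf

lemma basisDegree_bracketIndex {a b : ℕ} (hab : a ≠ 0 ∨ b ≠ 0) :
    basisDegree n (bracketIndex n a b) = basisDegree n a + basisDegree n b := by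
  rcases a with _ | a <;> rcases b with _ | b <;> simp_all [basisDegree, bracketIndex] <;> omega

lemma bracketIndex_comm (a b : ℕ) : bracketIndex n a b = bracketIndex n b a := by
  rcases a with _ | a <;> rcases b with _ | b <;> simp only [bracketIndex, Nat.add_comm]

lemma IsStructureConstants.bracketCoeff_antisymm (hC : IsStructureConstants n C) (a b : ℕ) :
    bracketCoeff n C a b = -bracketCoeff n C b a := by
  rcases a with _ | a <;> rcases b with _ | b <;> simp [bracketCoeff]
  exact hC.antisymm _ _ (by omega) (by omega)

lemma IsStructureConstants.bracketCoeff_self (hC : IsStructureConstants n C) (a : ℕ) :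
    bracketCoeff n C a a = 0 := by
  rcases a with _ | a
  · rfl
  · exact hC.self_eq_zero _ (by omega)

lemma IsStructureConstants.bracket_swap (hC : IsStructureConstants n C) (x y : ℕ →₀ F) :
    bracket n C x y = -bracket n C y x := by
  induction x using Finsupp.induction_linear with
  | zero => simp
  | add f g hf hg => simp only [map_add, LinearMap.add_apply, hf, hg, neg_add]
  | single a α =>
    induction y using Finsupp.induction_linear with
    | zero => simp
    | add f g hf hg => simp only [map_add, LinearMap.add_apply, hf, hg, neg_add]
    | single b β => simp [bracketIndex_comm a b, hC.bracketCoeff_antisymm a b, mul_comm α β]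

lemma IsStructureConstants.bracket_self (hC : IsStructureConstants n C) (x : ℕ →₀ F) :
    bracket n C x x = 0 := by
  induction x using Finsupp.induction_linear with
  | zero => simp
  | add f g hf hg =>
    simp only [map_add, LinearMap.add_apply, hf, hg, hC.bracket_swap g f]
    abel
  | single a α => simp [hC.bracketCoeff_self]

lemma IsStructureConstants.bracket_leibniz_single (hC : IsStructureConstants n C) (a b c : ℕ) :
    bracket n C (.single a 1) (bracket n C (.single b 1) (.single c 1)) =
      bracket n C (bracket n C (.single a 1) (.single b 1)) (.single c 1) +
        bracket n C (.single b 1) (bracket n C (.single a 1) (.single c 1)) := by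
  rcases a with _ | a <;> rcases b with _ | b <;> rcases c with _ | c <;>
    simp only [bracket_single, bracketIndex, bracketCoeff, one_mul, mul_one, mul_zero,
      Finsupp.single_zero, map_zero, LinearMap.zero_apply, add_zero, zero_add]
  case succ.zero.zero => rw [← Finsupp.single_add, add_neg_cancel, Finsupp.single_zero]
  all_goals refine Finsupp.single_eq_single_add_single (by omega) (by omega) ?_
  case zero.succ.succ =>
    have h := hC.derivation (b + n) (c + n) (by omega) (by omega)
    rw [Nat.add_right_comm b, Nat.add_right_comm c]
    linear_combination -h
  case succ.zero.succ =>
    have h := hC.derivation (a + n) (c + n) (by omega) (by omega)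
    rw [Nat.add_right_comm a, Nat.add_right_comm c]
    linear_combination h
  case succ.succ.zero =>
    have h := hC.derivation (a + n) (b + n) (by omega) (by omega)
    have h' := hC.antisymm (b + n) (a + n + 1) (by omega) (by omega)
    rw [Nat.add_right_comm a, Nat.add_right_comm b]
    linear_combination -h - h'
  case succ.succ.succ =>
    have h := hC.jacobi (a + n) (b + n) (c + n) (by omega) (by omega) (by omega)
    rw [show b + n + (c + n) = b + c + n + n by omega,
      show a + n + (b + n) = a + b + n + n by omega,
      show a + n + (c + n) = a + c + n + n by omega] at h
    exact h

lemma IsStructureConstants.bracket_leibniz (hC : IsStructureConstants n C) (x y z : ℕ →₀ F) :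
    bracket n C x (bracket n C y z) =
      bracket n C (bracket n C x y) z + bracket n C y (bracket n C x z) := by
  induction x using Finsupp.induction_linear with
  | zero => simp
  | add f g hf hg => simp only [map_add, LinearMap.add_apply, hf, hg]; abel
  | single a α =>
  induction y using Finsupp.induction_linear with
  | zero => simp
  | add f g hf hg => simp only [map_add, LinearMap.add_apply, hf, hg]; abel
  | single b β =>
  induction z using Finsupp.induction_linear with
  | zero => simp
  | add f g hf hg => simp only [map_add, hf, hg]; abel
  | single c γ =>
    rw [← Finsupp.smul_single_one a α, ← Finsupp.smul_single_one b β,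
      ← Finsupp.smul_single_one c γ]
    simp only [map_smul, LinearMap.smul_apply, hC.bracket_leibniz_single a b c]
    module

noncomputable abbrev IsStructureConstants.lieRing (hC : IsStructureConstants n C) :
    LieRing (ℕ →₀ F) :=
  { (inferInstance : AddCommGroup (ℕ →₀ F)) with
    bracket := fun x y => bracket n C x y
    add_lie := fun x y z => by simp only [map_add, LinearMap.add_apply]
    lie_add := fun x y z => map_add _ y z
    lie_self := hC.bracket_self
    leibniz_lie := hC.bracket_leibniz }

noncomputable abbrev IsStructureConstants.lieAlgebra (hC : IsStructureConstants n C) :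
    letI := hC.lieRing
    LieAlgebra F (ℕ →₀ F) :=
  letI := hC.lieRing
  { (inferInstance : Module F (ℕ →₀ F)) with
    lie_smul := fun t x _ => map_smul (bracket n C x) t _ }

variable (F n) in
def grading (i : ℕ) : Submodule F (ℕ →₀ F) :=
  Finsupp.supported F F (basisDegree n ⁻¹' {i})

lemma bracket_mem_grading {i j : ℕ} {x y : ℕ →₀ F} (hx : x ∈ grading F n i)
    (hy : y ∈ grading F n j) : bracket n C x y ∈ grading F n (i + j) := by
  suffices h :
      Submodule.map₂ (bracket n C) (grading F n i) (grading F n j) ≤ grading F n (i + j) from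
    h (Submodule.apply_mem_map₂ _ hx hy)
  rw [grading, grading, Finsupp.supported_eq_span_single, Finsupp.supported_eq_span_single,
    Submodule.map₂_span_span, Submodule.span_le]
  rintro _ ⟨_, ⟨a, rfl, rfl⟩, _, ⟨b, rfl, rfl⟩, rfl⟩
  dsimp only
  rw [bracket_single]
  rcases eq_or_ne a 0 with rfl | ha
  · rcases eq_or_ne b 0 with rfl | hb
    · simp [bracketCoeff]
    · exact Finsupp.single_mem_supported F _ (basisDegree_bracketIndex (.inr hb))
  · exact Finsupp.single_mem_supported F _ (basisDegree_bracketIndex (.inl ha))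

lemma basisDegree_injective (hn : 2 ≤ n) : Function.Injective (basisDegree n) := by
  rintro (_ | a) (_ | b) h <;> simp only [basisDegree] at h <;> omega

lemma single_mem_grading (k : ℕ) (x : F) : .single k x ∈ grading F n (basisDegree n k) :=
  Finsupp.single_mem_supported F x rfl

lemma grading_basisDegree (hn : 2 ≤ n) (k : ℕ) :
    grading F n (basisDegree n k) = F ∙ Finsupp.single k 1 := by
  rw [grading, ← Set.image_singleton, (basisDegree_injective hn).preimage_image,
    Finsupp.supported_eq_span_single, Set.image_singleton]

lemma grading_eq_bot {i : ℕ} (hi : ∀ k, basisDegree n k ≠ i) : grading F n i = ⊥ := by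
  rw [grading, Set.preimage_singleton_eq_empty.mpr (by simpa using hi), Finsupp.supported_empty]

lemma span_bracket_grading (hn : 2 ≤ n) (a b : ℕ) :
    Submodule.span F {w | ∃ x ∈ grading F n (basisDegree n a),
      ∃ u ∈ grading F n (basisDegree n b), w = bracket n C x u} =
      F ∙ bracket n C (.single a 1) (.single b 1) := by
  have h : {w | ∃ x ∈ grading F n (basisDegree n a), ∃ u ∈ grading F n (basisDegree n b),
      w = bracket n C x u} =
      Set.image2 (fun x u => bracket n C x u) (grading F n (basisDegree n a))
        (grading F n (basisDegree n b)) := by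
    ext w
    simp only [Set.mem_ofPred_eq, Set.mem_image2, SetLike.mem_coe, eq_comm]
  rw [h, ← Submodule.map₂_eq_span_image2, grading_basisDegree hn, grading_basisDegree hn,
    Submodule.map₂_span_span, Set.image2_singleton]

lemma basisDegree_sub_add_one {i : ℕ} (hi : n ≤ i) : basisDegree n (i - n + 1) = i := by
  simp only [basisDegree]; omega

lemma grading_add_one_eq_span (hn : 2 ≤ n) {i : ℕ} (hi : n ≤ i) :
    grading F n (i + 1) = Submodule.span F
      {w | ∃ x ∈ grading F n i, ∃ u ∈ grading F n 1, w = bracket n C x u} := by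
  have h := span_bracket_grading (C := C) hn (i - n + 1) 0
  rw [basisDegree_sub_add_one hi, bracket_single, show basisDegree n 0 = 1 from rfl] at h
  rw [h, show i + 1 = basisDegree n (i - n + 2) by
    simp only [basisDegree]; omega, grading_basisDegree hn]
  simp [bracketIndex, bracketCoeff]

end StructureConstants

lemma finrank_grading_basisDegree {K : Type*} [Field K] {n : ℕ} (hn : 2 ≤ n) (k : ℕ) :
    Module.finrank K (grading K n (basisDegree n k)) = 1 := by
  rw [grading_basisDegree hn]
  exact finrank_span_singleton (by simp)

theorem IsStructureConstants.nonempty_genFunTypeNWitness {p q m n : ℕ} {F : Type} [Field F]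
    [CharP F p] {C : ℕ → ℕ → F} (hn : 2 ≤ n) (hC : IsStructureConstants n C)
    (hgen : (1 - X ^ q) * PowerSeries.mk (fun i => if n < i then C i n else 0) =
      (1 - X ^ q) * X ^ (q + m + 1 - n) * (X - 1) ^ (n - m - 1) -
        X ^ (q + m + 1 - n) * (X - 1) ^ (n - 1)) :
    Nonempty (GenFunTypeNWitness p n q m) :=
  letI := hC.lieRing
  letI := hC.lieAlgebra
  ⟨{F := F
    L := ℕ →₀ F
    Lc := grading F n
    internal := Finsupp.isInternal_supported_preimage _
    zero_bot := grading_eq_bot fun k => by cases k <;> simp only [basisDegree] <;> omega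
    grade := fun _ _ _ hx _ hy => bracket_mem_grading hx hy
    dim_one := finrank_grading_basisDegree hn 0
    mid_bot := fun _ h₁ h₂ => grading_eq_bot fun k => by
      cases k <;> simp only [basisDegree] <;> omega
    dim_n := fun _ hi => basisDegree_sub_add_one hi ▸ finrank_grading_basisDegree hn _
    gen := fun _ hi => grading_add_one_eq_span hn hi
    z := .single 0 1
    z_mem := single_mem_grading 0 1
    z_ne := by simp
    e := fun i => .single (i - n + 1) 1
    e_mem := by
      simpa only [basisDegree_sub_add_one le_rfl] using
        single_mem_grading (F := F) (n := n) (n - n + 1) 1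
    e_ne := by simp
    e_rec := fun i hi => by
      show _ = bracket n C _ _
      rw [bracket_single]
      simp only [bracketIndex, bracketCoeff, mul_one]
      congr 1
      omega
    β := fun i => C i n
    bracket_eq := fun i hi => by
      show bracket n C _ _ = _
      rw [Nat.sub_self, bracket_single, Finsupp.smul_single_one]
      simp only [bracketIndex, bracketCoeff, one_mul, zero_add, Nat.sub_add_cancel hi.le]
      congr 1
      omega
    gen_fun := hgen }⟩

section Constants

def halfConst (p q m i j : ℕ) : ZMod p :=
  if i ≤ q then (-1) ^ (i + 1) * (((j - (m + 1)) % q).choose (q - i) : ℕ) else 0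

def structConst (p q m i j : ℕ) : ZMod p := halfConst p q m i j - halfConst p q m j i

variable {p q m : ℕ}

lemma halfConst_of_lt {i : ℕ} (hi : q < i) (j : ℕ) : halfConst p q m i j = 0 := by
  simp [halfConst, hi.not_ge]

lemma halfConst_self_left (hq_odd : Odd q) (j : ℕ) : halfConst p q m q j = 1 := by
  simp [halfConst, hq_odd.add_one.neg_one_pow]

lemma halfConst_eq_add (hp : p.Prime) {c : ℕ} (hq : q = p ^ c) (hq_odd : Odd q) {i j : ℕ}
    (hi : 0 < i) (hj : m < j) :
    halfConst p q m i j = halfConst p q m i (j + 1) + halfConst p q m (i + 1) j := by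
  rcases lt_trichotomy i q with hiq | rfl | hiq
  · set r := j - (m + 1)
    have hj' : j + 1 - (m + 1) = r + 1 := by omega
    simp only [halfConst, if_pos hiq.le, if_pos (Nat.succ_le_of_lt hiq), hj']
    obtain ⟨d, hd⟩ : ∃ d, q - i = d + 1 := ⟨q - i - 1, by omega⟩
    rw [hd, show q - (i + 1) = d by omega]
    rcases Nat.lt_or_ge (r % q + 1) q with hr | hr
    · have hr' : (r + 1) % q = r % q + 1 := by rw [← Nat.mod_add_mod, Nat.mod_eq_of_lt hr]
      rw [hr', Nat.choose_succ_succ', pow_succ]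
      push_cast
      ring
    · have hr' : r % q = q - 1 := by have := Nat.mod_lt r (by omega : 0 < q); omega
      have hr'' : (r + 1) % q = 0 := by
        rw [← Nat.mod_add_mod, hr', Nat.sub_add_cancel (by omega), Nat.mod_self]
      subst hq
      rw [hr', hr'', Nat.choose_zero_succ, ZMod.cast_choose_prime_pow_sub_one hp (by omega),
        ZMod.cast_choose_prime_pow_sub_one hp (by omega)]
      ring
  · rw [halfConst_self_left hq_odd, halfConst_self_left hq_odd,
      halfConst_of_lt (Nat.lt_succ_self _), add_zero]
  · rw [halfConst_of_lt hiq, halfConst_of_lt hiq, halfConst_of_lt (by omega), add_zero]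

lemma structConst_eq_add (hp : p.Prime) {c : ℕ} (hq : q = p ^ c) (hq_odd : Odd q) {i j : ℕ}
    (hi : m < i) (hj : m < j) :
    structConst p q m i j = structConst p q m i (j + 1) + structConst p q m (i + 1) j := by
  have h₁ := halfConst_eq_add (m := m) hp hq hq_odd (i := i) (by omega) hj
  have h₂ := halfConst_eq_add (m := m) hp hq hq_odd (i := j) (by omega) hi
  simp only [structConst]
  linear_combination h₁ - h₂

lemma structConst_eq_zero {j k : ℕ} (hj : m < j) (hk : m < k) (hjk : j + k ≤ q + m) :
    structConst p q m j k = 0 := by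
  have h₁ : (k - (m + 1)) % q = k - (m + 1) := Nat.mod_eq_of_lt (by omega)
  have h₂ : (j - (m + 1)) % q = j - (m + 1) := Nat.mod_eq_of_lt (by omega)
  simp [structConst, halfConst, h₁, h₂,
    Nat.choose_eq_zero_of_lt (by omega : k - (m + 1) < q - j),
    Nat.choose_eq_zero_of_lt (by omega : j - (m + 1) < q - k)]

lemma halfConst_mul_halfConst_comm (hq : 0 < q) {a b c : ℕ} (hc : m < c) :
    halfConst p q m b c * halfConst p q m a (b + c) =
      halfConst p q m a c * halfConst p q m b (a + c) := by
  by_cases hab : a ≤ q ∧ b ≤ q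
  · obtain ⟨r, hr⟩ : ∃ r, (c - (m + 1)) % q = r := ⟨_, rfl⟩
    have hb : (b + c - (m + 1)) % q = (r + b) % q := by
      rw [← hr, show b + c - (m + 1) = c - (m + 1) + b by omega, Nat.mod_add_mod]
    have ha : (a + c - (m + 1)) % q = (r + a) % q := by
      rw [← hr, show a + c - (m + 1) = c - (m + 1) + a by omega, Nat.mod_add_mod]
    have key : (r.choose (q - b) : ZMod p) * ((r + b) % q).choose (q - a) =
        r.choose (q - a) * ((r + a) % q).choose (q - b) := by
      exact_mod_cast congrArg (Nat.cast : ℕ → ZMod p)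
        (Nat.choose_mul_choose_add_mod_comm (hr ▸ Nat.mod_lt _ hq) hab.1 hab.2)
    simp only [halfConst, if_pos hab.1, if_pos hab.2, ha, hb, hr]
    linear_combination (-1 : ZMod p) ^ (a + 1) * (-1) ^ (b + 1) * key
  · rcases not_and_or.mp hab with ha | hb
    · simp [halfConst_of_lt (not_le.mp ha)]
    · simp [halfConst_of_lt (not_le.mp hb)]

lemma structConst_jacobi (hq : 0 < q) {i j k : ℕ} (hi : m < i) (hj : m < j) (hk : m < k) :
    structConst p q m j k * structConst p q m i (j + k) =
      structConst p q m i j * structConst p q m (i + j) k +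
        structConst p q m i k * structConst p q m j (i + k) := by
  have vanish : ∀ {a b : ℕ}, m < a → m < b → ∀ c,
      structConst p q m a b * halfConst p q m (a + b) c = 0 := by
    intro a b ha hb c
    by_cases h : a + b ≤ q
    · rw [structConst_eq_zero ha hb (by omega), zero_mul]
    · rw [halfConst_of_lt (not_le.mp h), mul_zero]
  have e₁ := halfConst_mul_halfConst_comm (p := p) hq (a := i) (b := j) hk
  have e₂ := halfConst_mul_halfConst_comm (p := p) hq (a := j) (b := k) hi
  have e₃ := halfConst_mul_halfConst_comm (p := p) hq (a := k) (b := i) hj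
  have k₁ := vanish hj hk i
  have k₂ := vanish hi hj k
  have k₃ := vanish hi hk j
  rw [Nat.add_comm k i, Nat.add_comm j i] at e₂
  rw [Nat.add_comm k j] at e₃
  simp only [structConst] at k₁ k₂ k₃ ⊢
  linear_combination e₁ + e₂ + e₃ - k₁ - k₂ + k₃

theorem isStructureConstants_structConst (hp : p.Prime) {c : ℕ} (hq : q = p ^ c)
    (hq_odd : Odd q) {n : ℕ} (hmn : m < n) : IsStructureConstants n (structConst p q m) where
  self_eq_zero _ _ := sub_self _
  antisymm _ _ _ _ := (neg_sub _ _).symm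
  derivation _ _ hi hj := structConst_eq_add hp hq hq_odd (by omega) (by omega)
  jacobi _ _ _ hi hj hk :=
    structConst_jacobi (hq ▸ pow_pos hp.pos c) (by omega) (by omega) (by omega)

end Constants

section GeneratingFunction

variable {p q m n : ℕ}

lemma mk_halfConst_left (hq_odd : Odd q) (hmn : m < n) (hn : 2 * n ≤ q + m) :
    PowerSeries.mk (fun t => if n < t then halfConst p q m t n else 0) =
      X ^ (q + m + 1 - n) * (X - 1) ^ (n - m - 1) := by
  ext t
  have hq2 := Nat.odd_iff.mp hq_odd
  simp only [coeff_mk, coeff_X_pow_mul', coeff_X_sub_one_pow]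
  rcases le_or_gt t n with htn | htn
  · rw [if_neg (by omega), if_neg (by omega)]
  rw [if_pos htn, halfConst, Nat.mod_eq_of_lt (by omega : n - (m + 1) < q)]
  rcases le_or_gt t q with htq | htq
  · rw [if_pos htq]
    rcases le_or_gt (q + m + 1 - n) t with hNt | hNt
    · rw [if_pos hNt, show q - t = n - m - 1 - (t - (q + m + 1 - n)) by omega,
        show n - (m + 1) = n - m - 1 by omega, Nat.choose_symm (by omega)]
      exact congr($(neg_one_pow_congr (by simp only [Nat.even_iff]; omega)) * _)
    · rw [if_neg (by omega), Nat.choose_eq_zero_of_lt (by omega), Nat.cast_zero, mul_zero]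
  · rw [if_neg (by omega), if_pos (by omega), Nat.choose_eq_zero_of_lt (by omega), Nat.cast_zero,
      mul_zero]

lemma one_sub_X_pow_mul_mk_halfConst_right (hp : p.Prime) {c : ℕ} (hq : q = p ^ c) (hmn : m < n)
    (hn : 2 * n ≤ q + m) :
    (1 - X ^ q) * PowerSeries.mk (fun t => if n < t then halfConst p q m n t else 0) =
      X ^ (q + m + 1 - n) * (X - 1) ^ (n - 1) := by
  ext t
  simp only [sub_mul, one_mul, map_sub, coeff_mk, coeff_X_pow_mul', coeff_X_sub_one_pow]
  rcases le_or_gt t n with htn | htn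
  · rw [if_neg (by omega), ite_eq_right_iff.mpr fun _ => if_neg (by omega), if_neg (by omega),
      sub_zero]
  rcases le_or_gt t (q + n) with htqn | htqn
  · have hz :
        (if q ≤ t then (if n < t - q then halfConst p q m n (t - q) else 0) else 0) = 0 := by
      split_ifs <;> first | rfl | omega
    rw [hz, sub_zero, if_pos htn, halfConst, if_pos (by omega)]
    rcases le_or_gt t (q + m) with htqm | htqm
    · rw [Nat.mod_eq_of_lt (by omega : t - (m + 1) < q)]
      rcases le_or_gt (q + m + 1 - n) t with hNt | hNt
      · obtain ⟨w, hw⟩ : ∃ w, t = q + m + 1 - n + w := ⟨t - (q + m + 1 - n), by omega⟩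
        have h := ZMod.cast_choose_prime_pow_sub_one_sub hp (c := c) (A := n - 1 - w) (B := w)
          (by omega)
        rw [← hq, show q - 1 - (n - 1 - w) = t - (m + 1) by omega,
          show n - 1 - w + w = n - 1 by omega, Nat.choose_symm (by omega)] at h
        rw [if_pos hNt, show t - (q + m + 1 - n) = w by omega,
          Nat.choose_symm_of_eq_add (by omega : t - (m + 1) = q - n + w), h, ← mul_assoc,
          ← pow_add]
        exact congr($(neg_one_pow_congr (by simp only [Nat.even_iff]; omega)) * _)
      · rw [if_neg (by omega), Nat.choose_eq_zero_of_lt (by omega), Nat.cast_zero, mul_zero]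
    · rw [Nat.mod_eq_sub_mod (by omega), Nat.mod_eq_of_lt (by omega),
        Nat.choose_eq_zero_of_lt (by omega : t - (m + 1) - q < q - n), if_pos (by omega),
        Nat.choose_eq_zero_of_lt (by omega : n - 1 < t - (q + m + 1 - n))]
      simp
  · rw [if_pos htn, if_pos (by omega), if_pos (by omega), if_pos (by omega),
      Nat.choose_eq_zero_of_lt (by omega : n - 1 < t - (q + m + 1 - n)), Nat.cast_zero, mul_zero,
      halfConst, halfConst, show t - (m + 1) = t - q - (m + 1) + q by omega, Nat.add_mod_right,
      sub_self]

theorem one_sub_X_pow_mul_mk_structConst (hp : p.Prime) {c : ℕ} (hq : q = p ^ c) (hq_odd : Odd q)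
    (hmn : m < n) (hn : 2 * n ≤ q + m) :
    (1 - X ^ q) * PowerSeries.mk (fun i => if n < i then structConst p q m i n else 0) =
      (1 - X ^ q) * X ^ (q + m + 1 - n) * (X - 1) ^ (n - m - 1) -
        X ^ (q + m + 1 - n) * (X - 1) ^ (n - 1) := by
  have h : PowerSeries.mk (fun i => if n < i then structConst p q m i n else 0) =
      PowerSeries.mk (fun t => if n < t then halfConst p q m t n else 0) -
        PowerSeries.mk (fun t => if n < t then halfConst p q m n t else 0) := by
    ext t
    simp only [coeff_mk, map_sub]
    split_ifs <;> simp [structConst]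
  rw [h, mul_sub, mk_halfConst_left hq_odd hmn hn,
    one_sub_X_pow_mul_mk_halfConst_right hp hq hmn hn, mul_assoc]

end GeneratingFunction

end TypeN

theorem exists_type_n_with_generating_function_general
    (p : ℕ) (hp : p.Prime) (hodd : Odd p)
    (c : ℕ) (q : ℕ) (hq : q = p ^ c)
    (m n : ℕ) (hm0 : 0 < m) (hmn : m < n) (hn : 2 * n ≤ q + m) :
    Nonempty (GenFunTypeNWitness p n q m) := by
  have := Fact.mk hp
  have hq_odd : Odd q := hq ▸ hodd.pow
  exact (TypeN.isStructureConstants_structConst hp hq hq_odd hmn).nonempty_genFunTypeNWitness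
    (by omega) (TypeN.one_sub_X_pow_mul_mk_structConst hp hq hq_odd hmn hn)

/-- **Proposition (generating function of the exceptional algebras).**
Let `p` be an odd prime, `q = p^c` a power of `p`, and `0 < m < p`,
`m < n ≤ (q + m)/2`.  Then there exist a field `F` of characteristic `p` and an
algebra `L` of type `n` over `F`, with a choice of generators, whose sequence
`(β_i)_{i>n}` satisfies
`(1 − X^q)·Σ_{i>n} β_i X^i
   = (1 − X^q)·X^{q+m+1−n}(X−1)^{n−m−1} − X^{q+m+1−n}(X−1)^{n−1}` in `F⟦X⟧`. -/
theorem exists_type_n_with_generating_function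
    (p : ℕ) (hp : p.Prime) (hodd : Odd p)
    (c : ℕ) (q : ℕ) (hq : q = p ^ c)
    (m n : ℕ) (hm0 : 0 < m) (hmp : m < p) (hmn : m < n) (hn : 2 * n ≤ q + m) :
    Nonempty (GenFunTypeNWitness p n q m) :=
  exists_type_n_with_generating_function_general p hp hodd c q hq m n hm0 hmn hn
end

section
/- Let F be a field of prime characteristic p, let n and k be integers with 1 < n < p and k > n + 1, and let g(x) ∈ F[x] be a monic polynomial of degree n − 1 such that the coefficient of x^j in (x−1)^k g(x) is zero for every integer j with (k+n)/2 ≤ j < k. If k ≥ 4p, then there exists a power q = p^c of p with q > p such that either k = 2q − n + 1, or q − n < k < q + n. -/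
/-!
Let `q = p ^ c` be the largest power of `p` with `q ≤ k` and write `k = q a + r` with
`1 ≤ a < p`, `r < q`. In characteristic `p` we have `(X - 1) ^ q = X ^ q - 1`, so when
`deg H < q` the coefficient of `X ^ (q t + s)` in `(X - 1) ^ (q A) * H` is
`± (A choose t) * [X ^ s] H`: such products split into disjoint blocks of length `q`.

If `r + n ≤ q`, apply this to `(X - 1) ^ k g = (X - 1) ^ (q a) * ((X - 1) ^ r g)`: the top
coefficient of block `a - 1` lies in the window, forcing `p ∣ a` unless `a = 1`, and then
block `a` forces `X ^ r ∣ g`, i.e. `r < n`. Otherwise `m = q - r < n`; multiplying by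
`(X - 1) ^ m` shrinks the window by `m` and produces `(X ^ q - 1) ^ (a + 1) g`, whose block
`t = a` or `t = a - 1` gives `p ∣ (a + 1 choose t)`. This is impossible for `a + 1 < p`
unless `a = 1` and `m = n - 1`, i.e. `k = 2 q - n + 1`; the case `a + 1 = p` gives
`q p - n < k < q p`.
-/

open Polynomial

namespace Polynomial

variable {R : Type*}

theorem coeff_mul_eq_zero_of_natDegree_le [Semiring R] {f P : R[X]} {m j : ℕ}
    (hf : f.natDegree ≤ m) (hP : ∀ i ≤ j, j ≤ i + m → P.coeff i = 0) :
    (f * P).coeff j = 0 := by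
  rw [coeff_mul]
  refine Finset.sum_eq_zero fun ⟨u, v⟩ huv => ?_
  rw [Finset.HasAntidiagonal.mem_antidiagonal] at huv
  by_cases hu : u ≤ m
  · rw [hP v (by omega) (by omega), mul_zero]
  · rw [coeff_eq_zero_of_natDegree_lt (by omega), zero_mul]

theorem coeff_expand_mul_of_natDegree_lt [CommSemiring R] {q : ℕ} (f : R[X]) {H : R[X]}
    (hH : H.natDegree < q) (t : ℕ) {s : ℕ} (hs : s < q) :
    (expand R q f * H).coeff (q * t + s) = f.coeff t * H.coeff s := by
  induction f using Polynomial.induction_on' with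
  | add f₁ f₂ h₁ h₂ => simp only [map_add, add_mul, coeff_add, h₁, h₂]
  | monomial i a =>
    rw [expand_monomial, ← C_mul_X_pow_eq_monomial, mul_assoc, coeff_C_mul, coeff_X_pow_mul',
      coeff_monomial]
    rcases lt_trichotomy i t with hit | rfl | hti
    · have : i * q + q ≤ q * t := by nlinarith
      rw [if_pos (by omega), coeff_eq_zero_of_natDegree_lt (by omega), if_neg hit.ne, mul_zero,
        zero_mul]
    · rw [if_pos (by rw [mul_comm]; omega), if_pos rfl, mul_comm i q, Nat.add_sub_cancel_left]
    · have : q * t + q ≤ i * q := by nlinarith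
      rw [if_neg (by omega), if_neg hti.ne', mul_zero, zero_mul]

theorem monic_X_sub_one_pow [Ring R] [Nontrivial R] (r : ℕ) :
    ((X - 1 : R[X]) ^ r).Monic := by
  simpa using (monic_X_sub_C (1 : R)).pow r

theorem natDegree_X_sub_one_pow [Ring R] [Nontrivial R] (r : ℕ) :
    ((X - 1 : R[X]) ^ r).natDegree = r := by
  rw [← C_1, (monic_X_sub_C (1 : R)).natDegree_pow, natDegree_X_sub_C, mul_one]

theorem natDegree_X_sub_one_pow_mul [Ring R] [Nontrivial R] {g : R[X]}
    (hg : g ≠ 0) (r : ℕ) : ((X - 1 : R[X]) ^ r * g).natDegree = r + g.natDegree := by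
  rw [(monic_X_sub_one_pow r).natDegree_mul' hg, natDegree_X_sub_one_pow]

end Polynomial

section CharP

variable {R : Type*} [CommRing R] {p : ℕ} [Fact p.Prime] [CharP R p]

theorem X_sub_one_pow_char_pow_mul_eq_expand (c A : ℕ) :
    (X - 1 : R[X]) ^ (p ^ c * A) = expand R (p ^ c) ((X - 1) ^ A) := by
  rw [pow_mul, sub_pow_char_pow, map_pow, map_sub, expand_X, map_one, one_pow]

theorem coeff_X_sub_one_pow_char_pow_mul {c : ℕ} {H : R[X]} (hH : H.natDegree < p ^ c)
    (A t : ℕ) {s : ℕ} (hs : s < p ^ c) :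
    ((X - 1 : R[X]) ^ (p ^ c * A) * H).coeff (p ^ c * t + s)
      = (-1) ^ (A - t) * A.choose t * H.coeff s := by
  rw [X_sub_one_pow_char_pow_mul_eq_expand, coeff_expand_mul_of_natDegree_lt _ hH t hs,
    sub_eq_add_neg, ← C_1, ← C_neg, coeff_X_add_C_pow]

theorem cast_choose_eq_zero_of_coeff_X_sub_one_pow_char_pow_mul [IsDomain R] {c A t : ℕ}
    {H : R[X]} (hH0 : H ≠ 0) (hH : H.natDegree < p ^ c)
    (h : ((X - 1 : R[X]) ^ (p ^ c * A) * H).coeff (p ^ c * t + H.natDegree) = 0) :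
    (A.choose t : R) = 0 := by
  rw [coeff_X_sub_one_pow_char_pow_mul hH A t hH, coeff_natDegree] at h
  simpa [hH0] using h

end CharP

theorem Nat.Prime.cast_choose_ne_zero {R : Type*} [AddMonoidWithOne R] {p : ℕ} [CharP R p]
    (hp : p.Prime) {A t : ℕ} (hA : A < p) (ht : t ≤ A) : (A.choose t : R) ≠ 0 := by
  rw [Ne, CharP.cast_eq_zero_iff R p]
  exact fun h => hp.ne_one ((hp.coprime_choose_of_lt hA ht).eq_one_of_dvd h)

theorem Nat.exists_eq_pow_mul_add {p k : ℕ} (hp : 1 < p) (hpk : p ≤ k) :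
    ∃ c a r, 1 ≤ c ∧ 1 ≤ a ∧ a < p ∧ r < p ^ c ∧ k = p ^ c * a + r := by
  have hq : 0 < p ^ Nat.log p k := pow_pos (by omega) _
  refine ⟨Nat.log p k, k / p ^ Nat.log p k, k % p ^ Nat.log p k, Nat.log_pos hp hpk,
    Nat.div_pos (Nat.pow_log_le_self p (by omega)) hq, ?_, Nat.mod_lt _ hq,
    (Nat.div_add_mod k _).symm⟩
  rw [Nat.div_lt_iff_lt_mul hq, ← pow_succ']
  exact Nat.lt_pow_succ_log_self hp k

def HasCoeffWindow {R : Type*} [Ring R] (k n : ℕ) (g : R[X]) : Prop :=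
  ∀ j, k + n ≤ 2 * j → j < k → ((X - 1) ^ k * g).coeff j = 0

section Window

variable {R : Type*} [CommRing R] [IsDomain R] {p : ℕ} [Fact p.Prime] [CharP R p]
  {g : R[X]} {n k c a r : ℕ}

theorem le_natDegree_of_hasCoeffWindow (hg : g ≠ 0) (hgn : g.natDegree < n)
    (hw : HasCoeffWindow k n g) (hk : k = p ^ c * a + r) (ha : 1 ≤ a) (hrn : r + n ≤ p ^ c) :
    r ≤ g.natDegree := by
  have hHdeg := natDegree_X_sub_one_pow_mul hg r
  have hq : p ^ c ≤ p ^ c * a := Nat.le_mul_of_pos_right _ ha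
  have hXH : X ^ r ∣ (X - 1 : R[X]) ^ r * g := by
    refine X_pow_dvd_iff.2 fun s hs => ?_
    have h := hw (p ^ c * a + s) (by omega) (by omega)
    rwa [hk, pow_add, mul_assoc, coeff_X_sub_one_pow_char_pow_mul (by omega) a a (by omega),
      Nat.sub_self, Nat.choose_self, pow_zero, Nat.cast_one, one_mul, one_mul] at h
  have hX : ¬ X ∣ (X - 1 : R[X]) ^ r := by
    simp [X_dvd_iff, coeff_zero_eq_eval_zero]
  simpa using natDegree_le_of_dvd (prime_X.pow_dvd_of_dvd_mul_left r hX hXH) hg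

theorem cast_choose_pred_eq_zero_of_hasCoeffWindow (hg : g ≠ 0) (hn : 1 < n)
    (hdeg : g.natDegree = n - 1) (hw : HasCoeffWindow k n g) (hk : k = p ^ c * a + r)
    (ha : 2 ≤ a) (hrn : r + n ≤ p ^ c) :
    (a.choose (a - 1) : R) = 0 := by
  have hHdeg := natDegree_X_sub_one_pow_mul hg r
  have hqa : p ^ c * (a - 1) + p ^ c = p ^ c * a := by
    rw [← Nat.mul_add_one, Nat.sub_add_cancel (by omega : 1 ≤ a)]
  have hq : p ^ c ≤ p ^ c * (a - 1) := Nat.le_mul_of_pos_right _ (by omega)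
  refine cast_choose_eq_zero_of_coeff_X_sub_one_pow_char_pow_mul (c := c)
    (mul_ne_zero (monic_X_sub_one_pow r).ne_zero hg) (by omega) ?_
  rw [← mul_assoc, ← pow_add, ← hk]
  exact hw _ (by omega) (by omega)

theorem cast_choose_eq_zero_of_hasCoeffWindow (hg : g ≠ 0) (hgq : g.natDegree < p ^ c)
    (hw : HasCoeffWindow k n g) {m A t : ℕ} (hkm : k + m = p ^ c * A)
    (hlo : k + n + 2 * m ≤ 2 * (p ^ c * t + g.natDegree)) (hhi : p ^ c * t + g.natDegree < k) :
    (A.choose t : R) = 0 := by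
  refine cast_choose_eq_zero_of_coeff_X_sub_one_pow_char_pow_mul hg hgq ?_
  rw [← hkm, add_comm, pow_add, mul_assoc]
  exact coeff_mul_eq_zero_of_natDegree_le (natDegree_X_sub_one_pow m).le
    fun i hij hji => hw i (by omega) (by omega)

theorem eq_one_and_lt_of_hasCoeffWindow (hg : g ≠ 0) (hn : 1 < n) (hdeg : g.natDegree = n - 1)
    (hw : HasCoeffWindow k n g) (hk : k = p ^ c * a + r) (ha : 1 ≤ a) (hap : a < p)
    (hrn : r + n ≤ p ^ c) :
    a = 1 ∧ r < n := by
  obtain rfl | ha2 : a = 1 ∨ 2 ≤ a := by omega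
  · have := le_natDegree_of_hasCoeffWindow hg (by omega) hw hk le_rfl hrn
    exact ⟨rfl, by omega⟩
  · exact absurd (cast_choose_pred_eq_zero_of_hasCoeffWindow hg hn hdeg hw hk ha2 hrn)
      ((Fact.out : p.Prime).cast_choose_ne_zero hap (by omega))

theorem eq_one_of_hasCoeffWindow_of_lt (hg : g ≠ 0) (hn : 1 < n) (hnp : n < p)
    (hdeg : g.natDegree = n - 1) (hw : HasCoeffWindow k n g) (hk : 4 * p ≤ k) {m : ℕ}
    (hkm : k + m = p ^ c * (a + 1)) (hm : 0 < m) (hmn : m < n) (ha : 1 ≤ a) (hap : a + 1 < p) :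
    a = 1 ∧ m + 1 = n := by
  have hp : p.Prime := Fact.out
  have hsucc : p ^ c * (a + 1) = p ^ c * a + p ^ c := mul_add_one _ _
  have hc : c ≠ 0 := by rintro rfl; rw [pow_zero, one_mul] at hkm; omega
  have hpc : p ≤ p ^ c := Nat.le_self_pow hc p
  obtain ha4 | ha3 : 4 ≤ a ∨ a ≤ 3 := by omega
  · have h4 : p ^ c * 4 ≤ p ^ c * a := Nat.mul_le_mul_left _ ha4
    have hpred : p ^ c * (a - 1) + p ^ c = p ^ c * a := by
      rw [← Nat.mul_add_one, Nat.sub_add_cancel ha]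
    exact absurd (cast_choose_eq_zero_of_hasCoeffWindow hg (by omega) hw hkm (t := a - 1)
      (by omega) (by omega)) (hp.cast_choose_ne_zero hap (by omega))
  -- `4 p ≤ k < 4 p ^ c` forces `c ≥ 2`, which puts the block `t = a` inside the window.
  have hpp : p * p ≤ p ^ c := by
    have : p ^ c * (a + 1) ≤ p ^ c * 4 := Nat.mul_le_mul_left _ (by omega)
    have hc2 : 2 ≤ c := by
      by_contra!
      obtain rfl : c = 1 := by omega
      rw [pow_one] at *; omega
    simpa [sq] using Nat.pow_le_pow_right hp.pos hc2
  have hnp2 : 2 * n ≤ p * p := Nat.mul_le_mul (by omega) hnp.le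
  by_contra hne
  have h2 : 2 ≤ a → p ^ c * 2 ≤ p ^ c * a := Nat.mul_le_mul_left _
  have hlo : k + n + 2 * m ≤ 2 * (p ^ c * a + g.natDegree) := by
    obtain rfl | ha2 : a = 1 ∨ 2 ≤ a := by omega
    all_goals omega
  exact absurd (cast_choose_eq_zero_of_hasCoeffWindow hg (by omega) hw hkm hlo (by omega))
    (hp.cast_choose_ne_zero hap (by omega))

end Window

theorem polynomial_constraint_large_k_general
    (p : ℕ) (hp : p.Prime)
    {F : Type*} [Field F] [CharP F p]
    (n k : ℕ) (hn1 : 1 < n) (hnp : n < p)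
    (g : Polynomial F) (hmonic : g.Monic) (hdeg : g.natDegree = n - 1)
    (hcoeff : ∀ j : ℕ, k + n ≤ 2 * j → j < k →
      ((Polynomial.X - 1) ^ k * g).coeff j = 0)
    (hk4p : 4 * p ≤ k) :
    ∃ c : ℕ, p < p ^ c ∧
      (k + n = 2 * p ^ c + 1 ∨ (p ^ c < k + n ∧ k < p ^ c + n)) := by
  have := Fact.mk hp
  obtain ⟨c, a, r, hc, ha, hap, hrq, hka⟩ :=
    Nat.exists_eq_pow_mul_add hp.one_lt (by omega : p ≤ k)
  have hpc : p ≤ p ^ c := Nat.le_self_pow (by omega) p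
  by_cases hrn : r + n ≤ p ^ c
  · obtain ⟨rfl, hrn⟩ :=
      eq_one_and_lt_of_hasCoeffWindow hmonic.ne_zero hn1 hdeg hcoeff hka ha hap hrn
    exact ⟨c, by omega, Or.inr ⟨by omega, by omega⟩⟩
  obtain ⟨m, hmr⟩ : ∃ m, r + m = p ^ c := ⟨p ^ c - r, by omega⟩
  have hkm : k + m = p ^ c * (a + 1) := by rw [mul_add_one]; omega
  by_cases hpa : a + 1 = p
  · have : p ^ (c + 1) = k + m := by rw [hkm, hpa, pow_succ]
    exact ⟨c + 1, by omega, Or.inr ⟨by omega, by omega⟩⟩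
  obtain ⟨rfl, hmn⟩ := eq_one_of_hasCoeffWindow_of_lt hmonic.ne_zero hn1 hnp hdeg hcoeff hk4p
    hkm (by omega) (by omega) ha (by omega)
  exact ⟨c, by omega, Or.inl (by omega)⟩

/-- **Theorem (polynomial result, assertion (a)).**
Let `F` have prime characteristic `p`, `1 < n < p`, `k > n + 1`, and let
`g ∈ F[x]` be monic of degree `n − 1` with `[x^j] (x−1)^k g(x) = 0` for
`(k+n)/2 ≤ j < k`.  If `k ≥ 4p` then there is a power `q = p^c` of `p` with
`q > p` such that either `k = 2q − n + 1` or `q − n < k < q + n`. -/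
theorem polynomial_constraint_large_k
    (p : ℕ) (hp : p.Prime)
    {F : Type*} [Field F] [CharP F p]
    (n k : ℕ) (hn1 : 1 < n) (hnp : n < p) (hk : n + 1 < k)
    (g : Polynomial F) (hmonic : g.Monic) (hdeg : g.natDegree = n - 1)
    (hcoeff : ∀ j : ℕ, k + n ≤ 2 * j → j < k →
      ((Polynomial.X - 1) ^ k * g).coeff j = 0)
    (hk4p : 4 * p ≤ k) :
    ∃ c : ℕ, p < p ^ c ∧
      (k + n = 2 * p ^ c + 1 ∨ (p ^ c < k + n ∧ k < p ^ c + n)) :=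
  polynomial_constraint_large_k_general p hp n k hn1 hnp g hmonic hdeg hcoeff hk4p
end

section
/- Let F be a field of prime characteristic p, let n and k be integers with 1 < n < p and k > n + 1, and let g(x) ∈ F[x] be a monic polynomial of degree n − 1 such that the coefficient of x^j in (x−1)^k g(x) is zero for every integer j with (k+n)/2 ≤ j < k. If k = 2q − n + 1 for some power q = p^c of p with q > p, then g(x) = (x − 1)^{n−1}. -/
/-!
Since `k + (n - 1) = 2q` and `(X - 1)^q = X^q - 1` in characteristic `p`, the polynomial
`f = (X - 1)^k g` satisfies `f · (X - 1)^(n-1) = X^(2q) g - 2 X^q g + g`. The coefficient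
hypothesis says that the part of `f` of degree `< k` has degree `≤ q`, and as `q ≥ p² > 2n` all
the low-order terms above stay of degree `< k`. Comparing the quotients by `X^k` on both sides
gives `(f /ₘ X^k) · (X - 1)^(n-1) = X^(n-1) g`; as `X - 1` and `X` are coprime, `(X - 1)^(n-1)`
divides `g`, and both are monic of degree `n - 1`.
-/

open Polynomial

section DivByMonicXPow

variable {R : Type*} [CommRing R]

theorem natDegree_modByMonic_X_pow_le {f : R[X]} {k q : ℕ}
    (hf : ∀ j, q < j → j < k → f.coeff j = 0) : (f %ₘ X ^ k).natDegree ≤ q := by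
  nontriviality R
  refine natDegree_le_iff_coeff_eq_zero.2 fun j hqj => ?_
  rcases lt_or_ge j k with hjk | hkj
  · rw [modByMonic_eq_sub_mul_div, coeff_sub, coeff_X_pow_mul', if_neg (by omega), hf j hqj hjk,
      sub_zero]
  · refine coeff_eq_zero_of_degree_lt ((degree_modByMonic_lt f (monic_X_pow k)).trans_le ?_)
    simpa using hkj

theorem X_pow_mul_add_divByMonic_X_pow [Nontrivial R] {a b : R[X]} {k : ℕ}
    (hb : b.natDegree < k) : (X ^ k * a + b) /ₘ X ^ k = a := by
  refine (div_modByMonic_unique a b (monic_X_pow k) ⟨add_comm _ _, ?_⟩).1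
  rw [degree_X_pow]
  exact degree_le_natDegree.trans_lt (WithBot.coe_lt_coe.2 hb)

theorem mul_divByMonic_X_pow_of_natDegree_lt [Nontrivial R] {f g : R[X]} {k : ℕ}
    (hg : (f %ₘ X ^ k * g).natDegree < k) : (f * g) /ₘ X ^ k = f /ₘ X ^ k * g := by
  conv_lhs => rw [← modByMonic_add_div f (X ^ k)]
  rw [add_mul, mul_assoc, add_comm, X_pow_mul_add_divByMonic_X_pow hg]

end DivByMonicXPow

theorem dvd_of_X_sub_one_pow_dvd_X_pow_mul {R : Type*} [CommRing R] {g : R[X]} {m : ℕ}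
    (h : (X - 1) ^ m ∣ X ^ m * g) : (X - 1) ^ m ∣ g :=
  (IsCoprime.pow (x := (X - 1 : R[X])) ⟨-1, 1, by ring⟩).dvd_of_dvd_mul_left h

theorem natDegree_one_sub_two_mul_X_pow_mul_le {R : Type*} [CommRing R] (g : R[X]) (q : ℕ) :
    ((1 - 2 * X ^ q) * g).natDegree ≤ q + g.natDegree := by
  refine natDegree_mul_le.trans (Nat.add_le_add_right ?_ _)
  refine (natDegree_sub_le _ _).trans (max_le (by simp) ?_)
  exact natDegree_mul_le.trans (by simpa using natDegree_X_pow_le q)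

theorem X_sub_one_pow_mul_X_sub_one_pow_of_add_eq {R : Type*} [CommRing R] {p : ℕ}
    [Fact p.Prime] [CharP R p] {k m c : ℕ} (h : k + m = 2 * p ^ c) (g : R[X]) :
    (X - 1) ^ k * g * (X - 1) ^ m = X ^ k * (X ^ m * g) + (1 - 2 * X ^ p ^ c) * g := by
  have hfrob : ((X : R[X]) - 1) ^ p ^ c = X ^ p ^ c - 1 := by rw [sub_pow_char_pow, one_pow]
  rw [mul_right_comm, ← pow_add, ← mul_assoc, ← pow_add, h, pow_mul', pow_mul', hfrob]
  ring

theorem polynomial_constraint_case_2q_general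
    (p : ℕ) (hp : p.Prime)
    {F : Type*} [Field F] [CharP F p]
    (n k : ℕ) (hn1 : 1 < n) (hnp : n < p)
    (g : Polynomial F) (hmonic : g.Monic) (hdeg : g.natDegree = n - 1)
    (hcoeff : ∀ j : ℕ, k + n ≤ 2 * j → j < k →
      ((Polynomial.X - 1) ^ k * g).coeff j = 0)
    (c : ℕ) (q : ℕ) (hq : q = p ^ c) (hqp : p < q)
    (hkq : k + n = 2 * q + 1) :
    g = (Polynomial.X - 1) ^ (n - 1) := by
  have := Fact.mk hp
  have hq2n : 2 * n < q := by
    have hc : 2 ≤ c := (Nat.pow_lt_pow_iff_right hp.one_lt).1 (by simpa [hq] using hqp)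
    have : p ^ 2 ≤ q := hq ▸ Nat.pow_le_pow_right hp.pos hc
    nlinarith
  set m := n - 1
  have hfrob : (X - 1) ^ k * g * (X - 1) ^ m = X ^ k * (X ^ m * g) + (1 - 2 * X ^ q) * g :=
    hq ▸ X_sub_one_pow_mul_X_sub_one_pow_of_add_eq (by omega) g
  have hdegX1 : (((X : F[X]) - 1) ^ m).natDegree = m := by
    rw [natDegree_pow, ← C_1, natDegree_X_sub_C, mul_one]
  have hlow : (((X - 1) ^ k * g) %ₘ X ^ k * (X - 1) ^ m).natDegree < k := by
    refine natDegree_mul_le.trans_lt ?_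
    have hA := natDegree_modByMonic_X_pow_le (k := k) (q := q)
      fun j hqj hjk => hcoeff j (by omega) hjk
    omega
  have hhigh : ((1 - 2 * X ^ q) * g).natDegree < k := by
    have := natDegree_one_sub_two_mul_X_pow_mul_le g q
    omega
  have hquot : ((X - 1) ^ k * g) /ₘ X ^ k * (X - 1) ^ m = X ^ m * g := by
    rw [← mul_divByMonic_X_pow_of_natDegree_lt hlow, hfrob, X_pow_mul_add_divByMonic_X_pow hhigh]
  have hdvd : (X - 1) ^ m ∣ g :=
    dvd_of_X_sub_one_pow_dvd_X_pow_mul ⟨_, hquot.symm.trans (mul_comm _ _)⟩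
  have hmonicX1 : (((X : F[X]) - 1) ^ m).Monic := by simpa using (monic_X_sub_C (1 : F)).pow m
  exact eq_of_monic_of_dvd_of_natDegree_le hmonicX1 hmonic hdvd (by rw [hdeg, hdegX1])

/-- **Theorem (polynomial result, assertion (c)).**
Let `F` have prime characteristic `p`, `1 < n < p`, `k > n + 1`, and let
`g ∈ F[x]` be monic of degree `n − 1` with `[x^j] (x−1)^k g(x) = 0` for
`(k+n)/2 ≤ j < k`.  If `k = 2q − n + 1` for some power `q = p^c` of `p` with
`q > p`, then `g(x) = (x − 1)^{n−1}`. -/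
theorem polynomial_constraint_case_2q
    (p : ℕ) (hp : p.Prime)
    {F : Type*} [Field F] [CharP F p]
    (n k : ℕ) (hn1 : 1 < n) (hnp : n < p) (hk : n + 1 < k)
    (g : Polynomial F) (hmonic : g.Monic) (hdeg : g.natDegree = n - 1)
    (hcoeff : ∀ j : ℕ, k + n ≤ 2 * j → j < k →
      ((Polynomial.X - 1) ^ k * g).coeff j = 0)
    (c : ℕ) (q : ℕ) (hq : q = p ^ c) (hqp : p < q)
    (hkq : k + n = 2 * q + 1) :
    g = (Polynomial.X - 1) ^ (n - 1) :=
  polynomial_constraint_case_2q_general p hp n k hn1 hnp g hmonic hdeg hcoeff c q hq hqp hkq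
end

section
/- Let F be a field of prime characteristic p, let n and k be integers with 1 < n < p and k > n + 1, and let g(x) ∈ F[x] be a monic polynomial of degree n − 1 such that the coefficient of x^j in (x−1)^k g(x) is zero for every integer j with (k+n)/2 ≤ j < k. If k = q + k0 for some power q = p^c of p with q > p and some integer k0 with 0 < k0 < n, then x^{k0} divides g(x). -/
/-!
Write `q = p ^ c` and `h = (X - 1) ^ k0 * g`. By the Frobenius identity
`(X - 1) ^ q = X ^ q - 1`, the product `(X - 1) ^ k * g` equals `X ^ q * h - h`. Since `q ≥ p ^ 2`
exceeds `k0 + n > deg h`, its coefficients at `q, …, q + k0 - 1` are those of `h` at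
`0, …, k0 - 1`, and they lie in the vanishing window `(k + n) / 2 ≤ j < k`. Hence `X ^ k0 ∣ h`,
and as `X ^ k0` is coprime to `(X - 1) ^ k0`, `X ^ k0 ∣ g`.
-/

open Polynomial

theorem Nat.add_lt_pow_of_lt_of_lt {p a b c : ℕ} (ha : a < p) (hb : b < p) (hpc : p < p ^ c) :
    a + b < p ^ c := by
  have hp : 1 < p := by
    rcases p with _ | _ | p
    · omega
    · simp at hpc
    · omega
  have hc : 2 ≤ c := (pow_lt_pow_iff_right₀ hp).1 (by simpa using hpc)
  calc a + b < p * p := by nlinarith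
    _ = p ^ 2 := (sq p).symm
    _ ≤ p ^ c := Nat.pow_le_pow_right (by omega) hc

namespace Polynomial

variable {R : Type*}

theorem X_pow_dvd_of_dvd_X_sub_one_pow_mul [CommRing R] {m l : ℕ} {g : R[X]}
    (h : X ^ m ∣ (X - 1) ^ l * g) : X ^ m ∣ g :=
  (IsCoprime.pow (⟨1, -1, by ring⟩ : IsCoprime (X : R[X]) (X - 1))).dvd_of_dvd_mul_left h

theorem coeff_X_pow_sub_one_mul_add [Ring R] {q i : ℕ} {h : R[X]}
    (hdeg : h.natDegree < q + i) : ((X ^ q - 1) * h).coeff (q + i) = h.coeff i := by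
  rw [sub_mul, one_mul, coeff_sub, coeff_X_pow_mul', if_pos (Nat.le_add_right q i),
    Nat.add_sub_cancel_left, coeff_eq_zero_of_natDegree_lt hdeg, sub_zero]

theorem X_pow_dvd_of_coeff_X_pow_sub_one_mul_eq_zero [Ring R] {q m : ℕ} {h : R[X]}
    (hdeg : h.natDegree < q) (hcoeff : ∀ i < m, ((X ^ q - 1) * h).coeff (q + i) = 0) :
    X ^ m ∣ h :=
  X_pow_dvd_iff.2 fun i hi => by
    rw [← coeff_X_pow_sub_one_mul_add (q := q) (i := i) (by omega), hcoeff i hi]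

end Polynomial

theorem polynomial_constraint_case_above_q_general
    (p : ℕ) (hp : p.Prime)
    {F : Type*} [Field F] [CharP F p]
    (n k : ℕ) (hnp : n < p)
    (g : Polynomial F) (hdeg : g.natDegree = n - 1)
    (hcoeff : ∀ j : ℕ, k + n ≤ 2 * j → j < k →
      ((Polynomial.X - 1) ^ k * g).coeff j = 0)
    (c : ℕ) (q : ℕ) (hq : q = p ^ c) (hqp : p < q)
    (k0 : ℕ) (hk0' : k0 < n)
    (hkq : k = q + k0) :
    Polynomial.X ^ k0 ∣ g := by
  have : Fact p.Prime := ⟨hp⟩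
  subst hq hkq
  have hq_large : k0 + n < p ^ c := Nat.add_lt_pow_of_lt_of_lt (hk0'.trans hnp) hnp hqp
  have hfactor : (X - 1 : F[X]) ^ (p ^ c + k0) * g = (X ^ p ^ c - 1) * ((X - 1) ^ k0 * g) := by
    rw [pow_add, sub_pow_char_pow, one_pow, mul_assoc]
  have hdeg_h : ((X - 1 : F[X]) ^ k0 * g).natDegree < p ^ c :=
    calc _ ≤ k0 * 1 + g.natDegree :=
          natDegree_mul_le.trans (add_le_add_left (natDegree_pow_le_of_le k0
            (by simpa using natDegree_X_sub_C_le (1 : F))) _)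
      _ < p ^ c := by omega
  refine X_pow_dvd_of_dvd_X_sub_one_pow_mul
    (X_pow_dvd_of_coeff_X_pow_sub_one_mul_eq_zero hdeg_h fun i hi => ?_)
  rw [← hfactor]
  exact hcoeff _ (by omega) (by omega)

/-- **Theorem (polynomial result, assertion (e)).**
Let `F` have prime characteristic `p`, `1 < n < p`, `k > n + 1`, and let
`g ∈ F[x]` be monic of degree `n − 1` with `[x^j] (x−1)^k g(x) = 0` for
`(k+n)/2 ≤ j < k`.  If `k = q + k0` for some power `q = p^c` of `p` with
`q > p` and some `k0` with `0 < k0 < n`, then `x^{k0}` divides `g`. -/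
theorem polynomial_constraint_case_above_q
    (p : ℕ) (hp : p.Prime)
    {F : Type*} [Field F] [CharP F p]
    (n k : ℕ) (hn1 : 1 < n) (hnp : n < p) (hk : n + 1 < k)
    (g : Polynomial F) (hmonic : g.Monic) (hdeg : g.natDegree = n - 1)
    (hcoeff : ∀ j : ℕ, k + n ≤ 2 * j → j < k →
      ((Polynomial.X - 1) ^ k * g).coeff j = 0)
    (c : ℕ) (q : ℕ) (hq : q = p ^ c) (hqp : p < q)
    (k0 : ℕ) (hk0 : 0 < k0) (hk0' : k0 < n)
    (hkq : k = q + k0) :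
    Polynomial.X ^ k0 ∣ g :=
  polynomial_constraint_case_above_q_general p hp n k hnp g hdeg hcoeff c q hq hqp k0 hk0' hkq
end

section
/- Let F be a field of prime characteristic p, let a ∈ F, and let k > 1 be a natural number. Suppose that the coefficient of x^j in (x−1)^k (x−a) ∈ F[x] is zero for every integer j with k/2 + 1 ≤ j ≤ k (equivalently, k + 2 ≤ 2j ≤ 2k). Then one of the following holds: k = 2 and a = −2; or k = 3 and a = −3; or there is a power q = p^c of p such that (k = q − 1 and a = 1), or (k = q and a = 0), or (k = 2q − 1 and a = 1). -/
/-!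
Vanishing of the coefficient of `x^(k-i)` in `(x - 1)^k (x - a)` says `C(k, i+1) = -a C(k, i)`,
so the hypothesis forces `a = -k` and `C(k, i) = k^i` in `F` for `2i ≤ k`. For `i = 2` this
gives `k (k + 1) = 0`. For `q = p^c ≤ k/2`, Lucas' theorem gives `C(k, q) ≡ ⌊k/q⌋ (mod p)`
while `k^q = k` by Frobenius, so `⌊k/q⌋ ≡ k (mod p)`. Applied to the exact power of `p`
dividing `k` (resp. `k + 1`) this bounds the cofactor by `1` (resp. `2`).
-/

open Polynomial

section Coefficients

variable {R : Type*} [CommRing R]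

theorem coeff_X_sub_one_pow (k j : ℕ) :
    ((X - 1 : R[X]) ^ k).coeff j = (-1) ^ (k - j) * k.choose j := by
  simpa [sub_eq_add_neg] using coeff_X_add_C_pow (-1 : R) k j

theorem choose_succ_eq_of_coeff_X_sub_one_pow_mul_X_sub_C_eq_zero {a : R} {k i : ℕ}
    (hi : i < k) (h : ((X - 1) ^ k * (X - C a)).coeff (k - i) = 0) :
    (k.choose (i + 1) : R) = -a * k.choose i := by
  obtain ⟨j, rfl⟩ : ∃ j, k = j + i + 1 := ⟨k - i - 1, by omega⟩
  rw [show j + i + 1 - i = j + 1 by omega, coeff_mul_X_sub_C, coeff_X_sub_one_pow,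
    coeff_X_sub_one_pow, show j + i + 1 - j = i + 1 by omega,
    show j + i + 1 - (j + 1) = i by omega,
    Nat.choose_symm_of_eq_add (by omega : j + i + 1 = j + (i + 1)),
    Nat.choose_symm_of_eq_add (by omega : j + i + 1 = (j + 1) + i)] at h
  have h' : (-1) ^ i * -((j + i + 1).choose (i + 1) + a * (j + i + 1).choose i : R) = 0 := by
    linear_combination h
  rw [neg_one_pow_mul_eq_zero_iff, neg_eq_zero] at h'
  linear_combination h'

theorem choose_eq_pow_of_coeff_X_sub_one_pow_mul_X_sub_C_eq_zero {a : R} {k : ℕ} (hk : 1 < k)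
    (hcoeff : ∀ j : ℕ, k + 2 ≤ 2 * j → j ≤ k → ((X - 1) ^ k * (X - C a)).coeff j = 0) :
    a = -k ∧ ∀ i, 2 * i ≤ k → (k.choose i : R) = (k : R) ^ i := by
  have hrec (i : ℕ) (hi : 2 * (i + 1) ≤ k) : (k.choose (i + 1) : R) = -a * k.choose i :=
    choose_succ_eq_of_coeff_X_sub_one_pow_mul_X_sub_C_eq_zero (by omega)
      (hcoeff _ (by omega) (by omega))
  have ha : a = -k := by
    have h₀ := hrec 0 (by omega)
    rw [Nat.choose_one_right, Nat.choose_zero_right, Nat.cast_one, mul_one] at h₀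
    linear_combination h₀
  refine ⟨ha, fun i hi => ?_⟩
  induction i with
  | zero => simp
  | succ i ih => rw [hrec i hi, ih (by omega), ha, neg_neg, pow_succ, mul_comm]

theorem natCast_mul_natCast_add_one_eq_zero_of_choose_two {k : ℕ}
    (h : (k.choose 2 : R) = (k : R) ^ 2) : (k : R) * (k + 1) = 0 := by
  have e : k.choose 2 * 2 + k = k * k := by
    rw [Nat.choose_two_right, Nat.div_two_mul_two_of_even (Nat.even_mul_pred_self k)]
    cases k <;> simp [Nat.mul_succ]
  have e' := congrArg (Nat.cast : ℕ → R) e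
  push_cast at e'
  linear_combination e' - 2 * h

end Coefficients

theorem Nat.choose_prime_pow_modEq_div (p : ℕ) [Fact p.Prime] (n c : ℕ) :
    n.choose (p ^ c) ≡ n / p ^ c [MOD p] := by
  induction c generalizing n with
  | zero => simpa using Nat.ModEq.refl n
  | succ c ih =>
    have hp := (Fact.out : p.Prime).pos
    refine Choose.choose_modEq_choose_mod_mul_choose_div_nat.trans ?_
    rw [pow_succ', Nat.mul_mod_right, Nat.choose_zero_right, one_mul,
      Nat.mul_div_cancel_left _ hp, ← Nat.div_div_eq_div_mul]
    exact ih _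

section CharP

variable {R : Type*} (p : ℕ)

theorem natCast_pow_char_pow [CommSemiring R] [ExpChar R p] (n c : ℕ) :
    (n : R) ^ p ^ c = n :=
  map_natCast (iterateFrobenius R p c) n

theorem natCast_choose_prime_pow [AddGroupWithOne R] [CharP R p] [Fact p.Prime] (n c : ℕ) :
    (n.choose (p ^ c) : R) = (n / p ^ c : ℕ) :=
  (CharP.natCast_eq_natCast R p).mpr (Nat.choose_prime_pow_modEq_div p n c)

variable [AddGroupWithOne R] [CharP R p] {p} {k : ℕ}

theorem exists_eq_prime_pow_of_natCast_eq_zero (hp : p.Prime) (hk : k ≠ 0) (hk0 : (k : R) = 0)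
    (hdiv : ∀ c, 2 * p ^ c ≤ k → ((k / p ^ c : ℕ) : R) = k) : ∃ c, k = p ^ c := by
  obtain ⟨c, u, hu, rfl⟩ := Nat.exists_eq_pow_mul_and_not_dvd hk p hp.ne_one
  refine ⟨c, ?_⟩
  have hu0 : u ≠ 0 := by rintro rfl; simp at hk
  obtain rfl | hu2 : u = 1 ∨ 2 ≤ u := by omega
  · exact mul_one _
  have h := hdiv c (by rw [mul_comm]; exact Nat.mul_le_mul_left _ hu2)
  rw [Nat.mul_div_cancel_left _ (pow_pos hp.pos c), hk0] at h
  exact absurd ((CharP.cast_eq_zero_iff R p u).mp h) hu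

theorem exists_succ_eq_prime_pow_or_two_mul_of_natCast_eq_neg_one (hp : p.Prime)
    (hk1 : (k : R) = -1) (hdiv : ∀ c, 2 * p ^ c ≤ k → ((k / p ^ c : ℕ) : R) = k) :
    ∃ c, k + 1 = p ^ c ∨ k + 1 = 2 * p ^ c := by
  obtain ⟨c, v, hv, hkv⟩ := Nat.exists_eq_pow_mul_and_not_dvd k.succ_ne_zero p hp.ne_one
  refine ⟨c, ?_⟩
  have hv0 : v ≠ 0 := by rintro rfl; simp at hkv
  obtain rfl | rfl | hv3 : v = 1 ∨ v = 2 ∨ 3 ≤ v := by omega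
  · exact Or.inl (hkv.trans (mul_one _))
  · exact Or.inr (hkv.trans (mul_comm _ _))
  have hq := pow_pos hp.pos c
  have hk_div : k / p ^ c = v - 1 :=
    Nat.div_eq_of_lt_le (by rw [Nat.sub_mul, one_mul, mul_comm]; omega)
      (by rw [Nat.sub_add_cancel (by omega), mul_comm]; omega)
  have h := hdiv c (by nlinarith)
  rw [hk_div, Nat.cast_sub (by omega), hk1, Nat.cast_one, sub_eq_neg_self] at h
  exact absurd ((CharP.cast_eq_zero_iff R p v).mp h) hv

end CharP

/-- **Lemma (on `(x−1)^k (x−a)`, first variant).**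
Let `F` have prime characteristic `p`, `a ∈ F`, `k > 1`, and suppose
`[x^j] (x−1)^k (x−a) = 0` for all `j` with `k/2 + 1 ≤ j ≤ k` (that is,
`k + 2 ≤ 2j` and `j ≤ k`).  Then `(k, a)` is one of `(2, −2)`, `(3, −3)`,
`(q−1, 1)`, `(q, 0)`, `(2q−1, 1)` for a power `q = p^c` of `p`. -/
theorem vanishing_coeffs_linear_factor
    (p : ℕ) (hp : p.Prime)
    {F : Type*} [Field F] [CharP F p]
    (a : F) (k : ℕ) (hk : 1 < k)
    (hcoeff : ∀ j : ℕ, k + 2 ≤ 2 * j → j ≤ k →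
      ((Polynomial.X - 1) ^ k * (Polynomial.X - Polynomial.C a)).coeff j = 0) :
    (k = 2 ∧ a = -2) ∨ (k = 3 ∧ a = -3) ∨
      ∃ c : ℕ, (k = p ^ c - 1 ∧ a = 1) ∨ (k = p ^ c ∧ a = 0) ∨
        (k = 2 * p ^ c - 1 ∧ a = 1) := by
  have := Fact.mk hp
  obtain ⟨rfl, hchoose⟩ := choose_eq_pow_of_coeff_X_sub_one_pow_mul_X_sub_C_eq_zero hk hcoeff
  rcases (by omega : k = 2 ∨ k = 3 ∨ 4 ≤ k) with rfl | rfl | hk4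
  · left; norm_num
  · right; left; norm_num
  have hdiv (c : ℕ) (hc : 2 * p ^ c ≤ k) : ((k / p ^ c : ℕ) : F) = k := by
    rw [← natCast_choose_prime_pow, hchoose _ hc, natCast_pow_char_pow]
  right; right
  rcases mul_eq_zero.mp
    (natCast_mul_natCast_add_one_eq_zero_of_choose_two (hchoose 2 (by omega))) with hK | hK
  · obtain ⟨c, rfl⟩ := exists_eq_prime_pow_of_natCast_eq_zero hp (by omega) hK hdiv
    exact ⟨c, Or.inr (Or.inl ⟨rfl, by rw [hK, neg_zero]⟩)⟩
  · have hK : (k : F) = -1 := eq_neg_of_add_eq_zero_left hK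
    obtain ⟨c, hc | hc⟩ := exists_succ_eq_prime_pow_or_two_mul_of_natCast_eq_neg_one hp hK hdiv
    · exact ⟨c, Or.inl ⟨by omega, by rw [hK, neg_neg]⟩⟩
    · exact ⟨c, Or.inr (Or.inr ⟨by omega, by rw [hK, neg_neg]⟩)⟩
end

section
/- Let F be a field of prime characteristic p, let a ∈ F, and let k > 1 be a natural number. Suppose that the coefficient of x^j in (x−1)^k (x−a) ∈ F[x] is zero for every integer j with (k+1)/2 ≤ j ≤ k (equivalently, k + 1 ≤ 2j ≤ 2k). Then one of the following holds: k = 2 and a = −2; or there is a power q = p^c of p such that (k = q − 1 and a = 1) or (k = q and a = 0). -/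
/-!
Comparing coefficients of `x^(k-i)` gives `C(k,i+1) + a C(k,i) = 0` for `2i < k`; at `i = 0` this
says `a = -k`, and then `C(k,i) = k^i` in `F` whenever `2i ≤ k + 1`. If `k = 0` in `F`, the
coefficients `C(k,i)` with `0 < i < k` all vanish mod `p` (the upper half by symmetry), which by
Lucas's theorem forces `k` to be a power of `p`. Otherwise `C(k,2) = k^2` forces `k = -1` in `F`,
so `C(k,i) = (-1)^i`, and by Pascal's rule row `k + 1` vanishes mod `p`: `k + 1` is a power of `p`.
-/

open Polynomial

theorem Polynomial.coeff_X_sub_one_pow_mul_X_sub_C {R : Type*} [CommRing R] (a : R) {k i : ℕ}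
    (hi : i < k) :
    ((X - 1) ^ k * (X - C a)).coeff (k - i) =
      (-1) ^ (i + 1) * (k.choose (i + 1) + a * k.choose i) := by
  have hX : (X - 1 : R[X]) = X + C (-1) := by rw [C_neg, C_1, ← sub_eq_add_neg]
  obtain ⟨j, rfl⟩ : ∃ j, k = j + i + 1 := ⟨k - i - 1, by omega⟩
  rw [show j + i + 1 - i = j + 1 by omega, coeff_mul_X_sub_C, hX, coeff_X_add_C_pow,
    coeff_X_add_C_pow, show j + i + 1 - j = i + 1 by omega, show j + i + 1 - (j + 1) = i by omega,
    Nat.choose_symm_of_eq_add (show j + i + 1 = j + (i + 1) by omega),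
    Nat.choose_symm_of_eq_add (show j + i + 1 = (j + 1) + i by omega), pow_succ]
  ring

section VanishingCoeffs

variable {R : Type*} [CommRing R] {a : R} {k : ℕ}
  (hcoeff : ∀ j : ℕ, k + 1 ≤ 2 * j → j ≤ k → ((X - 1) ^ k * (X - C a)).coeff j = 0)
include hcoeff

theorem choose_succ_add_mul_choose_eq_zero {i : ℕ} (hi : 2 * i + 1 ≤ k) :
    (k.choose (i + 1) : R) + a * k.choose i = 0 := by
  have h := hcoeff (k - i) (by omega) (by omega)
  rw [coeff_X_sub_one_pow_mul_X_sub_C a (by omega)] at h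
  exact ((isUnit_neg_one.pow _).mul_right_eq_zero).mp h

theorem eq_neg_natCast_of_coeff_eq_zero (hk : 1 ≤ k) : a = -k := by
  have h := choose_succ_add_mul_choose_eq_zero hcoeff (i := 0) (by omega)
  rw [Nat.choose_one_right, Nat.choose_zero_right, Nat.cast_one, mul_one] at h
  linear_combination h

theorem choose_eq_pow_of_coeff_eq_zero (hk : 1 ≤ k) {i : ℕ} (hi : 2 * i ≤ k + 1) :
    (k.choose i : R) = (k : R) ^ i := by
  induction i with
  | zero => simp
  | succ i ih =>
    have h := choose_succ_add_mul_choose_eq_zero hcoeff (i := i) (by omega)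
    rw [eq_neg_natCast_of_coeff_eq_zero hcoeff hk, ih (by omega)] at h
    linear_combination h

end VanishingCoeffs

section CharP

variable {R : Type*} [Ring R] (p : ℕ) [CharP R p] [Fact p.Prime]

theorem exists_eq_pow_of_choose_eq_zero {n : ℕ} (hn : 0 < n)
    (h : ∀ i, 0 < i → 2 * i ≤ n → (n.choose i : R) = 0) : ∃ c, n = p ^ c := by
  refine ⟨_, Choose.eq_pow_multiplicity_of_choose_modEq_zero_nat hn fun i hi => ?_⟩
  rw [Finset.mem_Icc] at hi
  rw [← CharP.natCast_eq_natCast R p, Nat.cast_zero]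
  rcases le_total (2 * i) n with hi' | hi'
  · exact h i (by omega) hi'
  · rw [← Nat.choose_symm (by omega)]
    exact h (n - i) (by omega) (by omega)

theorem exists_add_one_eq_pow_of_choose_eq_neg_one_pow {k : ℕ}
    (h : ∀ i, 2 * i ≤ k + 1 → (k.choose i : R) = (-1) ^ i) : ∃ c, k + 1 = p ^ c := by
  refine exists_eq_pow_of_choose_eq_zero (R := R) p k.succ_pos fun i hi hik => ?_
  obtain ⟨i, rfl⟩ : ∃ j, i = j + 1 := ⟨i - 1, by omega⟩
  rw [Nat.choose_succ_succ', Nat.cast_add, h i (by omega), h (i + 1) hik, pow_succ, mul_neg_one,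
    add_neg_cancel]

end CharP

theorem natCast_eq_neg_one_of_choose_two_eq_sq {R : Type*} [CommRing R] [IsDomain R] {k : ℕ}
    (hk : 1 ≤ k) (h : (k.choose 2 : R) = (k : R) ^ 2) (hk0 : (k : R) ≠ 0) : (k : R) = -1 := by
  have h2 := congrArg (Nat.cast : ℕ → R) (Nat.choose_succ_right_eq k 1)
  push_cast [Nat.choose_one_right, Nat.cast_sub hk, h] at h2
  have : (k : R) * (k + 1) = 0 := by linear_combination h2
  exact eq_neg_of_add_eq_zero_left ((mul_eq_zero.mp this).resolve_left hk0)

theorem eq_pow_or_add_one_eq_pow_of_choose_eq_pow {F : Type*} [Field F]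
    (p : ℕ) [CharP F p] [Fact p.Prime] {k : ℕ} (hk : 3 ≤ k)
    (h : ∀ i, 2 * i ≤ k + 1 → (k.choose i : F) = (k : F) ^ i) :
    ((k : F) = 0 ∧ ∃ c, k = p ^ c) ∨ ((k : F) = -1 ∧ ∃ c, k + 1 = p ^ c) := by
  by_cases hk0 : (k : F) = 0
  · refine .inl ⟨hk0, exists_eq_pow_of_choose_eq_zero (R := F) p (by omega) fun i hi hik => ?_⟩
    rw [h i (by omega), hk0, zero_pow hi.ne']
  · have hk1 := natCast_eq_neg_one_of_choose_two_eq_sq (by omega) (h 2 (by omega)) hk0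
    refine .inr ⟨hk1, exists_add_one_eq_pow_of_choose_eq_neg_one_pow (R := F) p fun i hi => ?_⟩
    rw [h i hi, hk1]

/-- **Lemma (on `(x−1)^k (x−a)`, second variant).**
Let `F` have prime characteristic `p`, `a ∈ F`, `k > 1`, and suppose
`[x^j] (x−1)^k (x−a) = 0` for all `j` with `(k+1)/2 ≤ j ≤ k` (that is,
`k + 1 ≤ 2j` and `j ≤ k`).  Then `(k, a)` is one of `(2, −2)`,
`(q−1, 1)`, `(q, 0)` for a power `q = p^c` of `p`. -/
theorem vanishing_coeffs_linear_factor_strong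
    (p : ℕ) (hp : p.Prime)
    {F : Type*} [Field F] [CharP F p]
    (a : F) (k : ℕ) (hk : 1 < k)
    (hcoeff : ∀ j : ℕ, k + 1 ≤ 2 * j → j ≤ k →
      ((Polynomial.X - 1) ^ k * (Polynomial.X - Polynomial.C a)).coeff j = 0) :
    (k = 2 ∧ a = -2) ∨
      ∃ c : ℕ, (k = p ^ c - 1 ∧ a = 1) ∨ (k = p ^ c ∧ a = 0) := by
  have : Fact p.Prime := ⟨hp⟩
  have ha := eq_neg_natCast_of_coeff_eq_zero hcoeff hk.le
  rcases (show k = 2 ∨ 3 ≤ k by omega) with rfl | hk3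
  · exact .inl ⟨rfl, by rw [ha, Nat.cast_ofNat]⟩
  right
  rcases eq_pow_or_add_one_eq_pow_of_choose_eq_pow p hk3
      fun i hi => choose_eq_pow_of_coeff_eq_zero hcoeff hk.le hi with
    ⟨hk0, c, hc⟩ | ⟨hk1, c, hc⟩
  · exact ⟨c, .inr ⟨hc, by rw [ha, hk0, neg_zero]⟩⟩
  · exact ⟨c, .inl ⟨by omega, by rw [ha, hk1, neg_neg]⟩⟩
end

section
/- Let p be a prime and let q = p^c be a power of p. Then for all non-negative integers a and b with a < q and b < q, the congruence C(a, q−1−b) ≡ (−1)^{a+b} C(b, q−1−a) (mod p) holds, where C(·,·) denotes the binomial coefficient. -/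
/-!
For `k < p ^ c`, the residue mod `p` of the generalized binomial coefficient `C(r, k)`, `r : ℤ`,
depends only on `r` mod `p ^ c`: by Vandermonde, `C(r + p ^ c, k) = ∑ C(r, i) C(p ^ c, j)`, and
`p ∣ C(p ^ c, j)` for `0 < j < p ^ c`. Hence for `n < p ^ c`, writing `n = -(m + 1) + p ^ c`,
upper negation gives `C(n, k) ≡ (-1) ^ k C(m + k, k)` with `m = p ^ c - 1 - n`. Applied to both
sides of the theorem, this reduces it to `C(x + y, y) = C(x + y, x)` and a parity count.
-/

open Finset

namespace ZMod

theorem intCast_ringChoose_add_prime_pow {p : ℕ} (hp : p.Prime) (r : ℤ) {c k : ℕ}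
    (hk : k < p ^ c) :
    ((Ring.choose (r + (p ^ c : ℕ)) k : ℤ) : ZMod p) = (Ring.choose r k : ℤ) := by
  rw [Ring.add_choose_eq k (Commute.all _ _), Int.cast_sum, sum_eq_single (k, 0)]
  · simp
  · rintro ⟨i, j⟩ hij hne
    have hj : j ≠ 0 := by rintro rfl; simp_all
    have hijk : i + j = k := mem_antidiagonal.1 hij
    rw [Ring.choose_natCast, Int.cast_mul, Int.cast_natCast,
      (ZMod.natCast_eq_zero_iff _ p).2 (hp.dvd_choose_pow hj (by omega)), mul_zero]
  · simp

theorem natCast_choose_eq_neg_one_pow_mul_choose {p : ℕ} (hp : p.Prime) {c n k : ℕ}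
    (hn : n < p ^ c) (hk : k < p ^ c) :
    (n.choose k : ZMod p) = (-1) ^ k * ((p ^ c - 1 - n + k).choose k : ℕ) := by
  set m := p ^ c - 1 - n
  have hnm : (n : ℤ) = -((m + 1 : ℕ) : ℤ) + (p ^ c : ℕ) := by omega
  calc (n.choose k : ZMod p) = ((Ring.choose (n : ℤ) k : ℤ) : ZMod p) := by
        rw [Ring.choose_natCast, Int.cast_natCast]
    _ = ((Ring.choose (-((m + 1 : ℕ) : ℤ)) k : ℤ) : ZMod p) := by
        rw [hnm, intCast_ringChoose_add_prime_pow hp _ hk]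
    _ = (-1) ^ k * ((m + k).choose k : ℕ) := by
        rw [Ring.choose_neg, Units.smul_def, Int.coe_negOnePow_natCast, smul_eq_mul,
          show ((m + 1 : ℕ) : ℤ) + k - 1 = ((m + k : ℕ) : ℤ) by push_cast; ring,
          Ring.choose_natCast]
        push_cast
        ring

end ZMod

/-- **Lemma (symmetry of binomial coefficients modulo `p`).**
Let `p` be a prime and `q = p^c` a power of `p`.  For all `a, b < q` we have
`C(a, q−1−b) ≡ (−1)^{a+b} C(b, q−1−a) (mod p)`. -/
theorem choose_symmetry_mod_p
    (p : ℕ) (hp : p.Prime) (c : ℕ) (q : ℕ) (hq : q = p ^ c)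
    (a b : ℕ) (ha : a < q) (hb : b < q) :
    (Nat.choose a (q - 1 - b) : ZMod p) =
      (-1 : ZMod p) ^ (a + b) * (Nat.choose b (q - 1 - a) : ZMod p) := by
  subst hq
  rw [ZMod.natCast_choose_eq_neg_one_pow_mul_choose hp ha (by omega : p ^ c - 1 - b < p ^ c),
    ZMod.natCast_choose_eq_neg_one_pow_mul_choose hp hb (by omega : p ^ c - 1 - a < p ^ c),
    ← Nat.choose_symm_add, add_comm (p ^ c - 1 - b), ← mul_assoc, ← pow_add]
  have hexp : a + b + (p ^ c - 1 - a) = p ^ c - 1 - b + 2 * b := by omega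
  rw [hexp, pow_add, pow_mul, neg_one_sq, one_pow, mul_one]
end

section
/- Let p be an odd prime, q = p^c a power of p, t a positive odd integer with q − 2p < t < q − 1 and t ≠ q − p (so that u := (q−t)/2 is a positive integer less than p and t is invertible modulo p), and let s be an integer with 2 ≤ s < p. Set N = 2⌊s/2⌋ − 1. Then for elements γ_0, γ_1, …, γ_N of the field with p elements, the following two conditions are equivalent: (i) Σ_{g=0}^{2j+1} (−1)^g C(t+2j, g) γ_{2j+1−g} = −γ_{2j+1} for every j with 0 ≤ 2j ≤ s−2, and Σ_{g=0}^{2j} (−1)^g C(t+2j, g) γ_{2j−g} = (1 + 4j·t^{−1}) γ_{2j} for every j with 0 < 2j ≤ s−2; (ii) γ_i = (−1)^i C(u, i) γ_0 for every i with 0 ≤ i ≤ N. -/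
/-!
Write `q - t = 2u`, so `t ≡ -2u (mod p)` with `0 < u < p`. The system is triangular: moving `γ_n`
to the left, the equation of index `n` has leading coefficient `2` (odd `n`) or `-4j/t` (even
`n = 2j`), both units, so a solution is determined by `γ_0`, and it suffices to check that
`δ_i = (-1)^i C(u, i)` is one. By Vandermonde the left-hand side for `δ` is
`(-1)^n C(t + 2j + u, n)`, and `t + 2j + u ≡ 2j - u (mod p)`. As `n < p`, `C(·, n)` mod `p` is the
falling factorial divided by `n!`, whose reflection `x ↦ n - 1 - x` gives
`C(t + 2j + u, 2j + 1) ≡ -C(u, 2j + 1)` and `C(t + 2j + u, 2j) ≡ C(u - 1, 2j) = (1 - 2j/u) C(u, 2j)`.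
-/

open Finset Nat

-- The reflection `x ↦ n - 1 - x` of the falling factorial `n! C(x, n)`.
theorem factorial_mul_cast_choose_of_cast_add_eq {R : Type*} [CommRing R] {m k n : ℕ}
    (h : (m : R) + k + 1 = n) :
    (n ! : R) * m.choose n = (-1) ^ n * (n ! * k.choose n) := by
  have hm : (m : R) = n - k - 1 := by linear_combination h
  rw [← cast_mul, ← cast_mul, ← descFactorial_eq_factorial_mul_choose,
    ← descFactorial_eq_factorial_mul_choose, ← descPochhammer_eval_eq_descFactorial,
    ← descPochhammer_eval_eq_descFactorial, hm, descPochhammer_eval_eq_ascPochhammer,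
    show (n : R) - k - 1 - n + 1 = -k by ring, ascPochhammer_eval_neg_eq_descPochhammer]

theorem cast_choose_of_cast_add_eq {K : Type*} [CommRing K] [IsDomain K] {p : ℕ} [CharP K p]
    (hp : p.Prime) {m k n : ℕ} (hn : n < p) (h : (m : K) + k + 1 = n) :
    (m.choose n : K) = (-1) ^ n * k.choose n := by
  have hfac : (n ! : K) ≠ 0 := by
    rw [Ne, CharP.cast_eq_zero_iff K p, hp.dvd_factorial]
    omega
  apply mul_left_cancel₀ hfac
  rw [factorial_mul_cast_choose_of_cast_add_eq h]
  ring

theorem sum_neg_one_pow_choose_mul_neg_one_pow_choose {R : Type*} [CommRing R] (a u n : ℕ)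
    (x : R) :
    ∑ g ∈ range (n + 1),
        (-1) ^ g * (a.choose g : R) * ((-1) ^ (n - g) * (u.choose (n - g) : R) * x) =
      (-1) ^ n * ((a + u).choose n : R) * x := by
  rw [Nat.add_choose_eq, Finset.Nat.sum_antidiagonal_eq_sum_range_succ_mk, cast_sum,
    mul_sum, sum_mul]
  refine sum_congr rfl fun g hg => ?_
  rw [show n = g + (n - g) from (Nat.add_sub_of_le (mem_range_succ_iff.1 hg)).symm]
  simp only [Nat.add_sub_cancel_left, pow_add, cast_mul]
  ring

theorem cast_succ_mul_choose {R : Type*} [CommRing R] (k n : ℕ) :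
    ((k + 1 : ℕ) : R) * k.choose n = ((k : R) + 1 - n) * (k + 1).choose n := by
  rcases le_or_gt n (k + 1) with hn | hn
  · have h := congrArg (Nat.cast : ℕ → R) (Nat.choose_mul_succ_eq k n)
    push_cast [Nat.cast_sub hn] at h ⊢
    linear_combination h
  · rw [Nat.choose_eq_zero_of_lt hn, Nat.choose_eq_zero_of_lt (by omega)]
    simp

theorem eq_of_sum_range_succ_eq {R : Type*} [CommRing R] [IsDomain R] {n : ℕ} {e : ℕ → R}
    {c : R} {γ δ : ℕ → R} (hc : e 0 ≠ c)
    (hγ : ∑ g ∈ range (n + 1), e g * γ (n - g) = c * γ n)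
    (hδ : ∑ g ∈ range (n + 1), e g * δ (n - g) = c * δ n)
    (hlt : ∀ i < n, γ i = δ i) : γ n = δ n := by
  rw [sum_range_succ'] at hγ hδ
  have hlower : ∑ g ∈ range n, e (g + 1) * γ (n - (g + 1)) =
      ∑ g ∈ range n, e (g + 1) * δ (n - (g + 1)) :=
    sum_congr rfl fun g hg => by rw [hlt _ (by have := mem_range.1 hg; omega)]
  apply mul_left_cancel₀ (sub_ne_zero.2 hc)
  linear_combination hγ - hδ - hlower

section LinearSystem

variable {K : Type*} [Field K] {p : ℕ} [CharP K p] {t u : ℕ}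

def LinearSystem (t s : ℕ) (γ : ℕ → K) : Prop :=
  (∀ j : ℕ, 2 * j + 2 ≤ s →
      ∑ g ∈ range (2 * j + 2), (-1 : K) ^ g * ((t + 2 * j).choose g : K) * γ (2 * j + 1 - g) =
        -γ (2 * j + 1)) ∧
    (∀ j : ℕ, 0 < j → 2 * j + 2 ≤ s →
      ∑ g ∈ range (2 * j + 1), (-1 : K) ^ g * ((t + 2 * j).choose g : K) * γ (2 * j - g) =
        (1 + ((4 * j : ℕ) : K) * (t : K)⁻¹) * γ (2 * j))

theorem odd_equation_of_binomial (hp : p.Prime) (htu : (t : K) + 2 * u = 0) {j : ℕ}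
    (hj : 2 * j + 1 < p) (x : K) :
    ∑ g ∈ range (2 * j + 2),
        (-1) ^ g * ((t + 2 * j).choose g : K) *
          ((-1) ^ (2 * j + 1 - g) * (u.choose (2 * j + 1 - g) : K) * x) =
      -((-1) ^ (2 * j + 1) * (u.choose (2 * j + 1) : K) * x) := by
  have hchoose := cast_choose_of_cast_add_eq (K := K) hp hj
    (m := t + 2 * j + u) (k := u) (by push_cast; linear_combination htu)
  rw [sum_neg_one_pow_choose_mul_neg_one_pow_choose, hchoose,
    (Odd.neg_one_pow ⟨j, rfl⟩ : (-1 : K) ^ (2 * j + 1) = -1)]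
  ring

theorem even_equation_of_binomial (hp : p.Prime) (htu : (t : K) + 2 * u = 0) (ht : (t : K) ≠ 0)
    {j : ℕ} (hj : 2 * j < p) (x : K) :
    ∑ g ∈ range (2 * j + 1),
        (-1) ^ g * ((t + 2 * j).choose g : K) *
          ((-1) ^ (2 * j - g) * (u.choose (2 * j - g) : K) * x) =
      (1 + ((4 * j : ℕ) : K) * (t : K)⁻¹) * ((-1) ^ (2 * j) * (u.choose (2 * j) : K) * x) := by
  obtain ⟨k, rfl⟩ : ∃ k, u = k + 1 :=
    Nat.exists_eq_succ_of_ne_zero fun hu => ht (by simpa [hu] using htu)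
  have hchoose := cast_choose_of_cast_add_eq (K := K) hp hj
    (m := t + 2 * j + (k + 1)) (k := k) (by push_cast at htu ⊢; linear_combination htu)
  have hpred := cast_succ_mul_choose (R := K) k (2 * j)
  rw [sum_neg_one_pow_choose_mul_neg_one_pow_choose, hchoose,
    (Even.neg_one_pow ⟨j, two_mul j⟩ : (-1 : K) ^ (2 * j) = 1)]
  field_simp
  push_cast at htu hpred ⊢
  linear_combination (-2 * x) * hpred +
    x * ((k.choose (2 * j) : K) - ((k + 1).choose (2 * j) : K)) * htu

theorem linearSystem_iff (hp : p.Prime) (htu : (t : K) + 2 * u = 0) (ht : (t : K) ≠ 0) {s : ℕ}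
    (hsp : s < p) (γ : ℕ → K) :
    LinearSystem t s γ ↔
      ∀ i ≤ 2 * (s / 2) - 1, γ i = (-1) ^ i * (u.choose i : K) * γ 0 := by
  have h2 : (2 : K) ≠ 0 := fun h2 => ht (by linear_combination htu - u * h2)
  constructor
  · rintro ⟨hγodd, hγeven⟩ i hi
    induction i using Nat.strong_induction_on with | _ i IH => ?_
    have hIH (i' : ℕ) (hi' : i' < i) := IH i' hi' (by omega)
    obtain ⟨j, rfl | rfl⟩ := Nat.even_or_odd' i
    · rcases Nat.eq_zero_or_pos j with rfl | hj
      · simp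
      have h2j : ((2 * j : ℕ) : K) ≠ 0 := by
        rw [Ne, CharP.cast_eq_zero_iff K p]
        exact Nat.not_dvd_of_pos_of_lt (by omega) (by omega)
      have h4j : ((4 * j : ℕ) : K) ≠ 0 := by
        rw [show 4 * j = 2 * (2 * j) by ring, Nat.cast_mul, Nat.cast_two]
        exact mul_ne_zero h2 h2j
      refine eq_of_sum_range_succ_eq (e := fun g => (-1) ^ g * ((t + 2 * j).choose g : K))
        ?_ (hγeven j hj (by omega)) (even_equation_of_binomial hp htu ht (by omega) (γ 0)) hIH
      simpa using mul_ne_zero h4j (inv_ne_zero ht)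
    · refine eq_of_sum_range_succ_eq (e := fun g => (-1) ^ g * ((t + 2 * j).choose g : K))
        (c := -1) ?_ (by rw [neg_one_mul]; exact hγodd j (by omega))
        (by rw [neg_one_mul]; exact odd_equation_of_binomial hp htu (by omega) (γ 0)) hIH
      simpa [eq_neg_iff_add_eq_zero, one_add_one_eq_two] using h2
  · intro h
    refine ⟨fun j hj => ?_, fun j hj0 hj => ?_⟩
    · rw [sum_congr rfl fun g _ => by rw [h (2 * j + 1 - g) (by omega)],
        h (2 * j + 1) (by omega)]
      exact odd_equation_of_binomial hp htu (by omega) (γ 0)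
    · rw [sum_congr rfl fun g _ => by rw [h (2 * j - g) (by omega)], h (2 * j) (by omega)]
      exact even_equation_of_binomial hp htu ht (by omega) (γ 0)

end LinearSystem

theorem linear_system_equivalence_general
    (p : ℕ) (hp : p.Prime) (hodd : Odd p)
    (c : ℕ) (q : ℕ) (hq : q = p ^ c)
    (t : ℕ) (htodd : Odd t)
    (htlow : (q : ℤ) - 2 * p < (t : ℤ)) (hthigh : t < q - 1)
    (s : ℕ) (hsp : s < p)
    (γ : ℕ → ZMod p) :
    ((∀ j : ℕ, 2 * j + 2 ≤ s →
        ∑ g ∈ Finset.range (2 * j + 2),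
          (-1 : ZMod p) ^ g * ((t + 2 * j).choose g : ZMod p) * γ (2 * j + 1 - g) =
          -γ (2 * j + 1)) ∧
      (∀ j : ℕ, 0 < j → 2 * j + 2 ≤ s →
        ∑ g ∈ Finset.range (2 * j + 1),
          (-1 : ZMod p) ^ g * ((t + 2 * j).choose g : ZMod p) * γ (2 * j - g) =
          (1 + ((4 * j : ℕ) : ZMod p) * (t : ZMod p)⁻¹) * γ (2 * j))) ↔
      (∀ i : ℕ, i ≤ 2 * (s / 2) - 1 →
        γ i = (-1 : ZMod p) ^ i * (((q - t) / 2).choose i : ZMod p) * γ 0) := by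
  have : Fact p.Prime := ⟨hp⟩
  have hc : c ≠ 0 := by rintro rfl; simp [hq] at hthigh
  obtain ⟨u, hu⟩ := Nat.Odd.sub_odd (hq ▸ hodd.pow) htodd
  rw [show (q - t) / 2 = u by omega]
  have htu : (t : ZMod p) + 2 * u = 0 := by
    have hpq : p ∣ t + 2 * u := by rw [show t + 2 * u = q by omega, hq]; exact dvd_pow_self p hc
    exact_mod_cast (ZMod.natCast_eq_zero_iff _ _).2 hpq
  have ht : (t : ZMod p) ≠ 0 := by
    have h2 : ((2 : ℕ) : ZMod p) ≠ 0 :=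
      CharP.cast_ne_zero_of_ne_of_prime _ Nat.prime_two
        (by rintro rfl; exact absurd hodd (by decide))
    have hu0 : (u : ZMod p) ≠ 0 := by
      rw [Ne, ZMod.natCast_eq_zero_iff]
      exact Nat.not_dvd_of_pos_of_lt (by omega) (by omega)
    rw [eq_neg_of_add_eq_zero_left htu, neg_ne_zero]
    exact mul_ne_zero (by exact_mod_cast h2) hu0
  exact linearSystem_iff hp htu ht hsp γ

/-- **Lemma (the linear system).**
Let `p` be an odd prime, `q = p^c`, `t` a positive odd integer with
`q − 2p < t < q − 1` and `t ≠ q − p`, and `2 ≤ s < p`; set `N = 2⌊s/2⌋ − 1`.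
For `γ_0, …, γ_N` in the field with `p` elements, the system
`Σ_{g=0}^{2j+1} (−1)^g C(t+2j, g) γ_{2j+1−g} = −γ_{2j+1}` (for `0 ≤ 2j ≤ s−2`) and
`Σ_{g=0}^{2j} (−1)^g C(t+2j, g) γ_{2j−g} = (1 + 4j·t⁻¹) γ_{2j}` (for `0 < 2j ≤ s−2`)
is equivalent to `γ_i = (−1)^i C((q−t)/2, i) γ_0` for `0 ≤ i ≤ N`. -/
theorem linear_system_equivalence
    (p : ℕ) (hp : p.Prime) (hodd : Odd p)
    (c : ℕ) (q : ℕ) (hq : q = p ^ c)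
    (t : ℕ) (htpos : 0 < t) (htodd : Odd t)
    (htlow : (q : ℤ) - 2 * p < (t : ℤ)) (hthigh : t < q - 1)
    (htne : (t : ℤ) ≠ (q : ℤ) - p)
    (s : ℕ) (hs2 : 2 ≤ s) (hsp : s < p)
    (γ : ℕ → ZMod p) :
    ((∀ j : ℕ, 2 * j + 2 ≤ s →
        ∑ g ∈ Finset.range (2 * j + 2),
          (-1 : ZMod p) ^ g * ((t + 2 * j).choose g : ZMod p) * γ (2 * j + 1 - g) =
          -γ (2 * j + 1)) ∧
      (∀ j : ℕ, 0 < j → 2 * j + 2 ≤ s →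
        ∑ g ∈ Finset.range (2 * j + 1),
          (-1 : ZMod p) ^ g * ((t + 2 * j).choose g : ZMod p) * γ (2 * j - g) =
          (1 + ((4 * j : ℕ) : ZMod p) * (t : ZMod p)⁻¹) * γ (2 * j))) ↔
      (∀ i : ℕ, i ≤ 2 * (s / 2) - 1 →
        γ i = (-1 : ZMod p) ^ i * (((q - t) / 2).choose i : ZMod p) * γ 0) :=
  linear_system_equivalence_general p hp hodd c q hq t htodd htlow hthigh s hsp γ
end

section
/- Let p be an odd prime, F a field of characteristic p, and n an integer with 1 < n < p. Let L be an algebra of type n over F with nonzero sequence (β_i), first constituent length ℓ > 4p with ℓ = q + k0 + n − 1 for a power q = p^c of p and an integer k0 with 2 ≤ k0 ≤ n − 2, and second constituent length ℓ₂ equal to q or q − 1. Let s be an integer with k0 ≤ s ≤ n − 1 such that β_{q+s} ≠ 0 and β_i = 0 for all i with q + s < i < q + k0 + ℓ₂. Then the integer t := k0 + ℓ₂ − s − n + 1 is odd, satisfies q − 2p < t < q − 1, and t ≠ q − p; in particular (q − t)/2 is a positive integer. -/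
/-!
Extend the sequence by `β n = 0`. Induction on `m`, using `e (i + 1) = ⁅e i, z⁆` and the Jacobi
identity, gives `⁅e i, e (n + m)⁆ = (∑ r ≤ m, (-1)^r C(m, r) β (i + r)) • e (i + n + m)`, i.e. the
structure constants are iterated finite differences of `β`. Antisymmetry of `⁅e n, e (ℓ - n + 1)⁆`,
where `β (ℓ - n + 1)` is the first nonzero term, forces `ℓ` to be even. The Jacobi identity for
`e (q + s), e j, e n` with `j = k0 + ℓ₂ - s` involves `C(q + s, r)`, which in characteristic `p`
vanishes for `s < r < q`; what survives says that `s` is even exactly when `β (k0 + ℓ₂) = 0`,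
that is when `ℓ₂ = q - 1`. In both cases `t` is odd, and the bounds are arithmetic.
-/

open Finset

theorem CharP.natCast_choose_prime_pow_add {R : Type*} [Semiring R] {p : ℕ} [CharP R p]
    (hp : p.Prime) {c r : ℕ} (s : ℕ) (hr : r < p ^ c) :
    (((p ^ c + s).choose r : ℕ) : R) = s.choose r := by
  rw [Nat.add_choose_eq, Nat.cast_sum, sum_eq_single ((0 : ℕ), r)]
  · simp
  · rintro ⟨a, b⟩ hab hne
    have ha : a ≠ 0 := by
      rintro rfl
      exact hne (by simp_all)
    have hdvd : p ∣ (p ^ c).choose a := hp.dvd_choose_pow ha (by simp at hab; omega)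
    rw [Nat.cast_mul, (CharP.cast_eq_zero_iff R p _).mpr hdvd, zero_mul]
  · simp

theorem Submodule.eq_span_singleton_of_finrank_eq_one {K V : Type*} [DivisionRing K]
    [AddCommGroup V] [Module K V] {S : Submodule K V} (hS : Module.finrank K S = 1) {v : V}
    (hv : v ∈ S) (hv0 : v ≠ 0) : S = K ∙ v := by
  have : FiniteDimensional K S := .of_finrank_eq_succ hS
  refine (Submodule.eq_of_le_of_finrank_le ((Submodule.span_singleton_le_iff_mem _ _).2 hv)
    ?_).symm
  rw [hS, finrank_span_singleton hv0]

theorem lie_ne_zero_of_finrank_eq_one {F L : Type*} [Field F] [LieRing L] [LieAlgebra F L]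
    {S T : Submodule F L} (hS : Module.finrank F S = 1) (hT : Module.finrank F T = 1)
    (hST : Submodule.span F {w | ∃ x ∈ S, ∃ u ∈ T, w = ⁅x, u⁆} ≠ ⊥)
    {x u : L} (hx : x ∈ S) (hx0 : x ≠ 0) (hu : u ∈ T) (hu0 : u ≠ 0) : ⁅x, u⁆ ≠ 0 := by
  intro hxu
  refine hST (Submodule.span_eq_bot.2 ?_)
  rintro _ ⟨y, hy, v, hv, rfl⟩
  rw [Submodule.eq_span_singleton_of_finrank_eq_one hS hx hx0, Submodule.mem_span_singleton] at hy
  rw [Submodule.eq_span_singleton_of_finrank_eq_one hT hu hu0, Submodule.mem_span_singleton] at hv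
  obtain ⟨a, rfl⟩ := hy
  obtain ⟨b, rfl⟩ := hv
  rw [smul_lie, lie_smul, hxu, smul_zero, smul_zero]

theorem seq_mem_and_ne_zero {F L : Type*} [Field F] [LieRing L] [LieAlgebra F L]
    {Lc : ℕ → Submodule F L} {n : ℕ} {z : L} {e : ℕ → L}
    (hgrade : ∀ i j : ℕ, ∀ x ∈ Lc i, ∀ y ∈ Lc j, ⁅x, y⁆ ∈ Lc (i + j))
    (hdim1 : Module.finrank F (Lc 1) = 1)
    (hdimn : ∀ i : ℕ, n ≤ i → Module.finrank F (Lc i) = 1)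
    (hgen : ∀ i : ℕ, n ≤ i →
      Lc (i + 1) = Submodule.span F {w : L | ∃ x ∈ Lc i, ∃ u ∈ Lc 1, w = ⁅x, u⁆})
    (hz : z ∈ Lc 1) (hz0 : z ≠ 0) (hen : e n ∈ Lc n) (hen0 : e n ≠ 0)
    (hrec : ∀ i : ℕ, n ≤ i → e (i + 1) = ⁅e i, z⁆) :
    ∀ i, n ≤ i → e i ∈ Lc i ∧ e i ≠ 0 := by
  intro i hi
  induction i, hi using Nat.le_induction with
  | base => exact ⟨hen, hen0⟩
  | succ i hi ih =>
    have hspan : Submodule.span F {w : L | ∃ x ∈ Lc i, ∃ u ∈ Lc 1, w = ⁅x, u⁆} ≠ ⊥ := by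
      rw [← hgen i hi]
      intro hbot
      have := hdimn (i + 1) (by omega)
      rw [hbot, finrank_bot] at this
      exact zero_ne_one this
    rw [hrec i hi]
    exact ⟨hgrade i 1 _ ih.1 z hz,
      lie_ne_zero_of_finrank_eq_one (hdimn i hi) hdim1 hspan ih.1 ih.2 hz hz0⟩

section BracketCoeff

variable {R : Type*} [CommRing R]

def bracketCoeff (B : ℕ → R) (i m : ℕ) : R := (-1) ^ m * (fwdDiff 1)^[m] B i

theorem bracketCoeff_zero (B : ℕ → R) (i : ℕ) : bracketCoeff B i 0 = B i := by
  simp [bracketCoeff]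

theorem bracketCoeff_succ (B : ℕ → R) (i m : ℕ) :
    bracketCoeff B i (m + 1) = bracketCoeff B i m - bracketCoeff B (i + 1) m := by
  simp only [bracketCoeff, Function.iterate_succ_apply', fwdDiff]
  ring

theorem bracketCoeff_eq_sum (B : ℕ → R) (i m : ℕ) :
    bracketCoeff B i m = ∑ r ∈ range (m + 1), (-1) ^ r * m.choose r * B (i + r) := by
  rw [bracketCoeff, fwdDiff_iter_eq_sum_shift, mul_sum]
  refine sum_congr rfl fun r hr => ?_
  have hm : m + (m - r) = r + 2 * (m - r) := by have := mem_range.1 hr; omega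
  rw [smul_eq_mul, mul_one, zsmul_eq_mul]
  push_cast
  rw [← mul_assoc, ← mul_assoc, ← pow_add, hm, pow_add, pow_mul]
  simp

theorem bracketCoeff_eq_sum_of_subset {B : ℕ → R} {i m : ℕ}
    {S : Finset ℕ} (hS : S ⊆ range (m + 1))
    (hB : ∀ r ≤ m, r ∉ S → (m.choose r : R) * B (i + r) = 0) :
    bracketCoeff B i m = ∑ r ∈ S, (-1) ^ r * m.choose r * B (i + r) := by
  rw [bracketCoeff_eq_sum]
  refine (sum_subset hS fun r hr hrS => ?_).symm
  rw [mul_assoc, hB r (Nat.lt_succ_iff.1 (mem_range.1 hr)) hrS, mul_zero]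

theorem bracketCoeff_eq_of_forall_ne {B : ℕ → R} {i m a : ℕ}
    (ha : a ≤ m) (hB : ∀ r ≤ m, r ≠ a → B (i + r) = 0) :
    bracketCoeff B i m = (-1) ^ a * m.choose a * B (i + a) := by
  rw [bracketCoeff_eq_sum_of_subset (S := {a}) (by simpa [Nat.lt_succ_iff] using ha)
    fun r hr hra => by rw [hB r hr (by simpa using hra), mul_zero], sum_singleton]

end BracketCoeff

/-- Antisymmetry of `⁅e (n + k), e (n + m)⁆` and the Jacobi identity for `e i, e (n + b), e n`,
written in terms of the sequence `B` extended by `B n = 0`. -/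
structure BracketRelations {R : Type*} [CommRing R] (n : ℕ) (B : ℕ → R) : Prop where
  antisymm : ∀ k m, bracketCoeff B (n + k) m = -bracketCoeff B (n + m) k
  jacobi : ∀ i b, n ≤ i → B (n + b) * bracketCoeff B i (n + b) =
    bracketCoeff B i b * B (i + n + b) + B i * bracketCoeff B (n + b) i

section LieSequence

variable {R L : Type*} [CommRing R] [LieRing L] [LieAlgebra R L] {n : ℕ} {z : L} {e : ℕ → L}
  {B : ℕ → R}

theorem lie_eq_bracketCoeff_smul (hrec : ∀ i, n ≤ i → e (i + 1) = ⁅e i, z⁆)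
    (hB : ∀ i, n ≤ i → ⁅e i, e n⁆ = B i • e (i + n)) (m : ℕ) :
    ∀ i, n ≤ i → ⁅e i, e (n + m)⁆ = bracketCoeff B i m • e (i + n + m) := by
  induction m with
  | zero => simpa [bracketCoeff_zero] using hB
  | succ m ih =>
    intro i hi
    rw [← add_assoc, hrec _ (by omega), leibniz_lie, ← hrec i hi, ih i hi, smul_lie,
      ← hrec _ (by omega), ← lie_skew (e (n + m)), ih (i + 1) (by omega), bracketCoeff_succ,
      sub_smul, show i + 1 + n + m = i + n + m + 1 by omega]
    exact (sub_eq_add_neg _ _).symm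

theorem BracketRelations.of_lie [IsDomain R] [Module.IsTorsionFree R L]
    (hrec : ∀ i, n ≤ i → e (i + 1) = ⁅e i, z⁆) (hB : ∀ i, n ≤ i → ⁅e i, e n⁆ = B i • e (i + n))
    (he : ∀ i, n ≤ i → e i ≠ 0) : BracketRelations n B := by
  have hlie := lie_eq_bracketCoeff_smul hrec hB
  constructor
  · intro k m
    have h := lie_skew (e (n + m)) (e (n + k))
    rw [hlie m (n + k) le_self_add, hlie k (n + m) le_self_add, ← neg_smul,
      show n + m + n + k = n + k + n + m by omega] at h
    exact neg_eq_iff_eq_neg.mp (smul_left_injective R (he _ (by omega)) h)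
  · intro i b hi
    have hnb : n ≤ n + b := le_self_add
    have hleft : ⁅e i, ⁅e (n + b), e n⁆⁆ =
        (B (n + b) * bracketCoeff B i (n + b)) • e (i + n + b + n) := by
      rw [hB _ hnb, lie_smul, show n + b + n = n + (n + b) by omega, hlie _ i hi, smul_smul,
        show i + n + (n + b) = i + n + b + n by omega]
    have hmid : ⁅⁅e i, e (n + b)⁆, e n⁆ =
        (bracketCoeff B i b * B (i + n + b)) • e (i + n + b + n) := by
      rw [hlie b i hi, smul_lie, hB _ (by omega), smul_smul]
    have hright : ⁅e (n + b), ⁅e i, e n⁆⁆ =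
        (B i * bracketCoeff B (n + b) i) • e (i + n + b + n) := by
      have h := hlie i (n + b) hnb
      rw [add_comm n i] at h
      rw [hB i hi, lie_smul, h, smul_smul, show n + b + n + i = i + n + b + n by omega]
    have h := leibniz_lie (e i) (e (n + b)) (e n)
    rw [hleft, hmid, hright, ← add_smul] at h
    exact smul_left_injective R (he _ (by omega)) h

end LieSequence

theorem BracketRelations.of_graded {F L : Type*} [Field F] [LieRing L] [LieAlgebra F L]
    {Lc : ℕ → Submodule F L} {n : ℕ} {z : L} {e : ℕ → L} {β : ℕ → F}
    (hgrade : ∀ i j : ℕ, ∀ x ∈ Lc i, ∀ y ∈ Lc j, ⁅x, y⁆ ∈ Lc (i + j))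
    (hdim1 : Module.finrank F (Lc 1) = 1)
    (hdimn : ∀ i : ℕ, n ≤ i → Module.finrank F (Lc i) = 1)
    (hgen : ∀ i : ℕ, n ≤ i →
      Lc (i + 1) = Submodule.span F {w : L | ∃ x ∈ Lc i, ∃ u ∈ Lc 1, w = ⁅x, u⁆})
    (hz : z ∈ Lc 1) (hz0 : z ≠ 0) (hen : e n ∈ Lc n) (hen0 : e n ≠ 0)
    (hrec : ∀ i : ℕ, n ≤ i → e (i + 1) = ⁅e i, z⁆)
    (hβ : ∀ i : ℕ, n < i → ⁅e i, e n⁆ = β i • e (i + n)) :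
    BracketRelations n (Function.update β n 0) := by
  refine .of_lie hrec (fun i hi => ?_)
    fun i hi => (seq_mem_and_ne_zero hgrade hdim1 hdimn hgen hz hz0 hen hen0 hrec i hi).2
  rcases hi.eq_or_lt with rfl | hi
  · simp
  · rw [Function.update_of_ne hi.ne', hβ i hi]

section Parity

variable {R : Type*} [CommRing R] [IsDomain R] {n : ℕ} {B : ℕ → R}

theorem BracketRelations.odd_of_first_nonzero (hrel : BracketRelations n B) (hR : (-1 : R) ≠ 1)
    {m : ℕ} (hzero : ∀ r < m, B (n + r) = 0) (hm : B (n + m) ≠ 0) : Odd m := by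
  have h := hrel.antisymm 0 m
  rw [add_zero, bracketCoeff_zero, bracketCoeff_eq_of_forall_ne le_rfl
    fun r hr hrm => hzero r (by omega), Nat.choose_self, Nat.cast_one, mul_one] at h
  rw [← neg_one_pow_eq_neg_one_iff_odd hR]
  exact mul_right_cancel₀ hm (h.trans (neg_one_mul _).symm)

theorem BracketRelations.even_of_first_constituent {β : ℕ → R} {ℓ : ℕ}
    (hrel : BracketRelations n (Function.update β n 0)) (hR : (-1 : R) ≠ 1) (hℓ : 2 * n ≤ ℓ)
    (hfz : ∀ i, n < i → i + n ≤ ℓ → β i = 0) (hfl : β (ℓ - n + 1) ≠ 0) : Even ℓ := by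
  have hodd : Odd (ℓ + 1 - 2 * n) := by
    refine hrel.odd_of_first_nonzero hR (fun r hr => ?_) ?_
    · rcases r.eq_zero_or_pos with rfl | hr0
      · simp
      · rw [Function.update_of_ne (by omega)]
        exact hfz _ (by omega) (by omega)
    · rwa [Function.update_of_ne (by omega), show n + (ℓ + 1 - 2 * n) = ℓ - n + 1 by omega]
  rw [Nat.odd_iff] at hodd
  rw [Nat.even_iff]
  omega

theorem BracketRelations.jacobi_of_gap {p : ℕ} [CharP R p] (hp : p.Prime) (hodd : Odd p)
    (hrel : BracketRelations n B) {c s j : ℕ} (hn : 0 < n) (hnj : n ≤ j) (hsj : s < j)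
    (hsq : s < p ^ c) (hns : n ≤ p ^ c + s) (hBj : B j = 0) (hbefore : ∀ r < s, B (j + r) = 0)
    (hgap : ∀ i, p ^ c + s < i → i < p ^ c + s + j → B i = 0) (hs : B (p ^ c + s) ≠ 0) :
    (-1) ^ s * B (j + s) = ((-1) ^ s - 1) * B (p ^ c + s + j) := by
  have hjac := hrel.jacobi (p ^ c + s) (j - n) hns
  have hcoeff₁ : bracketCoeff B (p ^ c + s) (j - n) = B (p ^ c + s) := by
    rw [bracketCoeff_eq_of_forall_ne (Nat.zero_le _)
      fun r hr hr0 => hgap _ (by omega) (by omega)]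
    simp
  have hcoeff₂ : bracketCoeff B j (p ^ c + s) =
      (-1) ^ s * B (j + s) - (-1) ^ s * B (p ^ c + s + j) := by
    rw [bracketCoeff_eq_sum_of_subset (S := {s, p ^ c + s}) ?_ ?_, sum_pair (by omega)]
    · rw [CharP.natCast_choose_prime_pow_add hp s hsq, Nat.choose_self, Nat.choose_self, pow_add,
        hodd.pow.neg_one_pow, show j + (p ^ c + s) = p ^ c + s + j by omega]
      push_cast
      ring
    · intro r hr
      simp only [mem_insert, mem_singleton] at hr
      rcases hr with rfl | rfl <;> simp
    · intro r hr hrS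
      simp only [mem_insert, mem_singleton, not_or] at hrS
      rcases lt_or_gt_of_ne hrS.1 with hrs | hrs
      · rw [hbefore r hrs, mul_zero]
      rcases lt_or_ge r (p ^ c) with hrq | hrq
      · rw [CharP.natCast_choose_prime_pow_add hp s hrq, Nat.choose_eq_zero_of_lt hrs,
          Nat.cast_zero, zero_mul]
      · rw [hgap _ (by omega) (by omega), mul_zero]
  rw [show n + (j - n) = j by omega, hBj, zero_mul, hcoeff₁, hcoeff₂,
    show p ^ c + s + n + (j - n) = p ^ c + s + j by omega, ← mul_add] at hjac
  linear_combination (mul_eq_zero.1 hjac.symm).resolve_left hs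

theorem even_iff_eq_zero_of_neg_one_pow_mul_eq (hR : (-1 : R) ≠ 1) {s : ℕ} {a d : R}
    (h : (-1) ^ s * a = ((-1) ^ s - 1) * d) (hd : d ≠ 0) : Even s ↔ a = 0 := by
  rw [← neg_one_pow_eq_one_iff_even hR]
  refine ⟨fun hs => by simpa [hs] using h, fun ha => ?_⟩
  rw [ha, mul_zero, eq_comm, mul_eq_zero, sub_eq_zero] at h
  exact h.resolve_right hd

end Parity

theorem t_is_odd_and_bounded_general
    (p : ℕ) (hp : p.Prime) (hodd : Odd p)
    (n : ℕ) (hnp : n < p)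
    {F : Type*} [Field F] [CharP F p]
    {L : Type*} [LieRing L] [LieAlgebra F L]
    (Lc : ℕ → Submodule F L)
    (hgrade : ∀ i j : ℕ, ∀ x ∈ Lc i, ∀ y ∈ Lc j, ⁅x, y⁆ ∈ Lc (i + j))
    (hdim1 : Module.finrank F (Lc 1) = 1)
    (hdimn : ∀ i : ℕ, n ≤ i → Module.finrank F (Lc i) = 1)
    (hgen : ∀ i : ℕ, n ≤ i →
      Lc (i + 1) = Submodule.span F {w : L | ∃ x ∈ Lc i, ∃ u ∈ Lc 1, w = ⁅x, u⁆})
    (z : L) (hz : z ∈ Lc 1) (hz0 : z ≠ 0)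
    (e : ℕ → L) (hen : e n ∈ Lc n) (hen0 : e n ≠ 0)
    (hrec : ∀ i : ℕ, n ≤ i → e (i + 1) = ⁅e i, z⁆)
    (β : ℕ → F) (hβ : ∀ i : ℕ, n < i → ⁅e i, e n⁆ = β i • e (i + n))
    (ℓ : ℕ)
    (hfz : ∀ i : ℕ, n < i → i + n ≤ ℓ → β i = 0)
    (hfl : β (ℓ - n + 1) ≠ 0)
    (hbig : 4 * p < ℓ)
    (c : ℕ) (q : ℕ) (hq : q = p ^ c)
    (k0 : ℕ) (hk0 : 2 ≤ k0)
    (hℓval : ℓ + 1 = q + k0 + n)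
    (ℓ₂ : ℕ)
    (hsl : β (ℓ + ℓ₂ - n + 1) ≠ 0)
    (hℓ₂val : ℓ₂ = q ∨ ℓ₂ = q - 1)
    (s : ℕ) (hs1 : k0 ≤ s) (hs2 : s ≤ n - 1)
    (hstrail : β (q + s) ≠ 0)
    (hszero : ∀ i : ℕ, q + s < i → i < q + k0 + ℓ₂ → β i = 0)
    (t : ℤ) (ht : t = (k0 : ℤ) + ℓ₂ - s - n + 1) :
    Odd t ∧ (q : ℤ) - 2 * p < t ∧ t < (q : ℤ) - 1 ∧ t ≠ (q : ℤ) - p ∧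
      ∃ u : ℤ, 0 < u ∧ (q : ℤ) - t = 2 * u := by
  have hR : (-1 : F) ≠ 1 :=
    have : Fact (2 < p) := ⟨lt_of_le_of_ne hp.two_le (hodd.ne_two_of_dvd_nat dvd_rfl).symm⟩
    CharP.neg_one_ne_one F p
  have hrel := BracketRelations.of_graded hgrade hdim1 hdimn hgen hz hz0 hen hen0 hrec hβ
  set B := Function.update β n 0
  have hBβ : ∀ i, n < i → B i = β i := fun i hi => Function.update_of_ne (by omega) _ _
  have hBzero : ∀ i, n < i → i + n ≤ ℓ → B i = 0 := fun i h₁ h₂ => (hBβ i h₁).trans (hfz i h₁ h₂)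
  have hℓ : Even ℓ := hrel.even_of_first_constituent hR (by omega) hfz hfl
  subst hq
  have hjac := hrel.jacobi_of_gap hp hodd (c := c) (s := s) (j := k0 + ℓ₂ - s) (by omega)
    (by omega) (by omega) (by omega) (by omega) (hBzero _ (by omega) (by omega))
    (fun r _ => hBzero _ (by omega) (by omega))
    (fun i h₁ h₂ => (hBβ i (by omega)).trans (hszero i h₁ (by omega))) (by rwa [hBβ _ (by omega)])
  have hs : Even s ↔ B (k0 + ℓ₂) = 0 := by
    rw [even_iff_eq_zero_of_neg_one_pow_mul_eq hR hjac, show k0 + ℓ₂ - s + s = k0 + ℓ₂ by omega]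
    rwa [hBβ _ (by omega), show p ^ c + s + (k0 + ℓ₂ - s) = ℓ + ℓ₂ - n + 1 by omega]
  have hparity : (ℓ₂ = p ^ c ∧ ¬Even s) ∨ (ℓ₂ = p ^ c - 1 ∧ Even s) := by
    rcases hℓ₂val with hℓ₂ | hℓ₂
    · refine .inl ⟨hℓ₂, fun h => hfl ?_⟩
      rwa [hs, hBβ _ (by omega), show k0 + ℓ₂ = ℓ - n + 1 by omega] at h
    · exact .inr ⟨hℓ₂, hs.2 (hBzero _ (by omega) (by omega))⟩
  have hqodd : p ^ c % 2 = 1 := Nat.odd_iff.1 hodd.pow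
  have hpodd : p % 2 = 1 := Nat.odd_iff.1 hodd
  have htodd : t % 2 = 1 := by
    rw [Nat.even_iff] at hℓ hparity
    omega
  refine ⟨Int.odd_iff.2 htodd, by omega, by omega, by omega, (((p ^ c : ℕ) : ℤ) - t) / 2,
    by omega, by omega⟩

/-- **Lemma (properties of `t`).**
In an algebra of type `n` over a field of odd characteristic `p` (`1 < n < p`) with
nonzero sequence, first constituent length `ℓ > 4p` with `ℓ = q + k0 + n − 1`
(`q = p^c`, `2 ≤ k0 ≤ n − 2`), second constituent length `ℓ₂ ∈ {q, q−1}`, and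
`s` with `k0 ≤ s ≤ n − 1` such that `β (q+s) ≠ 0` and `β i = 0` for
`q + s < i < q + k0 + ℓ₂`:  the integer `t := k0 + ℓ₂ − s − n + 1` is odd, satisfies
`q − 2p < t < q − 1` and `t ≠ q − p`; in particular `(q − t)/2` is a positive integer. -/
theorem t_is_odd_and_bounded
    (p : ℕ) (hp : p.Prime) (hodd : Odd p)
    (n : ℕ) (hn1 : 1 < n) (hnp : n < p)
    {F : Type*} [Field F] [CharP F p]
    {L : Type*} [LieRing L] [LieAlgebra F L]
    (Lc : ℕ → Submodule F L)
    (hinternal : DirectSum.IsInternal Lc)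
    (h0 : Lc 0 = ⊥)
    (hgrade : ∀ i j : ℕ, ∀ x ∈ Lc i, ∀ y ∈ Lc j, ⁅x, y⁆ ∈ Lc (i + j))
    (hdim1 : Module.finrank F (Lc 1) = 1)
    (hmid : ∀ i : ℕ, 1 < i → i < n → Lc i = ⊥)
    (hdimn : ∀ i : ℕ, n ≤ i → Module.finrank F (Lc i) = 1)
    (hgen : ∀ i : ℕ, n ≤ i →
      Lc (i + 1) = Submodule.span F {w : L | ∃ x ∈ Lc i, ∃ u ∈ Lc 1, w = ⁅x, u⁆})
    (z : L) (hz : z ∈ Lc 1) (hz0 : z ≠ 0)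
    (e : ℕ → L) (hen : e n ∈ Lc n) (hen0 : e n ≠ 0)
    (hrec : ∀ i : ℕ, n ≤ i → e (i + 1) = ⁅e i, z⁆)
    (β : ℕ → F) (hβ : ∀ i : ℕ, n < i → ⁅e i, e n⁆ = β i • e (i + n))
    (hne : ∃ i : ℕ, n < i ∧ β i ≠ 0)
    (ℓ : ℕ) (hℓ2n : 2 * n ≤ ℓ)
    (hfz : ∀ i : ℕ, n < i → i + n ≤ ℓ → β i = 0)
    (hfl : β (ℓ - n + 1) ≠ 0)
    (hbig : 4 * p < ℓ)
    (c : ℕ) (q : ℕ) (hq : q = p ^ c)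
    (k0 : ℕ) (hk0 : 2 ≤ k0) (hk0' : k0 + 2 ≤ n)
    (hℓval : ℓ + 1 = q + k0 + n)
    (ℓ₂ : ℕ) (hℓ₂n : n ≤ ℓ₂)
    (hsz : ∀ j : ℕ, 0 < j → j + n ≤ ℓ₂ → β (ℓ + j) = 0)
    (hsl : β (ℓ + ℓ₂ - n + 1) ≠ 0)
    (hℓ₂val : ℓ₂ = q ∨ ℓ₂ = q - 1)
    (s : ℕ) (hs1 : k0 ≤ s) (hs2 : s ≤ n - 1)
    (hstrail : β (q + s) ≠ 0)
    (hszero : ∀ i : ℕ, q + s < i → i < q + k0 + ℓ₂ → β i = 0)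
    (t : ℤ) (ht : t = (k0 : ℤ) + ℓ₂ - s - n + 1) :
    Odd t ∧ (q : ℤ) - 2 * p < t ∧ t < (q : ℤ) - 1 ∧ t ≠ (q : ℤ) - p ∧
      ∃ u : ℤ, 0 < u ∧ (q : ℤ) - t = 2 * u :=
  t_is_odd_and_bounded_general p hp hodd n hnp Lc hgrade hdim1 hdimn hgen z hz hz0 e hen hen0 hrec β
    hβ ℓ hfz hfl hbig c q hq k0 hk0 hℓval ℓ₂ hsl hℓ₂val s hs1 hs2 hstrail hszero t ht
end

section
/- Let F be a field, n > 1 an integer, and L an algebra of type n over F with nonzero sequence (β_i) and first constituent length ℓ. Let r ≥ n be an integer such that β_{ℓ+j} = 0 for all j with 0 < j ≤ r − n. Define g(x) = Σ_{i=0}^{n−1} β_{ℓ−i} x^i ∈ F[x]. Then the coefficient of x^j in (x−1)^{ℓ−n+1} g(x) is zero for every integer j with ℓ − r < j ≤ ℓ − n. -/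
/-!
Write `⁅e i, e m⁆ = c i m • e (i + m)` for `i, m ≥ n`. The Jacobi identity applied to
`e (m + 1) = ⁅e m, z⁆` gives `c i (m + 1) = c i m - c (i + 1) m`, hence
`c i (n + k) = (-1) ^ k * Δ^k b i` for the sequence `b i = c i n`, which is `β i` for `i > n`
and `0` at `i = n`. By antisymmetry, `c (ℓ - j) (ℓ + 1) = -c (ℓ + 1) (ℓ - j)`, so
`Δ^(ℓ - n + 1) b (ℓ - j)` is a combination of `β (ℓ + 1), …, β (2ℓ + 1 - j - n)`, all zero since
`ℓ - j < r`. That forward difference is also the coefficient of `x ^ j` in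
`(x - 1) ^ (ℓ - n + 1) * g`: on the window `[ℓ - j, 2ℓ - j - n + 1]` the sequence `b` vanishes
outside `(ℓ - n, ℓ]`, where it agrees with the reversed coefficients of `g`.
-/

open Finset Polynomial Submodule fwdDiff

section FwdDiff

variable {G : Type*} [AddCommGroup G] {f g : ℕ → G} {k y : ℕ}

theorem fwdDiff_iter_congr (h : ∀ t ≤ k, f (y + t) = g (y + t)) :
    Δ_[1] ^[k] f y = Δ_[1] ^[k] g y := by
  simp only [fwdDiff_iter_eq_sum_shift, smul_eq_mul, mul_one]
  exact sum_congr rfl fun t ht ↦ by rw [h t (Nat.lt_succ_iff.mp (mem_range.mp ht))]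

theorem fwdDiff_iter_eq_zero_of_forall (h : ∀ t ≤ k, f (y + t) = 0) : Δ_[1] ^[k] f y = 0 := by
  rw [fwdDiff_iter_congr (g := fun _ ↦ 0) h, Function.iterate_fixed (fwdDiff_const 1 0)]
end FwdDiff

theorem coeff_X_sub_one_pow_mul {R : Type*} [CommRing R] (p : R[X]) (k : ℕ) {j ℓ : ℕ}
    (hj : j ≤ ℓ) :
    ((X - 1) ^ k * p).coeff j
      = Δ_[1] ^[k] (fun m ↦ if m ≤ ℓ then p.coeff (ℓ - m) else 0) (ℓ - j) := by
  rw [fwdDiff_iter_eq_sum_shift, sub_eq_add_neg, add_pow, sum_mul, finsetSum_coeff]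
  refine sum_congr rfl fun t _ ↦ ?_
  rw [show X ^ t * (-1) ^ (k - t) * (k.choose t : R[X]) * p
      = C ((-1 : R) ^ (k - t) * k.choose t) * (X ^ t * p) by simp; ring,
    coeff_C_mul, coeff_X_pow_mul', zsmul_eq_mul, smul_eq_mul, mul_one]
  push_cast
  congr 1
  by_cases ht : t ≤ j
  · rw [if_pos ht, if_pos (by omega), show ℓ - (ℓ - j + t) = j - t by omega]
  · rw [if_neg ht, if_neg (by omega)]

theorem coeff_X_sub_one_pow_mul_sum_C_mul_X_pow {R : Type*} [CommRing R] (b : ℕ → R)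
    {n ℓ j : ℕ} (k : ℕ) (hj : j ≤ ℓ) (hlow : ∀ m, ℓ - j ≤ m → m + n ≤ ℓ → b m = 0)
    (hhigh : ∀ m, ℓ < m → m ≤ ℓ - j + k → b m = 0) :
    ((X - 1) ^ k * ∑ i ∈ range n, C (b (ℓ - i)) * X ^ i).coeff j = Δ_[1] ^[k] b (ℓ - j) := by
  rw [coeff_X_sub_one_pow_mul _ k hj]
  refine fwdDiff_iter_congr fun t ht ↦ ?_
  simp only [finsetSum_coeff, coeff_C_mul_X_pow, sum_ite_eq, mem_range]
  split_ifs with hle hlt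
  · congr 1
    omega
  · rw [hlow (ℓ - j + t) (by omega) (by omega)]
  · rw [hhigh (ℓ - j + t) (by omega) (by omega)]

section TypeN

variable {F L : Type*} [Field F] [LieRing L] [LieAlgebra F L] {Lc : ℕ → Submodule F L} {n : ℕ}
  {z : L} {e : ℕ → L} {c : ℕ → ℕ → F}

theorem mem_of_lie_succ (hgrade : ∀ i j : ℕ, ∀ x ∈ Lc i, ∀ y ∈ Lc j, ⁅x, y⁆ ∈ Lc (i + j))
    (hz : z ∈ Lc 1) (hen : e n ∈ Lc n) (hrec : ∀ i, n ≤ i → e (i + 1) = ⁅e i, z⁆)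
    {q : ℕ} (hq : n ≤ q) : e q ∈ Lc q := by
  induction q, hq using Nat.le_induction with
  | base => exact hen
  | succ i hi ih => rw [hrec i hi]; exact hgrade i 1 _ ih _ hz

theorem ne_zero_of_lie_succ (hgrade : ∀ i j : ℕ, ∀ x ∈ Lc i, ∀ y ∈ Lc j, ⁅x, y⁆ ∈ Lc (i + j))
    (hdim1 : Module.finrank F (Lc 1) = 1)
    (hdimn : ∀ i : ℕ, n ≤ i → Module.finrank F (Lc i) = 1)
    (hgen : ∀ i : ℕ, n ≤ i →
      Lc (i + 1) = span F {w : L | ∃ x ∈ Lc i, ∃ u ∈ Lc 1, w = ⁅x, u⁆})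
    (hz : z ∈ Lc 1) (hz0 : z ≠ 0) (hen : e n ∈ Lc n) (hen0 : e n ≠ 0)
    (hrec : ∀ i, n ≤ i → e (i + 1) = ⁅e i, z⁆) {q : ℕ} (hq : n ≤ q) : e q ≠ 0 := by
  induction q, hq using Nat.le_induction with
  | base => exact hen0
  | succ i hi ih =>
    have hle : Lc (i + 1) ≤ F ∙ e (i + 1) := by
      rw [hgen i hi, span_le]
      rintro _ ⟨x, hx, u, hu, rfl⟩
      rw [eq_span_singleton_of_mem_of_finrank_eq_one (hdimn i hi)
        (mem_of_lie_succ hgrade hz hen hrec hi) ih, mem_span_singleton] at hx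
      rw [eq_span_singleton_of_mem_of_finrank_eq_one hdim1 hz hz0, mem_span_singleton] at hu
      obtain ⟨a, rfl⟩ := hx
      obtain ⟨b, rfl⟩ := hu
      exact mem_span_singleton.2 ⟨a * b, by rw [hrec i hi, smul_lie, lie_smul, mul_smul]⟩
    intro h
    have := hdimn (i + 1) (by omega)
    rw [h, span_zero_singleton, le_bot_iff] at hle
    rw [hle, finrank_bot] at this
    exact zero_ne_one this

theorem exists_structConst (hgrade : ∀ i j : ℕ, ∀ x ∈ Lc i, ∀ y ∈ Lc j, ⁅x, y⁆ ∈ Lc (i + j))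
    (hdimn : ∀ i : ℕ, n ≤ i → Module.finrank F (Lc i) = 1)
    (hmem : ∀ q, n ≤ q → e q ∈ Lc q) (hne : ∀ q, n ≤ q → e q ≠ 0) :
    ∃ c : ℕ → ℕ → F, ∀ i m, n ≤ i → n ≤ m → ⁅e i, e m⁆ = c i m • e (i + m) := by
  have : ∀ i m, ∃ a : F, n ≤ i → n ≤ m → ⁅e i, e m⁆ = a • e (i + m) := by
    intro i m
    by_cases h : n ≤ i ∧ n ≤ m
    · have hlie := hgrade i m _ (hmem i h.1) _ (hmem m h.2)
      rw [eq_span_singleton_of_mem_of_finrank_eq_one (hdimn (i + m) (by omega))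
        (hmem (i + m) (by omega)) (hne (i + m) (by omega)), mem_span_singleton] at hlie
      obtain ⟨a, ha⟩ := hlie
      exact ⟨a, fun _ _ ↦ ha.symm⟩
    · exact ⟨0, fun hi hm ↦ absurd ⟨hi, hm⟩ h⟩
  choose c hc using this
  exact ⟨c, hc⟩

theorem structConst_antisymm (he : ∀ q, n ≤ q → e q ≠ 0)
    (hc : ∀ i m, n ≤ i → n ≤ m → ⁅e i, e m⁆ = c i m • e (i + m))
    {i m : ℕ} (hi : n ≤ i) (hm : n ≤ m) : c i m = -c m i := by
  refine smul_left_injective F (he (i + m) (by omega)) ?_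
  dsimp only
  rw [← hc i m hi hm, ← lie_skew, hc m i hm hi, add_comm m i, neg_smul]

theorem structConst_self (he : ∀ q, n ≤ q → e q ≠ 0)
    (hc : ∀ i m, n ≤ i → n ≤ m → ⁅e i, e m⁆ = c i m • e (i + m))
    {i : ℕ} (hi : n ≤ i) : c i i = 0 := by
  refine smul_left_injective F (he (i + i) (by omega)) ?_
  dsimp only
  rw [← hc i i hi hi, lie_self, zero_smul]

theorem structConst_succ_right (he : ∀ q, n ≤ q → e q ≠ 0)
    (hc : ∀ i m, n ≤ i → n ≤ m → ⁅e i, e m⁆ = c i m • e (i + m))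
    (hrec : ∀ i, n ≤ i → e (i + 1) = ⁅e i, z⁆)
    {i m : ℕ} (hi : n ≤ i) (hm : n ≤ m) : c i (m + 1) = c i m - c (i + 1) m := by
  refine smul_left_injective F (he (i + (m + 1)) (by omega)) ?_
  have hjacobi : ⁅e i, e (m + 1)⁆ = ⁅⁅e i, e m⁆, z⁆ + ⁅e m, ⁅e i, z⁆⁆ := by
    rw [hrec m hm, leibniz_lie]
  dsimp only
  rw [← hc i (m + 1) hi (by omega), hjacobi, hc i m hi hm, smul_lie, ← hrec (i + m) (by omega),
    ← hrec i hi, hc m (i + 1) hm (by omega), structConst_antisymm he hc hm (by omega),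
    show i + m + 1 = i + (m + 1) by omega, show m + (i + 1) = i + (m + 1) by omega,
    sub_smul, neg_smul, sub_eq_add_neg]

theorem structConst_add_right (he : ∀ q, n ≤ q → e q ≠ 0)
    (hc : ∀ i m, n ≤ i → n ≤ m → ⁅e i, e m⁆ = c i m • e (i + m))
    (hrec : ∀ i, n ≤ i → e (i + 1) = ⁅e i, z⁆) (k : ℕ) {i : ℕ} (hi : n ≤ i) :
    c i (n + k) = (-1) ^ k * Δ_[1] ^[k] (fun i ↦ c i n) i := by
  induction k generalizing i with
  | zero => simp
  | succ k ih =>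
    rw [← add_assoc, structConst_succ_right he hc hrec hi (by omega), ih hi, ih (by omega),
      Function.iterate_succ_apply', fwdDiff]
    ring

theorem fwdDiff_iter_structConst_symm (he : ∀ q, n ≤ q → e q ≠ 0)
    (hc : ∀ i m, n ≤ i → n ≤ m → ⁅e i, e m⁆ = c i m • e (i + m))
    (hrec : ∀ i, n ≤ i → e (i + 1) = ⁅e i, z⁆) (a k : ℕ) :
    (-1) ^ k * Δ_[1] ^[k] (fun i ↦ c i n) (n + a)
      = -((-1) ^ a * Δ_[1] ^[a] (fun i ↦ c i n) (n + k)) := by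
  rw [← structConst_add_right he hc hrec k (by omega),
    ← structConst_add_right he hc hrec a (by omega),
    structConst_antisymm he hc (by omega) (by omega)]

end TypeN

theorem coeff_vanishing_from_second_constituent_general
    {F : Type*} [Field F]
    (n : ℕ)
    {L : Type*} [LieRing L] [LieAlgebra F L]
    (Lc : ℕ → Submodule F L)
    (hgrade : ∀ i j : ℕ, ∀ x ∈ Lc i, ∀ y ∈ Lc j, ⁅x, y⁆ ∈ Lc (i + j))
    (hdim1 : Module.finrank F (Lc 1) = 1)
    (hdimn : ∀ i : ℕ, n ≤ i → Module.finrank F (Lc i) = 1)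
    (hgen : ∀ i : ℕ, n ≤ i →
      Lc (i + 1) = Submodule.span F {w : L | ∃ x ∈ Lc i, ∃ u ∈ Lc 1, w = ⁅x, u⁆})
    (z : L) (hz : z ∈ Lc 1) (hz0 : z ≠ 0)
    (e : ℕ → L) (hen : e n ∈ Lc n) (hen0 : e n ≠ 0)
    (hrec : ∀ i : ℕ, n ≤ i → e (i + 1) = ⁅e i, z⁆)
    (β : ℕ → F) (hβ : ∀ i : ℕ, n < i → ⁅e i, e n⁆ = β i • e (i + n))
    (ℓ : ℕ) (hℓ2n : 2 * n ≤ ℓ)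
    (hfz : ∀ i : ℕ, n < i → i + n ≤ ℓ → β i = 0)
    (r : ℕ)
    (hrz : ∀ j : ℕ, 0 < j → j + n ≤ r → β (ℓ + j) = 0)
    (g : Polynomial F)
    (hg : g = ∑ i ∈ Finset.range n, Polynomial.C (β (ℓ - i)) * Polynomial.X ^ i) :
    ∀ j : ℕ, ℓ < j + r → j + n ≤ ℓ →
      ((Polynomial.X - 1) ^ (ℓ - n + 1) * g).coeff j = 0 := by
  intro j hjr hjℓ
  have hmem q (hq : n ≤ q) : e q ∈ Lc q := mem_of_lie_succ hgrade hz hen hrec hq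
  have hne0 q (hq : n ≤ q) : e q ≠ 0 :=
    ne_zero_of_lie_succ hgrade hdim1 hdimn hgen hz hz0 hen hen0 hrec hq
  obtain ⟨c, hc⟩ := exists_structConst hgrade hdimn hmem hne0
  have hcβ m (hm : n < m) : c m n = β m :=
    smul_left_injective F (hne0 (m + n) (by omega)) ((hc m n hm.le le_rfl).symm.trans (hβ m hm))
  have hlow m (hm : n ≤ m) (hmℓ : m + n ≤ ℓ) : c m n = 0 := by
    rcases hm.eq_or_lt with rfl | hm
    · exact structConst_self hne0 hc le_rfl
    · rw [hcβ m hm, hfz m hm hmℓ]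
  have hhigh m (hm : ℓ < m) (hmr : m + n ≤ ℓ + r) : c m n = 0 := by
    rw [hcβ m (by omega), show m = ℓ + (m - ℓ) by omega, hrz (m - ℓ) (by omega) (by omega)]
  have hg' : g = ∑ i ∈ range n, C (c (ℓ - i) n) * X ^ i :=
    hg.trans (sum_congr rfl fun i hi ↦ by rw [hcβ (ℓ - i) (by rw [mem_range] at hi; omega)])
  have htail : Δ_[1] ^[ℓ - j - n] (fun m ↦ c m n) (ℓ + 1) = 0 :=
    fwdDiff_iter_eq_zero_of_forall fun t ht ↦ hhigh (ℓ + 1 + t) (by omega) (by omega)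
  have hsymm := fwdDiff_iter_structConst_symm hne0 hc hrec (ℓ - j - n) (ℓ - n + 1)
  rw [show n + (ℓ - j - n) = ℓ - j by omega, show n + (ℓ - n + 1) = ℓ + 1 by omega, htail,
    mul_zero, neg_zero] at hsymm
  rw [hg', coeff_X_sub_one_pow_mul_sum_C_mul_X_pow (fun m ↦ c m n) _ (by omega)
    (fun m hm hmℓ ↦ hlow m (by omega) hmℓ) (fun m hm hmk ↦ hhigh m hm (by omega))]
  simpa using hsymm

/-- **Main argument (vanishing coefficients of `(x−1)^{ℓ−n+1} g(x)`).**
Let `F` be a field, `n > 1`, and `L` an algebra of type `n` over `F` with nonzero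
sequence `β` and first constituent length `ℓ`.  Let `r ≥ n` be such that
`β (ℓ+j) = 0` for `0 < j ≤ r − n`, and set `g(x) = Σ_{i=0}^{n−1} β (ℓ−i) x^i`.
Then the coefficient of `x^j` in `(x−1)^{ℓ−n+1} g(x)` vanishes for
`ℓ − r < j ≤ ℓ − n`. -/
theorem coeff_vanishing_from_second_constituent
    {F : Type*} [Field F]
    (n : ℕ) (hn1 : 1 < n)
    {L : Type*} [LieRing L] [LieAlgebra F L]
    (Lc : ℕ → Submodule F L)
    (hinternal : DirectSum.IsInternal Lc)
    (h0 : Lc 0 = ⊥)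
    (hgrade : ∀ i j : ℕ, ∀ x ∈ Lc i, ∀ y ∈ Lc j, ⁅x, y⁆ ∈ Lc (i + j))
    (hdim1 : Module.finrank F (Lc 1) = 1)
    (hmid : ∀ i : ℕ, 1 < i → i < n → Lc i = ⊥)
    (hdimn : ∀ i : ℕ, n ≤ i → Module.finrank F (Lc i) = 1)
    (hgen : ∀ i : ℕ, n ≤ i →
      Lc (i + 1) = Submodule.span F {w : L | ∃ x ∈ Lc i, ∃ u ∈ Lc 1, w = ⁅x, u⁆})
    (z : L) (hz : z ∈ Lc 1) (hz0 : z ≠ 0)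
    (e : ℕ → L) (hen : e n ∈ Lc n) (hen0 : e n ≠ 0)
    (hrec : ∀ i : ℕ, n ≤ i → e (i + 1) = ⁅e i, z⁆)
    (β : ℕ → F) (hβ : ∀ i : ℕ, n < i → ⁅e i, e n⁆ = β i • e (i + n))
    (hne : ∃ i : ℕ, n < i ∧ β i ≠ 0)
    (ℓ : ℕ) (hℓ2n : 2 * n ≤ ℓ)
    (hfz : ∀ i : ℕ, n < i → i + n ≤ ℓ → β i = 0)
    (hfl : β (ℓ - n + 1) ≠ 0)
    (r : ℕ) (hr : n ≤ r)
    (hrz : ∀ j : ℕ, 0 < j → j + n ≤ r → β (ℓ + j) = 0)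
    (g : Polynomial F)
    (hg : g = ∑ i ∈ Finset.range n, Polynomial.C (β (ℓ - i)) * Polynomial.X ^ i) :
    ∀ j : ℕ, ℓ < j + r → j + n ≤ ℓ →
      ((Polynomial.X - 1) ^ (ℓ - n + 1) * g).coeff j = 0 :=
  coeff_vanishing_from_second_constituent_general n Lc hgrade hdim1 hdimn hgen z hz hz0 e hen hen0
    hrec β hβ ℓ hℓ2n hfz r hrz g hg
end

section
/- Let F be a field, L a Lie algebra over F, n ≥ 1 an integer, z ∈ L, e : ℕ → L a sequence of elements with e_{i+1} = ⁅e_i, z⁆ for all i ≥ n, and β : ℕ → F scalars with ⁅e_i, e_n⁆ = β_i • e_{i+n} for all i ≥ n. Then for all integers a, b with a ≥ n and b ≥ n, ⁅e_a, e_b⁆ = (Σ_{i=0}^{b−n} (−1)^i C(b−n, i) β_{a+i}) • e_{a+b}, where C(b−n, i) denotes the binomial coefficient interpreted in F. -/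
/-!
Bracketing `⁅e a, e b⁆ = γ • e (a + b)` with `z` and using the Jacobi identity gives
`⁅e a, e (b + 1)⁆ = ⁅⁅e a, e b⁆, z⁆ - ⁅e (a + 1), e b⁆`, so the coefficients obey
`γ (m + 1, a) = γ (m, a) - γ (m, a + 1)` with `γ (0, a) = β a`. Pascal's rule shows that the
alternating binomial sums satisfy the same recursion.
-/

open Finset

theorem sum_range_succ_alternating_choose_mul {R : Type*} [CommRing R] (m : ℕ) (f : ℕ → R) :
    ∑ i ∈ range (m + 2), (-1) ^ i * ((m + 1).choose i : R) * f i =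
      ∑ i ∈ range (m + 1), (-1) ^ i * (m.choose i : R) * f i -
        ∑ i ∈ range (m + 1), (-1) ^ i * (m.choose i : R) * f (i + 1) := by
  have pascal : ∑ i ∈ range (m + 1), (-1) ^ (i + 1) * ((m + 1).choose (i + 1) : R) * f (i + 1) =
      ∑ i ∈ range (m + 1), (-1) ^ (i + 1) * (m.choose (i + 1) : R) * f (i + 1) -
        ∑ i ∈ range (m + 1), (-1) ^ i * (m.choose i : R) * f (i + 1) := by
    rw [← sum_sub_distrib]
    refine sum_congr rfl fun i _ => ?_
    rw [Nat.choose_succ_succ, Nat.cast_add]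
    ring
  have top_vanishes : ∑ i ∈ range (m + 1), (-1) ^ i * (m.choose i : R) * f i =
      ∑ i ∈ range (m + 2), (-1) ^ i * (m.choose i : R) * f i := by
    simp [sum_range_succ _ (m + 1), Nat.choose_succ_self]
  rw [top_vanishes, sum_range_succ', sum_range_succ' _ (m + 1), pascal]
  simp only [pow_zero, Nat.choose_zero_right]
  ring

theorem lie_succ_right_of_eq_lie {L : Type*} [LieRing L] {z : L} {e : ℕ → L} {n : ℕ}
    (hrec : ∀ i, n ≤ i → e (i + 1) = ⁅e i, z⁆) {a b : ℕ} (ha : n ≤ a) (hb : n ≤ b) :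
    ⁅e a, e (b + 1)⁆ = ⁅⁅e a, e b⁆, z⁆ - ⁅e (a + 1), e b⁆ := by
  rw [hrec b hb, leibniz_lie, hrec a ha, ← lie_skew (e b), sub_eq_add_neg]

theorem bracket_expansion_general
    {F : Type*} [Field F]
    {L : Type*} [LieRing L] [LieAlgebra F L]
    (n : ℕ) (z : L) (e : ℕ → L)
    (hrec : ∀ i : ℕ, n ≤ i → e (i + 1) = ⁅e i, z⁆)
    (β : ℕ → F)
    (hβ : ∀ i : ℕ, n ≤ i → ⁅e i, e n⁆ = β i • e (i + n))
    (a b : ℕ) (ha : n ≤ a) (hb : n ≤ b) :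
    ⁅e a, e b⁆ =
      (∑ i ∈ Finset.range (b - n + 1),
        (-1 : F) ^ i * ((b - n).choose i : F) * β (a + i)) • e (a + b) := by
  obtain ⟨m, rfl⟩ := Nat.exists_eq_add_of_le hb
  rw [Nat.add_sub_cancel_left]
  induction m generalizing a with
  | zero => simpa using hβ a ha
  | succ m ih =>
    have hnm : n ≤ n + m := le_add_right le_rfl
    rw [← add_assoc, lie_succ_right_of_eq_lie hrec ha hnm, ih a ha hnm,
      ih (a + 1) (le_add_right ha) hnm, smul_lie, ← hrec _ (le_add_left hnm),
      sum_range_succ_alternating_choose_mul, sub_smul]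
    simp only [add_assoc, add_comm 1]

/-- **Lemma (expansion of `[e_a, e_b]`).**
Let `L` be a Lie algebra over a field `F`, `n ≥ 1`, `z ∈ L`, `e : ℕ → L` with
`e (i+1) = ⁅e i, z⁆` for `i ≥ n`, and `β : ℕ → F` with `⁅e i, e n⁆ = β i • e (i+n)`
for `i ≥ n`.  Then for all `a, b ≥ n`:
`⁅e a, e b⁆ = (Σ_{i=0}^{b−n} (−1)^i C(b−n, i) β (a+i)) • e (a+b)`. -/
theorem bracket_expansion
    {F : Type*} [Field F]
    {L : Type*} [LieRing L] [LieAlgebra F L]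
    (n : ℕ) (hn : 1 ≤ n) (z : L) (e : ℕ → L)
    (hrec : ∀ i : ℕ, n ≤ i → e (i + 1) = ⁅e i, z⁆)
    (β : ℕ → F)
    (hβ : ∀ i : ℕ, n ≤ i → ⁅e i, e n⁆ = β i • e (i + n))
    (a b : ℕ) (ha : n ≤ a) (hb : n ≤ b) :
    ⁅e a, e b⁆ =
      (∑ i ∈ Finset.range (b - n + 1),
        (-1 : F) ^ i * ((b - n).choose i : F) * β (a + i)) • e (a + b) :=
  bracket_expansion_general n z e hrec β hβ a b ha hb
end

section
/- Let F be a field and let L = ⊕_{i≥1} L_i be an algebra of type 1 over F, that is, an ℕ-graded Lie algebra with dim L_1 = 2, dim L_i = 1 for all i > 1, and ⁅L_i, L_1⁆ = L_{i+1} for all i ≥ 1. Let y ∈ L_1 satisfy ⁅u, y⁆ = 0 for all u ∈ L_2. Then ⁅⁅u, y⁆, y⁆ = 0 for every i ≥ 1 and every u ∈ L_i. -/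
/-!
Write `K` for the kernel of `ad y`. If `L_i ⊆ K` but `L_{i+1} ⊄ K`, then, since `L_{i+1}` is
spanned by brackets `⁅e, v⁆` with `e ∈ L_i`, `v ∈ L_1`, some `⁅y, ⁅e, v⁆⁆ = ⁅e, ⁅y, v⁆⁆` is nonzero;
it spans the line `L_{i+2}`, and `ad y` kills it because `ad y` kills `e` and `⁅y, v⁆ ∈ L_2`.
Starting from `L_2 ⊆ K`, this shows that of any two consecutive components `L_i`, `L_{i+1}`
(`i ≥ 1`) one lies in `K`; in either case `(ad y)² L_i = 0`.
-/

open LieAlgebra LinearMap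

section

variable {F L : Type*} [Field F] [LieRing L] [LieAlgebra F L] {Lc : ℕ → Submodule F L} {y : L}

theorem le_ker_ad_add_two_of_not_le_ker_ad_succ
    (hgrade : ∀ i j : ℕ, ∀ x ∈ Lc i, ∀ y ∈ Lc j, ⁅x, y⁆ ∈ Lc (i + j))
    (hdim : ∀ i : ℕ, 1 < i → Module.finrank F (Lc i) = 1)
    (hgen : ∀ i : ℕ, 1 ≤ i →
      Lc (i + 1) = Submodule.span F {w : L | ∃ x ∈ Lc i, ∃ u ∈ Lc 1, w = ⁅x, u⁆})
    (hy : y ∈ Lc 1) (hy2 : Lc 2 ≤ ker (ad F L y)) {i : ℕ} (hi : 1 ≤ i)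
    (hker : Lc i ≤ ker (ad F L y)) (hnot : ¬Lc (i + 1) ≤ ker (ad F L y)) :
    Lc (i + 2) ≤ ker (ad F L y) := by
  obtain ⟨e, he, v, hv, hne⟩ : ∃ e ∈ Lc i, ∃ v ∈ Lc 1, ⁅y, ⁅e, v⁆⁆ ≠ 0 := by
    by_contra! h
    refine hnot ((hgen i hi).trans_le (Submodule.span_le.2 ?_))
    rintro _ ⟨e, he, v, hv, rfl⟩
    simpa using h e he v hv
  have hey : ⁅y, e⁆ = 0 := by simpa using hker he
  have hyv : ⁅y, v⁆ ∈ Lc 2 := hgrade 1 1 y hy v hv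
  have hderiv : ⁅y, ⁅e, v⁆⁆ = ⁅e, ⁅y, v⁆⁆ := by rw [leibniz_lie, hey, zero_lie, zero_add]
  have hyyv : ⁅y, ⁅y, v⁆⁆ = 0 := by simpa using hy2 hyv
  have hline : Lc (i + 2) = F ∙ ⁅e, ⁅y, v⁆⁆ :=
    eq_span_singleton_of_mem_of_finrank_eq_one (hdim (i + 2) (by omega))
      (hgrade i 2 e he _ hyv) (hderiv ▸ hne)
  rw [hline, Submodule.span_singleton_le_iff_mem, mem_ker, ad_apply, leibniz_lie, hey, zero_lie,
    zero_add, hyyv, lie_zero]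

theorem le_ker_ad_or_le_ker_ad_succ
    (hgrade : ∀ i j : ℕ, ∀ x ∈ Lc i, ∀ y ∈ Lc j, ⁅x, y⁆ ∈ Lc (i + j))
    (hdim : ∀ i : ℕ, 1 < i → Module.finrank F (Lc i) = 1)
    (hgen : ∀ i : ℕ, 1 ≤ i →
      Lc (i + 1) = Submodule.span F {w : L | ∃ x ∈ Lc i, ∃ u ∈ Lc 1, w = ⁅x, u⁆})
    (hy : y ∈ Lc 1) (hy2 : Lc 2 ≤ ker (ad F L y)) {i : ℕ} (hi : 1 ≤ i) :
    Lc i ≤ ker (ad F L y) ∨ Lc (i + 1) ≤ ker (ad F L y) := by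
  induction i, hi using Nat.le_induction with
  | base => exact Or.inr hy2
  | succ i hi ih =>
    by_cases hsucc : Lc (i + 1) ≤ ker (ad F L y)
    · exact Or.inl hsucc
    · exact Or.inr <| le_ker_ad_add_two_of_not_le_ker_ad_succ hgrade hdim hgen hy hy2 hi
        (ih.resolve_right hsucc) hsucc

end

theorem type_one_sandwich_general
    {F : Type*} [Field F]
    {L : Type*} [LieRing L] [LieAlgebra F L]
    (Lc : ℕ → Submodule F L)
    (hgrade : ∀ i j : ℕ, ∀ x ∈ Lc i, ∀ y ∈ Lc j, ⁅x, y⁆ ∈ Lc (i + j))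
    (hdim : ∀ i : ℕ, 1 < i → Module.finrank F (Lc i) = 1)
    (hgen : ∀ i : ℕ, 1 ≤ i →
      Lc (i + 1) = Submodule.span F {w : L | ∃ x ∈ Lc i, ∃ u ∈ Lc 1, w = ⁅x, u⁆})
    (y : L) (hy : y ∈ Lc 1)
    (hy2 : ∀ u ∈ Lc 2, ⁅u, y⁆ = 0) :
    ∀ i : ℕ, 1 ≤ i → ∀ u ∈ Lc i, ⁅⁅u, y⁆, y⁆ = 0 := by
  have hy2' : Lc 2 ≤ ker (ad F L y) := fun u hu => by
    rw [mem_ker, ad_apply, ← neg_eq_zero, lie_skew, hy2 u hu]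
  intro i hi u hu
  suffices ⁅y, ⁅y, u⁆⁆ = 0 by rw [← lie_skew u y, neg_lie, ← lie_skew _ y, neg_neg, this]
  rcases le_ker_ad_or_le_ker_ad_succ hgrade hdim hgen hy hy2' hi with hker | hker
  · rw [(by simpa using hker hu : ⁅y, u⁆ = 0), lie_zero]
  · simpa using hker (add_comm 1 i ▸ hgrade 1 i y hy u hu)

/-- **Lemma (sandwich property in algebras of type 1).**
Let `L = ⊕_{i≥1} L_i` be an algebra of type `1` over a field `F`
(an ℕ-graded Lie algebra with `dim L_1 = 2`, `dim L_i = 1` for `i > 1`, and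
`⁅L_i, L_1⁆ = L_{i+1}` for `i ≥ 1`), and let `y ∈ L_1` with `⁅L_2, y⁆ = 0`.
Then `⁅⁅u, y⁆, y⁆ = 0` for every `u ∈ L_i`, `i ≥ 1`. -/
theorem type_one_sandwich
    {F : Type*} [Field F]
    {L : Type*} [LieRing L] [LieAlgebra F L]
    (Lc : ℕ → Submodule F L)
    (hinternal : DirectSum.IsInternal Lc)
    (h0 : Lc 0 = ⊥)
    (hgrade : ∀ i j : ℕ, ∀ x ∈ Lc i, ∀ y ∈ Lc j, ⁅x, y⁆ ∈ Lc (i + j))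
    (hdim1 : Module.finrank F (Lc 1) = 2)
    (hdim : ∀ i : ℕ, 1 < i → Module.finrank F (Lc i) = 1)
    (hgen : ∀ i : ℕ, 1 ≤ i →
      Lc (i + 1) = Submodule.span F {w : L | ∃ x ∈ Lc i, ∃ u ∈ Lc 1, w = ⁅x, u⁆})
    (y : L) (hy : y ∈ Lc 1)
    (hy2 : ∀ u ∈ Lc 2, ⁅u, y⁆ = 0) :
    ∀ i : ℕ, 1 ≤ i → ∀ u ∈ Lc i, ⁅⁅u, y⁆, y⁆ = 0 :=
  type_one_sandwich_general Lc hgrade hdim hgen y hy hy2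
end

section
/- Let p be an odd prime, F a field of characteristic p, and n an integer with 1 < n < p. Let L be an algebra of type n over F with nonzero sequence (β_i), first constituent length ℓ > 4p with ℓ = q + k0 + n − 1 for a power q = p^c of p and an integer k0 with 2 ≤ k0 ≤ n − 2, and second constituent length ℓ₂ equal to q or q − 1. Let s be an integer with k0 ≤ s ≤ n − 1 such that β_{q+s} ≠ 0 and β_i = 0 for all i with q + s < i < q + k0 + ℓ₂; set t := k0 + ℓ₂ − s − n + 1 and m := q + k0 + ℓ₂. Then β_{m+i} = (−1)^i C((q−t)/2, i) β_m for every integer i with 0 ≤ i ≤ 2⌊s/2⌋ − 1, where C(·,·) is the binomial coefficient interpreted in F. -/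
/-!
Since `e (i + 1) = ⁅e i, z⁆`, induction on `d` gives
`⁅e i, e (n + d)⁆ = (-1) ^ d (Δ^d β)(i) • e (i + n + d)`. If `β (n + B) = 0`, the Jacobi identity
for `e a`, `e (n + B)`, `e n` then yields `(Δ^B β)(a) β(a + n + B) = β(a) (Δ^B β)(a + n)`.
Take `a = q + s - 1` or `a = q + s` and `B = q - E - 1` with `E` small, so that `n + B` lies in the
first constituent. The vanishing of `β` between `q + s` and `m` cuts both finite differences down
to a few terms, and `C(q - E - 1, j) = (-1)^j C(E + j, j)` in characteristic `p`. The result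
expresses `β (m + d)` through `β m, …, β (m + d - 1)` with leading coefficient `d` (`d` even,
`a = q + s - 1`) or `2` (`d` odd, `a = q + s`), both nonzero mod `p`. By an alternating
Vandermonde identity the candidate `(-1)^i C(u, i) β m` satisfies the same recursions, so the two
sequences agree.
-/

open Finset fwdDiff
open scoped Nat

theorem Submodule.le_span_singleton_of_finrank_eq_one {K V : Type*} [DivisionRing K]
    [AddCommGroup V] [Module K V] {S : Submodule K V} (hS : Module.finrank K S = 1)
    {x : V} (hx : x ∈ S) (hx0 : x ≠ 0) : S ≤ Submodule.span K {x} := by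
  have : FiniteDimensional K S := .of_finrank_pos (by omega)
  refine (Submodule.eq_of_le_of_finrank_le ?_ ?_).ge
  · rwa [Submodule.span_le, Set.singleton_subset_iff]
  · rw [hS, finrank_span_singleton hx0]

section Graded

variable {F L : Type*} [Field F] [LieRing L] [LieAlgebra F L] {Lc : ℕ → Submodule F L} {n : ℕ}
  {z : L} {e : ℕ → L}

theorem graded_generator_ne_zero
    (hgrade : ∀ i j : ℕ, ∀ x ∈ Lc i, ∀ y ∈ Lc j, ⁅x, y⁆ ∈ Lc (i + j))
    (hdim1 : Module.finrank F (Lc 1) = 1)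
    (hdimn : ∀ i : ℕ, n ≤ i → Module.finrank F (Lc i) = 1)
    (hgen : ∀ i : ℕ, n ≤ i →
      Lc (i + 1) = Submodule.span F {w : L | ∃ x ∈ Lc i, ∃ u ∈ Lc 1, w = ⁅x, u⁆})
    (hz : z ∈ Lc 1) (hz0 : z ≠ 0) (hen : e n ∈ Lc n) (hen0 : e n ≠ 0)
    (hrec : ∀ i : ℕ, n ≤ i → e (i + 1) = ⁅e i, z⁆) {i : ℕ} (hi : n ≤ i) : e i ≠ 0 := by
  have hspan : e i ∈ Lc i ∧ Lc i ≤ Submodule.span F {e i} := by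
    induction i, hi using Nat.le_induction with
    | base => exact ⟨hen, Submodule.le_span_singleton_of_finrank_eq_one (hdimn n le_rfl) hen hen0⟩
    | succ i hi ih =>
      refine ⟨hrec i hi ▸ hgrade i 1 _ ih.1 z hz, ?_⟩
      rw [hgen i hi, Submodule.span_le]
      rintro _ ⟨x, hx, y, hy, rfl⟩
      obtain ⟨a, rfl⟩ := Submodule.mem_span_singleton.mp (ih.2 hx)
      obtain ⟨b, rfl⟩ := Submodule.mem_span_singleton.mp
        (Submodule.le_span_singleton_of_finrank_eq_one hdim1 hz hz0 hy)
      rw [smul_lie, lie_smul, smul_smul, ← hrec i hi]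
      exact Submodule.smul_mem _ _ (Submodule.mem_span_singleton_self _)
  intro h0
  have hbot := hspan.2
  rw [h0, Submodule.span_zero_singleton, le_bot_iff] at hbot
  have hdim := hdimn i hi
  rw [hbot, finrank_bot] at hdim
  exact zero_ne_one hdim

end Graded

section Brackets

variable {R L : Type*} [CommRing R] [LieRing L] [LieAlgebra R L] {n : ℕ} {z : L} {e : ℕ → L}
  {β : ℕ → R}

theorem lie_eq_fwdDiff_iter_smul (hrec : ∀ i : ℕ, n ≤ i → e (i + 1) = ⁅e i, z⁆)
    (hβ : ∀ i : ℕ, n < i → ⁅e i, e n⁆ = β i • e (i + n)) (d : ℕ) {i : ℕ} (hi : n < i) :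
    ⁅e i, e (n + d)⁆ = ((-1) ^ d * Δ_[1] ^[d] β i) • e (i + n + d) := by
  induction d generalizing i with
  | zero => simpa using hβ i hi
  | succ d ih =>
    rw [← add_assoc, hrec _ (by omega), leibniz_lie, ih hi, ← hrec i hi.le,
      ← lie_skew (e (n + d)), ih (by omega), smul_lie, ← hrec _ (by omega),
      show i + 1 + n + d = i + n + d + 1 by omega, ← sub_eq_add_neg, ← sub_smul,
      Function.iterate_succ_apply', fwdDiff, ← add_assoc]
    congr 1
    ring

theorem fwdDiff_iter_mul_eq_mul_fwdDiff_iter [IsDomain R] [Module.IsTorsionFree R L]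
    (hrec : ∀ i : ℕ, n ≤ i → e (i + 1) = ⁅e i, z⁆)
    (hβ : ∀ i : ℕ, n < i → ⁅e i, e n⁆ = β i • e (i + n)) (he : ∀ i, n ≤ i → e i ≠ 0)
    {a B : ℕ} (ha : n < a) (hB : 0 < B) (hβB : β (n + B) = 0) :
    Δ_[1] ^[B] β a * β (a + n + B) = β a * Δ_[1] ^[B] β (a + n) := by
  have hjac := lie_lie (e a) (e (n + B)) (e n)
  rw [hβ _ (by omega), hβB, zero_smul, lie_zero, zero_sub, hβ a ha, lie_smul,
    ← lie_skew (e (n + B)),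
    lie_eq_fwdDiff_iter_smul hrec hβ B ha, lie_eq_fwdDiff_iter_smul hrec hβ B (by omega),
    smul_lie, hβ _ (by omega), smul_smul, smul_neg, neg_neg, smul_smul,
    show a + n + n + B = a + n + B + n by omega] at hjac
  have hcoeff := smul_left_injective R (he _ (by omega : n ≤ a + n + B + n)) hjac
  exact mul_left_cancel₀ (pow_ne_zero B (neg_ne_zero.2 one_ne_zero))
    (by linear_combination hcoeff)

end Brackets

section FiniteDifferences

variable {R : Type*} [CommRing R]

theorem fwdDiff_iter_eq_sum_nat (f : ℕ → R) (B i : ℕ) :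
    Δ_[1] ^[B] f i = ∑ k ∈ range (B + 1), (-1) ^ (B - k) * (B.choose k : R) * f (i + k) := by
  simp [fwdDiff_iter_eq_sum_shift, zsmul_eq_mul]

theorem fwdDiff_iter_eq_sum_of_eq_zero_above {f : ℕ → R} {B i r : ℕ} (hr : r ≤ B)
    (hf : ∀ k, r < k → k ≤ B → f (i + k) = 0) :
    Δ_[1] ^[B] f i = ∑ k ∈ range (r + 1), (-1) ^ (B - k) * (B.choose k : R) * f (i + k) := by
  rw [fwdDiff_iter_eq_sum_nat, show B + 1 = r + 1 + (B - r) by omega, sum_range_add,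
    add_eq_left]
  exact sum_eq_zero fun k hk => by
    rw [hf _ (by omega) (by have := mem_range.1 hk; omega), mul_zero]

theorem fwdDiff_iter_eq_sum_of_eq_zero_below {f : ℕ → R} {B i d : ℕ} (hd : d ≤ B)
    (hf : ∀ k, k + d < B → f (i + k) = 0) :
    Δ_[1] ^[B] f i =
      ∑ h ∈ range (d + 1), (-1) ^ (d - h) * (B.choose (d - h) : R) * f (i + (B - d) + h) := by
  rw [fwdDiff_iter_eq_sum_nat, show B + 1 = B - d + (d + 1) by omega, sum_range_add,
    sum_eq_zero fun k hk => by rw [hf _ (by have := mem_range.1 hk; omega), mul_zero], zero_add]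
  refine sum_congr rfl fun h hh => ?_
  rw [mem_range] at hh
  rw [show B - (B - d + h) = d - h by omega,
    Nat.choose_symm_of_eq_add (show B = B - d + h + (d - h) by omega), add_assoc]

end FiniteDifferences

section Binomial

theorem cast_descFactorial_sub_succ {R : Type*} [CommRing R] {q E j : ℕ} (hq : (q : R) = 0)
    (hj : E + j ≤ q) :
    ((q - (E + 1)).descFactorial j : R) = (-1) ^ j * (E + 1).ascFactorial j := by
  induction j with
  | zero => simp
  | succ j ih =>
    rw [Nat.descFactorial_succ, Nat.ascFactorial_succ, Nat.sub_sub,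
      Nat.cast_mul, Nat.cast_sub (by omega), ih (by omega), hq]
    push_cast
    ring

theorem cast_choose_sub_succ {F : Type*} [Field F] {q E j : ℕ} (hq : (q : F) = 0)
    (hj : E + j ≤ q) (hfact : (j ! : F) ≠ 0) :
    ((q - (E + 1)).choose j : F) = (-1) ^ j * (E + j).choose j := by
  have h := cast_descFactorial_sub_succ hq hj
  rw [Nat.descFactorial_eq_factorial_mul_choose, Nat.ascFactorial_eq_factorial_mul_choose,
    Nat.cast_mul, Nat.cast_mul] at h
  exact mul_left_cancel₀ hfact (by linear_combination h)

variable {R : Type*} [CommRing R]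

theorem sum_neg_one_pow_mul_choose_mul_choose (u b d : ℕ) :
    ∑ h ∈ range (d + 1), (-1 : R) ^ h * u.choose h * (u + b - h).choose (d - h) = b.choose d := by
  induction u generalizing b d with
  | zero => simp [sum_range_succ', Nat.choose_zero_succ]
  | succ u ih =>
    cases d with
    | zero => simp
    | succ d =>
      have hsplit : ∀ h ∈ range (d + 1),
          (-1 : R) ^ (h + 1) * ((u + 1).choose (h + 1) : R) *
              (u + 1 + b - (h + 1)).choose (d + 1 - (h + 1)) =
            (-1) ^ (h + 1) * (u.choose (h + 1) : R) *
                (u + (b + 1) - (h + 1)).choose (d + 1 - (h + 1)) -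
              (-1) ^ h * (u.choose h : R) * (u + b - h).choose (d - h) := by
        intro h _
        rw [Nat.choose_succ_succ', show u + 1 + b - (h + 1) = u + b - h by omega,
          show u + (b + 1) - (h + 1) = u + b - h by omega, show d + 1 - (h + 1) = d - h by omega]
        push_cast
        ring
      calc _ = ∑ h ∈ range (d + 2), (-1 : R) ^ h * u.choose h * (u + (b + 1) - h).choose (d + 1 - h)
            - ∑ h ∈ range (d + 1), (-1 : R) ^ h * u.choose h * (u + b - h).choose (d - h) := by
              rw [sum_range_succ', sum_range_succ' _ (d + 1), sum_congr rfl hsplit, sum_sub_distrib]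
              simp only [Nat.reduceSubDiff, pow_zero, Nat.choose_zero_right, Nat.cast_one, mul_one,
                show u + 1 + b = u + (b + 1) by omega, tsub_zero, one_mul]
              ring
        _ = _ := by rw [ih, ih, Nat.choose_succ_succ' b d]; push_cast; ring

theorem choose_even_recursion {u d : ℕ} (hd : Even d) (hd0 : 0 < d) (hu : 0 < u) :
    (d : R) * ((-1) ^ d * u.choose d) =
      -u * ∑ h ∈ range d, (-1) ^ h * (u.choose h : R) * (2 * u - 1 - h).choose (d - h) := by
  obtain ⟨u, rfl⟩ : ∃ v, u = v + 1 := ⟨u - 1, by omega⟩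
  obtain ⟨d, rfl⟩ : ∃ c, d = c + 1 := ⟨d - 1, by omega⟩
  have hsum := sum_neg_one_pow_mul_choose_mul_choose (R := R) (u + 1) u (d + 1)
  rw [sum_range_succ, Nat.sub_self, Nat.choose_zero_right, hd.neg_one_pow,
    show u + 1 + u = 2 * (u + 1) - 1 by omega] at hsum
  have hpascal : ((u + 1).choose (d + 1) : R) = u.choose d + u.choose (d + 1) := by
    rw [Nat.choose_succ_succ', Nat.cast_add]
  have habsorb : ((u + 1 : ℕ) : R) * u.choose d = (u + 1).choose (d + 1) * (d + 1 : ℕ) := by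
    rw [← Nat.cast_mul, Nat.add_one_mul_choose_eq, Nat.cast_mul]
  rw [hd.neg_one_pow, Nat.cast_one] at *
  linear_combination ((u + 1 : ℕ) : R) * hsum - ((u + 1 : ℕ) : R) * hpascal - habsorb

theorem choose_odd_recursion {u d : ℕ} (hd : Odd d) :
    2 * ((-1) ^ d * (u.choose d : R)) =
      -∑ h ∈ range d, (-1) ^ h * (u.choose h : R) * (2 * u - h).choose (d - h) := by
  have hsum := sum_neg_one_pow_mul_choose_mul_choose (R := R) u u d
  rw [sum_range_succ, Nat.sub_self, Nat.choose_zero_right, hd.neg_one_pow, ← two_mul] at hsum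
  rw [hd.neg_one_pow, Nat.cast_one] at *
  linear_combination hsum

end Binomial

theorem natCast_ne_zero_of_lt_char {F : Type*} [Field F] {p : ℕ} [CharP F p] {j : ℕ}
    (hj : 0 < j) (hjp : j < p) : (j : F) ≠ 0 := by
  rw [Ne, CharP.cast_eq_zero_iff F p]
  exact Nat.not_dvd_of_pos_of_lt hj hjp

/-- `q + s` is the last index of the first constituent with `β ≠ 0`, `m` the first one of the
second constituent, and `u` is the paper's `(q - t) / 2`. -/
structure ConstituentGap {F : Type*} [Field F] (p : ℕ) (β : ℕ → F) (n q s m u : ℕ) : Prop where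
  prime : p.Prime
  n_lt_p : n < p
  s_lt_n : s < n
  n_lt_q : n < q
  s_lt_two_mul : s < 2 * u
  two_mul_lt_q : 2 * u + 1 < q
  odd_q : Odd q
  cast_q : (q : F) = 0
  index_m : m + 2 * u + 1 = 2 * q + s + n
  jacobi : ∀ a B, n < a → 0 < B → β (n + B) = 0 →
    Δ_[1] ^[B] β a * β (a + n + B) = β a * Δ_[1] ^[B] β (a + n)
  eq_zero_of_lt : ∀ i, n < i → i < m - q → β i = 0
  eq_zero_of_gap : ∀ i, q + s < i → i < m → β i = 0
  trailing_ne_zero : β (q + s) ≠ 0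
  leading_ne_zero : β m ≠ 0

namespace ConstituentGap

variable {F : Type*} [Field F] {p : ℕ} {β : ℕ → F} {n q s m u : ℕ}

theorem jacobi_truncated [CharP F p] (h : ConstituentGap p β n q s m u) {w d E : ℕ}
    (hws : w ≤ s) (hsw : s ≤ w + 1) (hdw : d < w) (hE : E + d + s = 2 * u + w) :
    (∑ k ∈ range (s - w + 1),
        (-1) ^ (q - (E + 1) - k) * ((q - (E + 1)).choose k : F) * β (q + w + k)) * β (m + d) =
      β (q + w) * ∑ j ∈ range (d + 1), ((E + (d - j)).choose (d - j) : F) * β (m + j) := by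
  obtain ⟨hp, hnp, hsn, hnq, -, huq, -, hq0, hm, hjac, hlow, hgap, -, -⟩ := h
  have habd : q + w + n + (q - (E + 1)) = m + d := by omega
  have key := hjac (q + w) (q - (E + 1)) (by omega) (by omega)
    (hlow _ (by omega) (by omega))
  rw [fwdDiff_iter_eq_sum_of_eq_zero_above (r := s - w) (by omega)
      (fun k hk hkB => hgap _ (by omega) (by omega)),
    fwdDiff_iter_eq_sum_of_eq_zero_below (d := d) (by omega)
      (fun k hk => hgap _ (by omega) (by omega)), habd] at key
  rw [key]
  congr 1
  refine sum_congr rfl fun j hj => ?_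
  rw [mem_range] at hj
  have hfact : ((d - j) ! : F) ≠ 0 := by
    rw [Ne, CharP.cast_eq_zero_iff F p, hp.dvd_factorial]
    omega
  rw [show q + w + n + (q - (E + 1) - d) + j = m + j by omega,
    cast_choose_sub_succ hq0 (by omega) hfact, ← mul_assoc, ← pow_add,
    Even.neg_one_pow ⟨_, rfl⟩, one_mul]

theorem cast_sub (h : ConstituentGap p β n q s m u) {E : ℕ} (hEq : E ≤ q) :
    ((q - E : ℕ) : F) = -E := by
  rw [Nat.cast_sub hEq, h.cast_q, zero_sub]

theorem pred_trailing_eq [CharP F p] (h : ConstituentGap p β n q s m u) (hs : 2 ≤ s) :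
    β (q + (s - 1)) = -u * β (q + s) := by
  have hsu := h.s_lt_two_mul
  have huq := h.two_mul_lt_q
  have key := h.jacobi_truncated (w := s - 1) (d := 0) (E := 2 * u - 1) (by omega) (by omega)
    (by omega) (by omega)
  have hB : Odd (q - 2 * u) := Nat.Odd.sub_even (by omega) h.odd_q (even_two_mul u)
  rw [show s - (s - 1) + 1 = 2 by omega, show 2 * u - 1 + 1 = 2 * u by omega, sum_range_succ,
    sum_range_one, sum_range_one, show q + (s - 1) + 1 = q + s by omega] at key
  simp only [Nat.sub_zero, Nat.choose_zero_right, Nat.choose_one_right, Nat.cast_one, add_zero,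
    mul_one, one_mul, hB.neg_one_pow, (Nat.Odd.sub_odd hB odd_one).neg_one_pow,
    h.cast_sub (show 2 * u ≤ q by omega), Nat.cast_mul, Nat.cast_ofNat] at key
  have h2 : ((2 : ℕ) : F) ≠ 0 :=
    natCast_ne_zero_of_lt_char two_pos (by linarith [h.s_lt_n, h.n_lt_p])
  push_cast at h2
  apply mul_left_cancel₀ (mul_ne_zero h2 h.leading_ne_zero)
  linear_combination -key

theorem even_recursion [CharP F p] (h : ConstituentGap p β n q s m u) {d : ℕ} (hd : Even d)
    (hds : d + 2 ≤ s) :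
    (d : F) * β (m + d) =
      -u * ∑ j ∈ range d, ((2 * u - 1 - j).choose (d - j) : F) * β (m + j) := by
  have hsu := h.s_lt_two_mul
  have huq := h.two_mul_lt_q
  have key := h.jacobi_truncated (w := s - 1) (d := d) (E := 2 * u - d - 1) (by omega) (by omega)
    (by omega) (by omega)
  have hB : Odd (q - (2 * u - d)) :=
    Nat.Odd.sub_even (by omega) h.odd_q
      (by simpa [Nat.even_sub (show d ≤ 2 * u by omega)] using hd)
  have hsum : ∑ j ∈ range (d + 1), ((2 * u - d - 1 + (d - j)).choose (d - j) : F) * β (m + j) =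
      ∑ j ∈ range d, ((2 * u - 1 - j).choose (d - j) : F) * β (m + j) + β (m + d) := by
    rw [sum_range_succ, Nat.sub_self, Nat.choose_zero_right, Nat.cast_one, one_mul]
    congr 1
    exact sum_congr rfl fun j hj => by
      rw [show 2 * u - d - 1 + (d - j) = 2 * u - 1 - j by have := mem_range.1 hj; omega]
  rw [hsum, show s - (s - 1) + 1 = 2 by omega, show 2 * u - d - 1 + 1 = 2 * u - d by omega,
    sum_range_succ, sum_range_one, show q + (s - 1) + 1 = q + s by omega] at key
  simp only [Nat.sub_zero, Nat.choose_zero_right, Nat.choose_one_right, Nat.cast_one, add_zero,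
    mul_one, one_mul, h.pred_trailing_eq (by omega : 2 ≤ s), hB.neg_one_pow,
    (Nat.Odd.sub_odd hB odd_one).neg_one_pow,
    h.cast_sub (show 2 * u - d ≤ q by omega), Nat.cast_sub (show d ≤ 2 * u by omega),
    Nat.cast_mul, Nat.cast_ofNat] at key
  apply mul_left_cancel₀ h.trailing_ne_zero
  linear_combination key

theorem odd_recursion [CharP F p] (h : ConstituentGap p β n q s m u) {d : ℕ} (hd : Odd d)
    (hds : d < s) :
    2 * β (m + d) = -∑ j ∈ range d, ((2 * u - j).choose (d - j) : F) * β (m + j) := by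
  have hsu := h.s_lt_two_mul
  have huq := h.two_mul_lt_q
  have key := h.jacobi_truncated (w := s) (d := d) (E := 2 * u - d) le_rfl (by omega) hds (by omega)
  have hB : Odd (q - (2 * u - d + 1)) := Nat.Odd.sub_even (by omega) h.odd_q
    (by simpa [Nat.even_add_one, Nat.even_sub (show d ≤ 2 * u by omega), parity_simps] using hd)
  have hsum : ∑ j ∈ range (d + 1), ((2 * u - d + (d - j)).choose (d - j) : F) * β (m + j) =
      ∑ j ∈ range d, ((2 * u - j).choose (d - j) : F) * β (m + j) + β (m + d) := by
    rw [sum_range_succ, Nat.sub_self, Nat.choose_zero_right, Nat.cast_one, one_mul]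
    congr 1
    exact sum_congr rfl fun j hj => by
      rw [show 2 * u - d + (d - j) = 2 * u - j by have := mem_range.1 hj; omega]
  rw [hsum, Nat.sub_self, zero_add, sum_range_one, add_zero] at key
  simp only [Nat.sub_zero, Nat.choose_zero_right, Nat.cast_one, mul_one, hB.neg_one_pow] at key
  apply mul_left_cancel₀ h.trailing_ne_zero
  linear_combination -key

theorem initial_values [CharP F p] (h : ConstituentGap p β n q s m u) :
    ∀ i, i ≤ 2 * (s / 2) - 1 → β (m + i) = (-1) ^ i * (u.choose i : F) * β m := by
  intro d hd
  induction d using Nat.strong_induction_on with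
  | _ d ih =>
  obtain rfl | hd0 := d.eq_zero_or_pos
  · simp
  have hsub (f : ℕ → F) : ∑ j ∈ range d, f j * β (m + j) =
      (∑ j ∈ range d, (-1) ^ j * (u.choose j : F) * f j) * β m := by
    rw [sum_mul]
    refine sum_congr rfl fun j hj => ?_
    rw [mem_range] at hj
    rw [ih j hj (by omega)]
    ring
  have hsu := h.s_lt_two_mul
  have hsn := h.s_lt_n
  have hnp := h.n_lt_p
  rcases Nat.even_or_odd d with hev | hodd
  · have hrel := h.even_recursion hev (by have := Nat.even_iff.mp hev; omega)
    have hid := choose_even_recursion (R := F) hev hd0 (by omega : 0 < u)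
    rw [hsub] at hrel
    apply mul_left_cancel₀ (natCast_ne_zero_of_lt_char hd0 (by omega))
    linear_combination hrel - β m * hid
  · have hrel := h.odd_recursion hodd (by omega)
    have hid := choose_odd_recursion (R := F) (u := u) hodd
    rw [hsub] at hrel
    have h2 : ((2 : ℕ) : F) ≠ 0 := natCast_ne_zero_of_lt_char two_pos (by omega)
    apply mul_left_cancel₀ (by exact_mod_cast h2 : (2 : F) ≠ 0)
    linear_combination hrel - β m * hid

end ConstituentGap

theorem second_constituent_initial_values_general
    (p : ℕ) (hp : p.Prime) (hodd : Odd p)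
    (n : ℕ) (hnp : n < p)
    {F : Type*} [Field F] [CharP F p]
    {L : Type*} [LieRing L] [LieAlgebra F L]
    (Lc : ℕ → Submodule F L)
    (hgrade : ∀ i j : ℕ, ∀ x ∈ Lc i, ∀ y ∈ Lc j, ⁅x, y⁆ ∈ Lc (i + j))
    (hdim1 : Module.finrank F (Lc 1) = 1)
    (hdimn : ∀ i : ℕ, n ≤ i → Module.finrank F (Lc i) = 1)
    (hgen : ∀ i : ℕ, n ≤ i →
      Lc (i + 1) = Submodule.span F {w : L | ∃ x ∈ Lc i, ∃ u ∈ Lc 1, w = ⁅x, u⁆})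
    (z : L) (hz : z ∈ Lc 1) (hz0 : z ≠ 0)
    (e : ℕ → L) (hen : e n ∈ Lc n) (hen0 : e n ≠ 0)
    (hrec : ∀ i : ℕ, n ≤ i → e (i + 1) = ⁅e i, z⁆)
    (β : ℕ → F) (hβ : ∀ i : ℕ, n < i → ⁅e i, e n⁆ = β i • e (i + n))
    (ℓ : ℕ)
    (hfz : ∀ i : ℕ, n < i → i + n ≤ ℓ → β i = 0)
    (hbig : 4 * p < ℓ)
    (c : ℕ) (q : ℕ) (hq : q = p ^ c)
    (k0 : ℕ) (hk0' : k0 + 2 ≤ n)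
    (hℓval : ℓ + 1 = q + k0 + n)
    (ℓ₂ : ℕ)
    (hsl : β (ℓ + ℓ₂ - n + 1) ≠ 0)
    (hℓ₂val : ℓ₂ = q ∨ ℓ₂ = q - 1)
    (s : ℕ) (hs2 : s ≤ n - 1)
    (hstrail : β (q + s) ≠ 0)
    (hszero : ∀ i : ℕ, q + s < i → i < q + k0 + ℓ₂ → β i = 0)
    (t : ℤ) (ht : t = (k0 : ℤ) + ℓ₂ - s - n + 1)
    (u : ℕ) (hu : (q : ℤ) - t = 2 * u)
    (m : ℕ) (hm : m = q + k0 + ℓ₂) :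
    ∀ i : ℕ, i ≤ 2 * (s / 2) - 1 →
      β (m + i) = (-1 : F) ^ i * (u.choose i : F) * β m := by
  have he : ∀ i, n ≤ i → e i ≠ 0 := fun i hi =>
    graded_generator_ne_zero hgrade hdim1 hdimn hgen hz hz0 hen hen0 hrec hi
  have hc : c ≠ 0 := by
    rintro rfl
    rw [pow_zero] at hq
    omega
  obtain ⟨ε, hε, hℓ₂ε⟩ : ∃ ε ≤ 1, ℓ₂ + ε = q := by
    rcases hℓ₂val with h | h
    · exact ⟨0, zero_le_one, by omega⟩
    · exact ⟨1, le_rfl, by omega⟩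
  have h2u : 2 * u + k0 + 1 = s + n + ε := by omega
  have hgap : ConstituentGap p β n q s m u :=
    { prime := hp
      n_lt_p := hnp
      s_lt_n := by omega
      n_lt_q := by omega
      s_lt_two_mul := by omega
      two_mul_lt_q := by omega
      odd_q := hq ▸ hodd.pow
      cast_q := by rw [hq, Nat.cast_pow, CharP.cast_eq_zero, zero_pow hc]
      index_m := by omega
      jacobi := fun a B ha hB hβB => fwdDiff_iter_mul_eq_mul_fwdDiff_iter hrec hβ he ha hB hβB
      eq_zero_of_lt := fun i hi hiq => hfz i hi (by omega)
      eq_zero_of_gap := fun i hi him => hszero i hi (by omega)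
      trailing_ne_zero := hstrail
      leading_ne_zero := by rwa [show ℓ + ℓ₂ - n + 1 = m by omega] at hsl }
  exact hgap.initial_values

/-- **Proposition (initial portion of the second constituent).**
Under the hypotheses of the spurious configuration (`ℓ = q + k0 + n − 1` with
`2 ≤ k0 ≤ n − 2`, `ℓ₂ ∈ {q, q − 1}`, `β (q+s)` the trailing term of the first
constituent), with `t := k0 + ℓ₂ − s − n + 1`, `u := (q − t)/2`, and
`m := q + k0 + ℓ₂` the index of the leading term of the second constituent:
`β (m+i) = (−1)^i C(u, i) β m` for `0 ≤ i ≤ 2⌊s/2⌋ − 1`. -/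
theorem second_constituent_initial_values
    (p : ℕ) (hp : p.Prime) (hodd : Odd p)
    (n : ℕ) (hn1 : 1 < n) (hnp : n < p)
    {F : Type*} [Field F] [CharP F p]
    {L : Type*} [LieRing L] [LieAlgebra F L]
    (Lc : ℕ → Submodule F L)
    (hinternal : DirectSum.IsInternal Lc)
    (h0 : Lc 0 = ⊥)
    (hgrade : ∀ i j : ℕ, ∀ x ∈ Lc i, ∀ y ∈ Lc j, ⁅x, y⁆ ∈ Lc (i + j))
    (hdim1 : Module.finrank F (Lc 1) = 1)
    (hmid : ∀ i : ℕ, 1 < i → i < n → Lc i = ⊥)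
    (hdimn : ∀ i : ℕ, n ≤ i → Module.finrank F (Lc i) = 1)
    (hgen : ∀ i : ℕ, n ≤ i →
      Lc (i + 1) = Submodule.span F {w : L | ∃ x ∈ Lc i, ∃ u ∈ Lc 1, w = ⁅x, u⁆})
    (z : L) (hz : z ∈ Lc 1) (hz0 : z ≠ 0)
    (e : ℕ → L) (hen : e n ∈ Lc n) (hen0 : e n ≠ 0)
    (hrec : ∀ i : ℕ, n ≤ i → e (i + 1) = ⁅e i, z⁆)
    (β : ℕ → F) (hβ : ∀ i : ℕ, n < i → ⁅e i, e n⁆ = β i • e (i + n))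
    (hne : ∃ i : ℕ, n < i ∧ β i ≠ 0)
    (ℓ : ℕ) (hℓ2n : 2 * n ≤ ℓ)
    (hfz : ∀ i : ℕ, n < i → i + n ≤ ℓ → β i = 0)
    (hfl : β (ℓ - n + 1) ≠ 0)
    (hbig : 4 * p < ℓ)
    (c : ℕ) (q : ℕ) (hq : q = p ^ c)
    (k0 : ℕ) (hk0 : 2 ≤ k0) (hk0' : k0 + 2 ≤ n)
    (hℓval : ℓ + 1 = q + k0 + n)
    (ℓ₂ : ℕ) (hℓ₂n : n ≤ ℓ₂)
    (hsz : ∀ j : ℕ, 0 < j → j + n ≤ ℓ₂ → β (ℓ + j) = 0)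
    (hsl : β (ℓ + ℓ₂ - n + 1) ≠ 0)
    (hℓ₂val : ℓ₂ = q ∨ ℓ₂ = q - 1)
    (s : ℕ) (hs1 : k0 ≤ s) (hs2 : s ≤ n - 1)
    (hstrail : β (q + s) ≠ 0)
    (hszero : ∀ i : ℕ, q + s < i → i < q + k0 + ℓ₂ → β i = 0)
    (t : ℤ) (ht : t = (k0 : ℤ) + ℓ₂ - s - n + 1)
    (u : ℕ) (hu : (q : ℤ) - t = 2 * u)
    (m : ℕ) (hm : m = q + k0 + ℓ₂) :
    ∀ i : ℕ, i ≤ 2 * (s / 2) - 1 →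
      β (m + i) = (-1 : F) ^ i * (u.choose i : F) * β m :=
  second_constituent_initial_values_general p hp hodd n hnp Lc hgrade hdim1 hdimn hgen z hz hz0 e
    hen hen0 hrec β hβ ℓ hfz hbig c q hq k0 hk0' hℓval ℓ₂ hsl hℓ₂val s hs2 hstrail hszero t ht u hu
    m hm
end
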